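/- arXiv:2210.09009 — 8 statements merged into one kernel-verified Lean document; each statement's English description precedes it below -/
import Mathlib

section
/- The number of spanning trees of the complete graph on n vertices (n ≥ 1) is n^(n-2). -/
set_option linter.unusedSectionVars false

open Finset

namespace CayleyAux

section Count

variable {V : Type*} [Fintype V] [DecidableEq V]

/-- `f` fixes everything outside `A`, maps `A` into `B`, and every trajectory
eventually leaves `A`. -/
def Good (A B : Finset V) (f : V → V) : Prop :=
  (∀ v, v ∉ A → f v = v) ∧ (∀ v, v ∈ A → f v ∈ B) ∧ (∀ v, ∃ k, f^[k] v ∉ A)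

open Classical in
noncomputable def S (A B : Finset V) : Finset (V → V) :=
  Finset.univ.filter (fun f => Good A B f)

lemma mem_S {A B : Finset V} {f : V → V} : f ∈ S A B ↔ Good A B f := by
  classical simp [S]

noncomputable def N (A B : Finset V) : ℕ := (S A B).card

lemma N_empty (B : Finset V) : N ∅ B = 1 := by
  have : S (∅ : Finset V) B = {id} := by
    ext f
    simp only [mem_S, Good, notMem_empty, mem_singleton]
    constructor
    · rintro ⟨h1, -, -⟩
      funext v; exact h1 v (by simp)
    · rintro rfl
      refine ⟨fun v _ => rfl, fun v hv => absurd hv (by simp), fun v => ⟨0, by simp⟩⟩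
  rw [N, this, card_singleton]

lemma N_self {A : Finset V} (hA : A.Nonempty) : N A A = 0 := by
  rw [N, card_eq_zero, eq_empty_iff_forall_notMem]
  intro f hf
  rw [mem_S] at hf
  obtain ⟨a, ha⟩ := hA
  obtain ⟨k, hk⟩ := hf.2.2 a
  have hmem : ∀ k : ℕ, f^[k] a ∈ A := by
    intro k
    induction k with
    | zero => simpa using ha
    | succ k ih =>
      rw [Function.iterate_succ_apply']
      exact hf.2.1 _ ih
  exact hk (hmem k)

lemma exit1 {A J : Finset V} {f f' : V → V}
    (hff' : ∀ v, v ∈ A → v ∉ J → f' v = f v) :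
    ∀ (k : ℕ) (v : V), f^[k] v ∉ A → ∃ m, f'^[m] v ∉ A \ J := by
  intro k
  induction k with
  | zero =>
    intro v hv
    simp only [Function.iterate_zero, id_eq] at hv
    exact ⟨0, by simp [mem_sdiff, hv]⟩
  | succ k ih =>
    intro v hv
    by_cases h1 : v ∈ A \ J
    · rw [mem_sdiff] at h1
      obtain ⟨m, hm⟩ := ih (f v) (by rwa [← Function.iterate_succ_apply])
      refine ⟨m + 1, ?_⟩
      rwa [Function.iterate_succ_apply, hff' v h1.1 h1.2]
    · exact ⟨0, h1⟩

lemma exit2 {A J : Finset V} {r : V} (hrA : r ∉ A) {f f' : V → V}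
    (hf'f : ∀ v, v ∈ A → v ∉ J → f v = f' v) (hfJ : ∀ v, v ∈ J → f v = r) :
    ∀ (k : ℕ) (v : V), f'^[k] v ∉ A \ J → ∃ m, f^[m] v ∉ A := by
  have base : ∀ v : V, v ∉ A \ J → ∃ m, f^[m] v ∉ A := by
    intro v hv
    rw [mem_sdiff, not_and, not_not] at hv
    by_cases hvA : v ∈ A
    · exact ⟨1, by simpa [hfJ v (hv hvA)] using hrA⟩
    · exact ⟨0, hvA⟩
  intro k
  induction k with
  | zero => intro v hv; exact base v hv
  | succ k ih =>
    intro v hv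
    by_cases h1 : v ∈ A \ J
    · rw [mem_sdiff] at h1
      obtain ⟨m, hm⟩ := ih (f' v) (by rwa [← Function.iterate_succ_apply])
      refine ⟨m + 1, ?_⟩
      rwa [Function.iterate_succ_apply, hf'f v h1.1 h1.2]
    · exact base v h1

lemma N_rec {A B : Finset V} {r : V} (hrB : r ∈ B) (hrA : r ∉ A) :
    N A B = ∑ J ∈ A.powerset, N (A \ J) (B.erase r) := by
  classical
  rw [N, card_eq_sum_card_fiberwise
    (f := fun f => A.filter (fun a => f a = r)) (t := A.powerset)
    (fun f _ => mem_powerset.2 (filter_subset _ _))]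
  refine Finset.sum_congr rfl fun J hJ => ?_
  rw [mem_powerset] at hJ
  rw [N]
  refine card_bij' (fun f _ => fun v => if v ∈ A ∧ f v = r then v else f v)
    (fun f' _ => fun v => if v ∈ J then r else f' v) ?_ ?_ ?_ ?_
  · -- forward membership
    intro f hf
    rw [mem_filter] at hf
    obtain ⟨hfS, hfib⟩ := hf
    rw [mem_S] at hfS
    have hJiff : ∀ v, v ∈ J ↔ v ∈ A ∧ f v = r := by
      intro v; rw [← hfib, mem_filter]
    rw [mem_S]
    refine ⟨?_, ?_, ?_⟩
    · intro v hv
      rw [mem_sdiff, not_and, not_not] at hv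
      by_cases hvA : v ∈ A
      · have := (hJiff v).1 (hv hvA)
        simp [this.1, this.2]
      · have : ¬(v ∈ A ∧ f v = r) := fun h => hvA h.1
        simp [this, hfS.1 v hvA]
    · intro v hv
      rw [mem_sdiff] at hv
      have hfvr : f v ≠ r := fun h => hv.2 ((hJiff v).2 ⟨hv.1, h⟩)
      have : ¬(v ∈ A ∧ f v = r) := fun h => hfvr h.2
      simp only [this, if_false]
      exact mem_erase.2 ⟨hfvr, hfS.2.1 v hv.1⟩
    · intro v
      obtain ⟨k, hk⟩ := hfS.2.2 v
      exact exit1 (f := f) (fun w hwA hwJ => by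
        have : ¬(w ∈ A ∧ f w = r) := fun h => hwJ ((hJiff w).2 ⟨hwA, h.2⟩)
        simp [this]) k v hk
  · -- backward membership
    intro f' hf'
    rw [mem_S] at hf'
    have hne : ∀ v, v ∈ A → v ∉ J → f' v ∈ B.erase r := fun v hvA hvJ =>
      hf'.2.1 v (mem_sdiff.2 ⟨hvA, hvJ⟩)
    rw [mem_filter]
    constructor
    · rw [mem_S]
      refine ⟨?_, ?_, ?_⟩
      · intro v hv
        have hvJ : v ∉ J := fun h => hv (hJ h)
        simp only [hvJ, if_false]
        exact hf'.1 v (by simp [mem_sdiff, hv])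
      · intro v hv
        by_cases hvJ : v ∈ J
        · simp [hvJ, hrB]
        · simpa [hvJ] using mem_of_mem_erase (hne v hv hvJ)
      · intro v
        obtain ⟨k, hk⟩ := hf'.2.2 v
        exact exit2 hrA (f' := f') (fun w hwA hwJ => by simp [hwJ])
          (fun w hw => by simp [hw]) k v hk
    · -- fiber condition
      ext v
      simp only [mem_filter]
      constructor
      · rintro ⟨hvA, hv⟩
        by_cases hvJ : v ∈ J
        · exact hvJ
        · exfalso
          have := hne v hvA hvJ
          rw [mem_erase] at this
          simp only [hvJ, if_false] at hv
          exact this.1 hv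
      · intro hvJ
        exact ⟨hJ hvJ, by simp [hvJ]⟩
  · -- left inverse
    intro f hf
    rw [mem_filter] at hf
    obtain ⟨hfS, hfib⟩ := hf
    rw [mem_S] at hfS
    have hJiff : ∀ v, v ∈ J ↔ v ∈ A ∧ f v = r := by
      intro v; rw [← hfib, mem_filter]
    funext v
    by_cases hvJ : v ∈ J
    · simp [hvJ, ((hJiff v).1 hvJ).2]
    · have : ¬(v ∈ A ∧ f v = r) := fun h => hvJ ((hJiff v).2 h)
      simp [hvJ, this]
  · -- right inverse
    intro f' hf'
    rw [mem_S] at hf'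
    funext v
    by_cases hvJ : v ∈ J
    · have hv : v ∉ A \ J := by simp [hvJ]
      have h1 : f' v = v := hf'.1 v hv
      simp [hvJ, hJ hvJ, h1]
    · by_cases hvA : v ∈ A
      · have : f' v ≠ r := (mem_erase.1 (hf'.2.1 v (mem_sdiff.2 ⟨hvA, hvJ⟩))).1
        simp [hvJ, this]
      · simp [hvJ, hvA]

/-- Closed-form value for `N (A, B)` in terms of cardinalities. -/
def g (b : ℕ) : ℕ → ℕ
  | 0 => 1
  | (j+1) => (b - (j+2)) * (b-1)^j

lemma binom (m : ℕ) (x : ℤ) :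
    ∑ j ∈ Finset.range (m+1), (m.choose j : ℤ) * x^j = (x+1)^m := by
  rw [add_pow]
  refine Finset.sum_congr rfl fun j hj => ?_
  rw [one_pow]; ring

lemma keyZ (n : ℕ) (x : ℤ) :
    ∑ j ∈ Finset.range (n+2), ((n+1).choose j : ℤ) * (x^j - j * x^(j-1))
      = (x+1)^(n+1) - (n+1) * (x+1)^n := by
  have h2 : ∑ j ∈ Finset.range (n+2), ((n+1).choose j : ℤ) * ((j : ℤ) * x^(j-1))
      = (n+1) * (x+1)^n := by
    rw [Finset.sum_range_succ']
    have hterm : ∀ j : ℕ, ((n+1).choose (j+1) : ℤ) * (((j:ℤ)+1) * x^j)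
        = ((n:ℤ)+1) * ((n.choose j : ℤ) * x^j) := by
      intro j
      have hc : ((n+1) * n.choose j : ℕ) = ((n+1).choose (j+1)) * (j+1) :=
        Nat.add_one_mul_choose_eq n j
      have hcz : ((n:ℤ)+1) * (n.choose j : ℤ) = ((n+1).choose (j+1) : ℤ) * ((j:ℤ)+1) := by
        exact_mod_cast congrArg (Nat.cast : ℕ → ℤ) hc
      calc ((n+1).choose (j+1) : ℤ) * (((j:ℤ)+1) * x^j)
          = (((n+1).choose (j+1) : ℤ) * ((j:ℤ)+1)) * x^j := by ring
        _ = (((n:ℤ)+1) * (n.choose j : ℤ)) * x^j := by rw [← hcz]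
        _ = ((n:ℤ)+1) * ((n.choose j : ℤ) * x^j) := by ring
    have : ∑ j ∈ Finset.range (n+1), ((n+1).choose (j+1) : ℤ) * (((j+1):ℕ) * x^((j+1)-1))
        = ∑ j ∈ Finset.range (n+1), ((n:ℤ)+1) * ((n.choose j : ℤ) * x^j) := by
      refine Finset.sum_congr rfl fun j hj => ?_
      push_cast
      exact hterm j
    rw [this, ← Finset.mul_sum, binom n x]
    push_cast
    ring
  have h3 : ∑ j ∈ Finset.range (n+2), ((n+1).choose j : ℤ) * (x^j - j * x^(j-1))
      = (∑ j ∈ Finset.range (n+2), ((n+1).choose j : ℤ) * x^j)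
        - ∑ j ∈ Finset.range (n+2), ((n+1).choose j : ℤ) * ((j:ℤ) * x^(j-1)) := by
    rw [← Finset.sum_sub_distrib]
    exact Finset.sum_congr rfl fun j _ => by ring
  rw [h3, binom (n+1) x, h2]

lemma key (a b : ℕ) (ha : 1 ≤ a) (hab : a < b) :
    (∑ j ∈ Finset.range (a+1), a.choose j * g b j) * b = (b - a) * b ^ a := by
  obtain ⟨n, rfl⟩ : ∃ n, a = n + 1 := ⟨a - 1, by omega⟩
  have hcast : ((∑ j ∈ Finset.range (n+2), (n+1).choose j * g b j : ℕ) : ℤ)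
      = ∑ j ∈ Finset.range (n+2), ((n+1).choose j : ℤ)
          * (((b:ℤ)-1)^j - j * ((b:ℤ)-1)^(j-1)) := by
    push_cast
    refine Finset.sum_congr rfl fun j hj => ?_
    rw [Finset.mem_range] at hj
    congr 1
    match j with
    | 0 => simp [g]
    | (i+1) =>
      have hi2 : i + 2 ≤ b := by omega
      have h1 : 1 ≤ b := by omega
      show ((g b (i+1) : ℕ) : ℤ) = _
      rw [show g b (i+1) = (b - (i+2)) * (b-1)^i from rfl]
      push_cast [Nat.cast_sub hi2, Nat.cast_sub h1]
      have : ((b:ℤ) - (i+2)) = (((b:ℤ)-1) - ((i:ℤ)+1)) := by ring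
      rw [this]
      ring
  have hz := keyZ n ((b:ℤ)-1)
  have hfin : ((∑ j ∈ Finset.range (n+2), (n+1).choose j * g b j : ℕ) : ℤ) * b
      = ((b:ℤ) - (n+1)) * (b:ℤ)^(n+1) := by
    rw [hcast, hz]
    have hb : ((b:ℤ)-1) + 1 = (b:ℤ) := by ring
    rw [hb]
    ring
  have hble : (n+1 : ℕ) ≤ b := by omega
  zify [hble]
  exact_mod_cast hfin

theorem N_mul (m : ℕ) : ∀ (A B : Finset V), B.card ≤ m → A ⊆ B →
    N A B * B.card = (B.card - A.card) * B.card ^ A.card := by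
  induction m with
  | zero =>
    intro A B hB hAB
    have hBe : B = ∅ := card_eq_zero.1 (Nat.le_zero.1 hB)
    subst hBe
    have hAe : A = ∅ := subset_empty.1 hAB
    subst hAe
    simp [N_empty]
  | succ m ih =>
    intro A B hB hAB
    rcases A.eq_empty_or_nonempty with hA | hA
    · subst hA; simp [N_empty]
    by_cases hABeq : A = B
    · subst hABeq; simp [N_self hA]
    obtain ⟨r, hrB, hrA⟩ := exists_of_ssubset (hAB.ssubset_of_ne hABeq)
    have hab : A.card < B.card := card_lt_card (hAB.ssubset_of_ne hABeq)
    have ha1 : 1 ≤ A.card := card_pos.2 hA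
    have hBr : (B.erase r).card = B.card - 1 := card_erase_of_mem hrB
    have hsub : ∀ J ∈ A.powerset, N (A \ J) (B.erase r) = g B.card (A.card - J.card) := by
      intro J hJ
      rw [mem_powerset] at hJ
      have hsubAB : A \ J ⊆ B.erase r := by
        intro x hx
        rw [mem_sdiff] at hx
        exact mem_erase.2 ⟨fun h => hrA (h ▸ hx.1), hAB hx.1⟩
      have hcard : (A \ J).card = A.card - J.card := card_sdiff_of_subset hJ
      have hc_le : (A \ J).card ≤ A.card := by rw [hcard]; omega
      have hiter := ih (A \ J) (B.erase r) (by omega) hsubAB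
      rw [hBr] at hiter
      rcases Nat.eq_zero_or_pos (A \ J).card with h0 | hpos
      · have he : A \ J = ∅ := card_eq_zero.1 h0
        have h0' : A.card - J.card = 0 := by rw [← hcard]; exact h0
        rw [he, N_empty, h0']
        simp [g]
      · obtain ⟨c, hc⟩ : ∃ c, (A \ J).card = c + 1 :=
          ⟨(A \ J).card - 1, by omega⟩
        have hbpos : 0 < B.card - 1 := by omega
        apply Nat.eq_of_mul_eq_mul_right hbpos
        rw [hiter, hc]
        have h1 : A.card - J.card = c + 1 := by rw [← hcard]; exact hc
        rw [h1]
        show (B.card - 1 - (c+1)) * (B.card - 1)^(c+1)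
            = (B.card - (c+2)) * (B.card-1)^c * (B.card - 1)
        have h2 : B.card - 1 - (c+1) = B.card - (c+2) := by omega
        rw [h2, pow_succ]
        ring
    rw [N_rec hrB hrA, Finset.sum_congr rfl hsub,
      Finset.sum_powerset_apply_card (f := fun j => g B.card (A.card - j)),
      ← Finset.sum_range_reflect]
    have hre : ∀ j ∈ Finset.range (A.card + 1),
        A.card.choose (A.card + 1 - 1 - j) • g B.card (A.card - (A.card + 1 - 1 - j))
          = A.card.choose j * g B.card j := by
      intro j hj
      rw [Finset.mem_range] at hj
      have h1 : A.card + 1 - 1 - j = A.card - j := by omega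
      have h2 : A.card - (A.card - j) = j := by omega
      rw [h1, h2, Nat.choose_symm (by omega), smul_eq_mul]
    rw [Finset.sum_congr rfl hre]
    exact key A.card B.card ha1 hab

end Count

section Graph

open SimpleGraph

variable {V : Type*}

/-- `f` is a parent function rooted at `z`. -/
def Par (z : V) (f : V → V) : Prop := f z = z ∧ ∀ v, ∃ k, f^[k] v = z

variable {z : V} {f : V → V}

lemma Par.iter_fixed (hf : Par z f) (j : ℕ) : f^[j] z = z :=
  Function.iterate_fixed hf.1 j

lemma Par.no_return (hf : Par z f) {v : V} (hv : v ≠ z) (k : ℕ) :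
    f^[k+1] v ≠ v := by
  intro hcyc
  obtain ⟨m, hm⟩ := hf.2 v
  have hper : ∀ t, f^[(k+1)*t] v = v := by
    intro t
    induction t with
    | zero => simp
    | succ t ih =>
      rw [Nat.mul_succ, Function.iterate_add_apply, hcyc, ih]
  apply hv
  have hle : m ≤ (k+1)*m := Nat.le_mul_of_pos_left m (Nat.succ_pos k)
  have h1 : (k+1) * m = ((k+1)*m - m) + m := by omega
  calc v = f^[(k+1)*m] v := (hper m).symm
    _ = f^[(k+1)*m - m] (f^[m] v) := by
        conv_lhs => rw [h1]
        rw [Function.iterate_add_apply]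
    _ = z := by rw [hm]; exact hf.iter_fixed _

lemma Par.fv_ne (hf : Par z f) {v : V} (hv : v ≠ z) : f v ≠ v := fun h =>
  hf.no_return hv 0 (by simpa using h)

def pgraph (f : V → V) : SimpleGraph V := SimpleGraph.fromRel (fun x y => f x = y)

lemma pgraph_adj {x y : V} : (pgraph f).Adj x y ↔ x ≠ y ∧ (f x = y ∨ f y = x) :=
  SimpleGraph.fromRel_adj _ _ _

lemma Par.adj_fv (hf : Par z f) {v : V} (hv : v ≠ z) : (pgraph f).Adj v (f v) :=
  pgraph_adj.2 ⟨(hf.fv_ne hv).symm, Or.inl rfl⟩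

lemma Par.reach (hf : Par z f) :
    ∀ (k : ℕ) (v : V), f^[k] v = z → (pgraph f).Reachable v z := by
  intro k
  induction k with
  | zero => intro v hv; simp only [Function.iterate_zero, id_eq] at hv; subst hv; rfl
  | succ k ih =>
    intro v hv
    by_cases hvz : v = z
    · subst hvz; rfl
    · exact ((hf.adj_fv hvz).reachable).trans
        (ih (f v) (by rwa [← Function.iterate_succ_apply]))

lemma Par.connected (hf : Par z f) : (pgraph f).Connected := by
  rw [connected_iff]
  refine ⟨fun u w => ?_, ⟨z⟩⟩
  obtain ⟨k, hk⟩ := hf.2 u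
  obtain ⟨m, hm⟩ := hf.2 w
  exact (hf.reach k u hk).trans (hf.reach m w hm).symm

lemma crossing {G : SimpleGraph V} (P : V → Prop) :
    ∀ {a b : V} (W : G.Walk a b), P a → ¬ P b →
      ∃ x y, s(x,y) ∈ W.edges ∧ P x ∧ ¬ P y ∧ G.Adj x y := by
  intro a b W
  induction W with
  | nil => intro h1 h2; exact absurd h1 h2
  | @cons u v w h W ih =>
    intro h1 h2
    by_cases hc : P v
    · obtain ⟨x, y, hxy, hx, hy, hadj⟩ := ih hc h2
      exact ⟨x, y, by rw [Walk.edges_cons]; exact List.mem_cons_of_mem _ hxy, hx, hy, hadj⟩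
    · exact ⟨u, v, by rw [Walk.edges_cons]; exact List.mem_cons_self, h1, hc, h⟩

lemma Par.isBridge (hf : Par z f) {v : V} (hv : v ≠ z) :
    (pgraph f).IsBridge s(v, f v) := by
  rw [isBridge_iff_adj_and_forall_walk_mem_edges]
  refine fun W => ?_
  have hRv : ∃ k, f^[k] v = v := ⟨0, rfl⟩
  have hRfv : ¬ ∃ k, f^[k] (f v) = v := by
    rintro ⟨k, hk⟩
    exact hf.no_return hv k (by rwa [Function.iterate_succ_apply])
  obtain ⟨x, y, hmem, hx, hy, hadj⟩ := crossing (fun u => ∃ k, f^[k] u = v) W hRv hRfv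
  rw [pgraph_adj] at hadj
  rcases hadj.2 with hxy | hyx
  · have hxv : x = v := by
      by_contra hne
      obtain ⟨k, hk⟩ := hx
      have hk0 : k ≠ 0 := by rintro rfl; exact hne (by simpa using hk)
      obtain ⟨k', rfl⟩ : ∃ k', k = k' + 1 := ⟨k - 1, by omega⟩
      rw [Function.iterate_succ_apply] at hk
      subst hxy
      exact hy ⟨k', hk⟩
    have he : s(x, y) = s(v, f v) := by subst hxv; rw [hxy]
    rw [he] at hmem
    exact hmem
  · exfalso
    apply hy
    obtain ⟨k, hk⟩ := hx
    exact ⟨k+1, by rw [Function.iterate_succ_apply, hyx]; exact hk⟩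

lemma Par.isAcyclic (hf : Par z f) : (pgraph f).IsAcyclic := by
  rw [isAcyclic_iff_forall_adj_isBridge]
  intro u w hadj
  have h := pgraph_adj.1 hadj
  rcases h.2 with h1 | h1
  · have hu : u ≠ z := by rintro rfl; exact h.1 (by rw [← h1, hf.1])
    rw [← h1]; exact hf.isBridge hu
  · have hw : w ≠ z := by
      intro hwz
      apply h.1
      rw [← h1, hwz]
      exact hf.1
    rw [Sym2.eq_swap, ← h1]; exact hf.isBridge hw

lemma Par.isTree (hf : Par z f) : (pgraph f).IsTree := ⟨hf.connected, hf.isAcyclic⟩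

open Classical in
noncomputable def Par.dep (hf : Par z f) (v : V) : ℕ := Nat.find (hf.2 v)

open Classical in
lemma Par.dep_spec (hf : Par z f) (v : V) : f^[hf.dep v] v = z := Nat.find_spec (hf.2 v)

lemma Par.dep_pos (hf : Par z f) {v : V} (hv : v ≠ z) : 0 < hf.dep v := by
  rcases Nat.eq_zero_or_pos (hf.dep v) with h0 | h
  · exfalso; apply hv; have := hf.dep_spec v; rwa [h0] at this
  · exact h

lemma Par.dep_fv_lt (hf : Par z f) {v : V} (hv : v ≠ z) : hf.dep (f v) < hf.dep v := by
  have hpos := hf.dep_pos hv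
  obtain ⟨d, hd⟩ : ∃ d, hf.dep v = d + 1 := ⟨hf.dep v - 1, by omega⟩
  have h1 : f^[d] (f v) = z := by
    have hs := hf.dep_spec v
    rw [hd, Function.iterate_succ_apply] at hs
    exact hs
  have h4 : hf.dep (f v) ≤ d := by
    classical
    exact Nat.find_le h1
  omega

open Classical in
noncomputable def Par.desc (hf : Par z f) (v : V) : (pgraph f).Walk v z :=
  if h : v = z then ((SimpleGraph.Walk.nil : (pgraph f).Walk z z).copy h.symm rfl)
  else SimpleGraph.Walk.cons (hf.adj_fv h) (hf.desc (f v))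
  termination_by hf.dep v
  decreasing_by exact hf.dep_fv_lt h

lemma Par.desc_support (hf : Par z f) : ∀ (d : ℕ) (v : V), hf.dep v ≤ d →
    ∀ x ∈ (hf.desc v).support, ∃ i, f^[i] v = x := by
  intro d
  induction d with
  | zero =>
    intro v hv x hx
    have hvz : v = z := by
      by_contra hne
      have := hf.dep_pos hne
      omega
    subst hvz
    rw [Par.desc, dif_pos rfl] at hx
    simp only [Walk.support_copy, Walk.support_nil, List.mem_singleton] at hx
    exact ⟨0, by simpa using hx.symm⟩
  | succ d ih =>
    intro v hv x hx
    by_cases hvz : v = z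
    · subst hvz
      rw [Par.desc, dif_pos rfl] at hx
      simp only [Walk.support_copy, Walk.support_nil, List.mem_singleton] at hx
      exact ⟨0, by simpa using hx.symm⟩
    · rw [Par.desc, dif_neg hvz, Walk.support_cons] at hx
      rcases List.mem_cons.1 hx with rfl | hx'
      · exact ⟨0, rfl⟩
      · obtain ⟨i, hi⟩ := ih (f v) (by have := hf.dep_fv_lt hvz; omega) x hx'
        exact ⟨i+1, by rw [Function.iterate_succ_apply]; exact hi⟩

lemma Par.desc_isPath (hf : Par z f) : ∀ (d : ℕ) (v : V), hf.dep v ≤ d →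
    (hf.desc v).IsPath := by
  intro d
  induction d with
  | zero =>
    intro v hv
    have hvz : v = z := by
      by_contra hne
      have := hf.dep_pos hne
      omega
    subst hvz
    rw [Par.desc, dif_pos rfl]
    simp
  | succ d ih =>
    intro v hv
    by_cases hvz : v = z
    · subst hvz
      rw [Par.desc, dif_pos rfl]
      simp
    · rw [Par.desc, dif_neg hvz]
      rw [Walk.cons_isPath_iff]
      have hlt := hf.dep_fv_lt hvz
      refine ⟨ih (f v) (by omega), fun hmem => ?_⟩
      obtain ⟨i, hi⟩ := hf.desc_support d (f v) (by omega) v hmem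
      exact hf.no_return hvz i (by rwa [Function.iterate_succ_apply])

lemma Par.desc_getVert1 (hf : Par z f) {v : V} (hv : v ≠ z) :
    (hf.desc v).getVert 1 = f v := by
  rw [Par.desc, dif_neg hv, Walk.getVert_cons_succ, Walk.getVert_zero]

variable {T : SimpleGraph V}

noncomputable def treePath (hT : T.IsTree) (z v : V) : T.Walk v z :=
  (hT.existsUnique_path v z).choose

lemma treePath_isPath (hT : T.IsTree) {v : V} : (treePath hT z v).IsPath :=
  (hT.existsUnique_path v z).choose_spec.1

lemma treePath_unique (hT : T.IsTree) {v : V} (q : T.Walk v z) (hq : q.IsPath) :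
    q = treePath hT z v :=
  (hT.existsUnique_path v z).choose_spec.2 q hq

noncomputable def parentMap (hT : T.IsTree) (z : V) (v : V) : V :=
  (treePath hT z v).getVert 1

lemma parentMap_self (hT : T.IsTree) : parentMap hT z z = z := by
  have h : treePath hT z z = Walk.nil := Walk.isPath_iff_eq_nil.1 (treePath_isPath hT)
  rw [parentMap, h]
  rfl

lemma parentMap_adj (hT : T.IsTree) {v : V} (hv : v ≠ z) :
    T.Adj v (parentMap hT z v) :=
  (treePath hT z v).adj_snd (Walk.not_nil_of_ne hv)

lemma treePath_tail (hT : T.IsTree) {v : V} (hv : v ≠ z) :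
    treePath hT z (parentMap hT z v) = (treePath hT z v).tail :=
  (treePath_unique hT _ ((treePath_isPath hT).tail)).symm

lemma treePath_length (hT : T.IsTree) {v : V} (hv : v ≠ z) :
    (treePath hT z (parentMap hT z v)).length < (treePath hT z v).length := by
  rw [treePath_tail hT hv]
  have := Walk.length_tail_add_one (p := treePath hT z v) (Walk.not_nil_of_ne hv)
  exact Nat.lt_of_lt_of_eq (Nat.lt_succ_self _) this

lemma parentMap_par (hT : T.IsTree) (z : V) : Par z (parentMap hT z) := by
  refine ⟨parentMap_self hT, ?_⟩
  have key : ∀ (L : ℕ) (v : V), (treePath hT z v).length ≤ L →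
      ∃ k, (parentMap hT z)^[k] v = z := by
    intro L
    induction L with
    | zero =>
      intro v hv
      by_cases hvz : v = z
      · exact ⟨0, hvz⟩
      · exfalso
        have h1 : ¬ (treePath hT z v).Nil := Walk.not_nil_of_ne hvz
        rw [Walk.not_nil_iff_lt_length] at h1
        omega
    | succ L ih =>
      intro v hv
      by_cases hvz : v = z
      · exact ⟨0, hvz⟩
      · obtain ⟨k, hk⟩ := ih (parentMap hT z v) (by have := treePath_length hT hvz; omega)
        exact ⟨k+1, by rw [Function.iterate_succ_apply]; exact hk⟩
  intro v
  exact key (treePath hT z v).length v le_rfl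

variable [Fintype V] [DecidableEq V]

lemma parentMap_eq_or (hT : T.IsTree) (z : V) {u w : V} (hadj : T.Adj u w) :
    parentMap hT z u = w ∨ parentMap hT z w = u := by
  by_cases hw : w ∈ (treePath hT z u).support
  · left
    have hQ : ((treePath hT z u).dropUntil w hw).IsPath :=
      (treePath_isPath hT).dropUntil hw
    have hu : u ∉ ((treePath hT z u).dropUntil w hw).support := by
      have hnd := Walk.IsPath.support_nodup (treePath_isPath hT (z := z) (v := u))
      conv at hnd => rw [← Walk.take_spec (treePath hT z u) hw]
      rw [Walk.support_append] at hnd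
      have hdisj := List.disjoint_of_nodup_append hnd
      intro humem
      rw [Walk.support_eq_cons] at humem
      rcases List.mem_cons.1 humem with h1 | h1
      · exact hadj.ne h1
      · exact hdisj (Walk.start_mem_support _) h1
    have hEq := treePath_unique hT
      (SimpleGraph.Walk.cons hadj ((treePath hT z u).dropUntil w hw))
      ((Walk.cons_isPath_iff _ _).2 ⟨hQ, hu⟩)
    rw [parentMap, ← hEq, Walk.getVert_cons_succ, Walk.getVert_zero]
  · right
    have hEq := treePath_unique hT
      (SimpleGraph.Walk.cons hadj.symm (treePath hT z u))
      ((Walk.cons_isPath_iff _ _).2 ⟨treePath_isPath hT, hw⟩)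
    rw [parentMap, ← hEq, Walk.getVert_cons_succ, Walk.getVert_zero]

lemma pgraph_parentMap (hT : T.IsTree) (z : V) : pgraph (parentMap hT z) = T := by
  ext u w
  rw [pgraph_adj]
  constructor
  · rintro ⟨hne, h | h⟩
    · have hu : u ≠ z := by rintro rfl; rw [parentMap_self hT] at h; exact hne h
      exact h ▸ parentMap_adj hT hu
    · have hw : w ≠ z := by rintro rfl; rw [parentMap_self hT] at h; exact hne h.symm
      exact (h ▸ parentMap_adj hT hw).symm
  · intro hadj
    exact ⟨hadj.ne, parentMap_eq_or hT z hadj⟩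

lemma parentMap_pgraph (hf : Par z f) : parentMap hf.isTree z = f := by
  funext v
  by_cases hv : v = z
  · subst hv; rw [parentMap_self, hf.1]
  · have hdesc := treePath_unique hf.isTree (hf.desc v)
      (hf.desc_isPath (hf.dep v) v le_rfl)
    rw [parentMap, ← hdesc, hf.desc_getVert1 hv]

noncomputable def treeEquiv (z : V) :
    {G : SimpleGraph V // G.IsTree} ≃ {g : V → V // Par z g} where
  toFun T := ⟨parentMap T.2 z, parentMap_par T.2 z⟩
  invFun f := ⟨pgraph f.1, f.2.isTree⟩
  left_inv T := Subtype.ext (pgraph_parentMap T.2 z)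
  right_inv f := Subtype.ext (parentMap_pgraph f.2)

lemma par_iff_good {z : V} {f : V → V} :
    Good (univ.erase z) univ f ↔ Par z f := by
  constructor
  · rintro ⟨h1, -, h3⟩
    refine ⟨h1 z (by simp), fun v => ?_⟩
    obtain ⟨k, hk⟩ := h3 v
    refine ⟨k, ?_⟩
    by_contra hne
    exact hk (by simp [hne])
  · rintro ⟨h1, h2⟩
    refine ⟨fun v hv => ?_, fun v _ => mem_univ _, fun v => ?_⟩
    · have hvz : v = z := by simpa [mem_erase] using hv
      rw [hvz, h1]
    · obtain ⟨k, hk⟩ := h2 v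
      exact ⟨k, by simp [hk]⟩

theorem card_trees (z : V) :
    Nat.card {G : SimpleGraph V // G.IsTree} = N (univ.erase z) (univ : Finset V) := by
  rw [Nat.card_congr (treeEquiv z),
    Nat.card_congr (Equiv.subtypeEquivRight
      (fun g => (par_iff_good (z := z) (f := g)).symm)),
    Nat.card_congr (Equiv.subtypeEquivRight
      (fun g => (mem_S (A := univ.erase z) (B := univ) (f := g)).symm))]
  exact Nat.card_eq_finsetCard _

end Graph

end CayleyAux

/-- Cayley's formula: the number of spanning trees of the complete graph on
`n ≥ 1` labeled vertices is `n ^ (n - 2)`. -/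
theorem cayley_formula (n : ℕ) (hn : 1 ≤ n) :
    Nat.card {G : SimpleGraph (Fin n) // G.IsTree} = n ^ (n - 2) := by
  haveI : NeZero n := ⟨by omega⟩
  rw [CayleyAux.card_trees (0 : Fin n)]
  have hA : (Finset.univ.erase (0 : Fin n)).card = n - 1 := by
    rw [Finset.card_erase_of_mem (Finset.mem_univ _), Finset.card_univ, Fintype.card_fin]
  have hB : (Finset.univ : Finset (Fin n)).card = n := by
    rw [Finset.card_univ, Fintype.card_fin]
  have hmul := CayleyAux.N_mul n (Finset.univ.erase (0 : Fin n)) Finset.univ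
    (by rw [hB]) (Finset.subset_univ _)
  rw [hA, hB] at hmul
  by_cases h1 : n = 1
  · subst h1
    simpa using hmul
  · have h2 : 2 ≤ n := by omega
    have hsub : n - (n-1) = 1 := by omega
    rw [hsub, one_mul] at hmul
    have hpow : n ^ (n-1) = n ^ (n-2) * n := by
      rw [← pow_succ]
      congr 1
      omega
    rw [hpow] at hmul
    exact Nat.eq_of_mul_eq_mul_right (by omega) hmul
end

section
/- For n ≥ 4 and two distinct edges e, f of K_n sharing a common vertex, the number of spanning trees of K_n containing both e and f is 3·n^(n-4). -/
open Function Finset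
section
namespace SpanTreesAux

variable {α : Type*}

lemma eventually_fixed {p : α → α} {Rt : α → Prop} (hfix : ∀ r, Rt r → p r = r)
    {v : α} {m : ℕ} (hm : Rt (p^[m] v)) : ∀ s, m ≤ s → p^[s] v = p^[m] v := by
  intro s hs
  obtain ⟨t, rfl⟩ := Nat.exists_eq_add_of_le hs
  rw [Nat.add_comm, Function.iterate_add_apply]
  exact Function.iterate_fixed (hfix _ hm) t

lemma no_cycle {p : α → α} {Rt : α → Prop} (hfix : ∀ r, Rt r → p r = r)
    {v : α} {j m : ℕ} (hj : 0 < j) (hcyc : p^[j] v = v) (hm : Rt (p^[m] v)) : Rt v := by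
  have key : ∀ t, p^[t * j] v = v := by
    intro t
    induction t with
    | zero => simp
    | succ t ih => rw [Nat.succ_mul, Function.iterate_add_apply, hcyc, ih]
  have h1 : m ≤ m * j := Nat.le_mul_of_pos_right m hj
  have := eventually_fixed hfix hm (m * j) h1
  rw [key m] at this
  rw [this]; exact hm

lemma root_unique {p : α → α} {Rt : α → Prop} (hfix : ∀ r, Rt r → p r = r)
    {v : α} {i j : ℕ} (hi : Rt (p^[i] v)) (hj : Rt (p^[j] v)) : p^[i] v = p^[j] v := by
  rcases le_total i j with h | h
  · exact (eventually_fixed hfix hi j h).symm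
  · exact eventually_fixed hfix hj i h

lemma agree_iterate {p q : α → α} {r : α} (h : ∀ v, v ≠ r → p v = q v) (j : ℕ) (v : α) :
    p^[j] v = q^[j] v ∨ ∃ i, i < j ∧ p^[i] v = r := by
  induction j with
  | zero => exact Or.inl rfl
  | succ j ih =>
    rcases ih with heq | ⟨i, hi, hr⟩
    · by_cases hx : p^[j] v = r
      · exact Or.inr ⟨j, Nat.lt_succ_self j, hx⟩
      · left
        rw [Function.iterate_succ_apply', Function.iterate_succ_apply', heq, ← heq, h _ hx, heq]
    · exact Or.inr ⟨i, Nat.lt_succ_of_lt hi, hr⟩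

lemma agree_iterate_of_ne {p q : α → α} {r : α} (h : ∀ v, v ≠ r → p v = q v)
    {v : α} (hv : ∀ i, p^[i] v ≠ r) (j : ℕ) : p^[j] v = q^[j] v := by
  rcases agree_iterate h j v with heq | ⟨i, _, hr⟩
  · exact heq
  · exact absurd hr (hv i)

/-! ### Counting valid parent functions -/

variable {n : ℕ}

def Valid (R : Finset (Fin n)) (p : Fin n → Fin n) : Prop :=
  (∀ r ∈ R, p r = r) ∧ ∀ v, ∃ j, p^[j] v ∈ R

noncomputable def Ncard (R : Finset (Fin n)) : ℕ :=
  Nat.card {p : Fin n → Fin n // Valid R p}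

lemma Ncard_univ : Ncard (Finset.univ : Finset (Fin n)) = 1 := by
  have : Unique {p : Fin n → Fin n // Valid Finset.univ p} := by
    refine ⟨⟨⟨id, fun r _ => rfl, fun v => ⟨0, Finset.mem_univ _⟩⟩⟩, ?_⟩
    rintro ⟨p, hp, -⟩
    exact Subtype.ext (funext fun v => hp v (Finset.mem_univ v))
  rw [Ncard, Nat.card_unique]

lemma valid_conj {R : Finset (Fin n)} {p : Fin n → Fin n} (σ : Equiv.Perm (Fin n))
    (hp : Valid R p) : Valid (R.image σ) (σ ∘ p ∘ σ.symm) := by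
  have hiter : ∀ (j : ℕ) (v : Fin n), (σ ∘ p ∘ σ.symm)^[j] v = σ (p^[j] (σ.symm v)) := by
    intro j
    induction j with
    | zero => intro v; simp
    | succ j ih =>
      intro v
      rw [Function.iterate_succ_apply', ih, Function.iterate_succ_apply']
      simp
  constructor
  · intro r hr
    obtain ⟨r', hr', rfl⟩ := Finset.mem_image.mp hr
    simp [hp.1 r' hr']
  · intro v
    obtain ⟨j, hj⟩ := hp.2 (σ.symm v)
    exact ⟨j, by rw [hiter]; exact Finset.mem_image_of_mem σ hj⟩

lemma Ncard_image (R : Finset (Fin n)) (σ : Equiv.Perm (Fin n)) :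
    Ncard (R.image σ) = Ncard R := by
  unfold Ncard
  apply Nat.card_congr
  refine ⟨fun q => ⟨σ.symm ∘ q.1 ∘ σ, ?_⟩, fun p => ⟨σ ∘ p.1 ∘ σ.symm, valid_conj σ p.2⟩, ?_, ?_⟩
  · have := valid_conj σ.symm q.2
    have himg : (R.image σ).image σ.symm = R := by
      rw [Finset.image_image]
      simp
    rwa [himg] at this
  · rintro ⟨q, hq⟩
    ext v
    simp
  · rintro ⟨p, hp⟩
    ext v
    simp

lemma Ncard_erase_eq {R : Finset (Fin n)} {r r' : Fin n} (hr : r ∈ R) (hr' : r' ∈ R) :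
    Ncard (R.erase r) = Ncard (R.erase r') := by
  rcases eq_or_ne r r' with rfl | hne
  · rfl
  · have himg : (R.erase r).image (Equiv.swap r r') = R.erase r' := by
      ext x
      simp only [Finset.mem_image, Finset.mem_erase]
      constructor
      · rintro ⟨y, ⟨hy1, hy2⟩, rfl⟩
        rcases eq_or_ne y r' with rfl | hyr'
        · rw [Equiv.swap_apply_right]
          exact ⟨hne, hr⟩
        · rw [Equiv.swap_apply_of_ne_of_ne hy1 hyr']
          exact ⟨hyr', hy2⟩
      · rintro ⟨hx1, hx2⟩
        by_cases hxr : x = r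
        · exact ⟨r', ⟨hne.symm, hr'⟩, by rw [Equiv.swap_apply_right, hxr]⟩
        · exact ⟨x, ⟨hxr, hx2⟩, Equiv.swap_apply_of_ne_of_ne hxr hx1⟩
    rw [← himg, Ncard_image]

/-! ### The key bijection -/

section KeyEquiv

variable {R : Finset (Fin n)} {r : Fin n}

lemma toFun_valid (hr : r ∈ R) {q : Fin n → Fin n} (hq : Valid (R.erase r) q) :
    Valid R (Function.update q r r) := by
  have hagree : ∀ v, v ≠ r → Function.update q r r v = q v := fun v hv =>
    Function.update_of_ne hv r q
  constructor
  · intro r' hr'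
    rcases eq_or_ne r' r with rfl | hne
    · exact Function.update_self _ _ _
    · rw [hagree r' hne]
      exact hq.1 r' (Finset.mem_erase.mpr ⟨hne, hr'⟩)
  · intro v
    obtain ⟨j, hj⟩ := hq.2 v
    rcases agree_iterate hagree j v with heq | ⟨i, _, hi⟩
    · exact ⟨j, by rw [heq]; exact Finset.mem_of_mem_erase hj⟩
    · exact ⟨i, by rw [hi]; exact hr⟩

lemma toFun_w (hr : r ∈ R) {q : Fin n → Fin n} (hq : Valid (R.erase r) q) :
    ∀ j, (Function.update q r r)^[j] (q r) ≠ r := by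
  have hagree : ∀ v, v ≠ r → q v = Function.update q r r v := fun v hv =>
    (Function.update_of_ne hv r q).symm
  have hq_nr : ∀ j, q^[j] (q r) ≠ r := by
    intro j hcon
    have hcyc : q^[j + 1] r = r := by
      rw [Function.iterate_succ_apply]
      exact hcon
    obtain ⟨m, hm⟩ := hq.2 r
    have : r ∈ R.erase r := no_cycle (fun x hx => hq.1 x hx) (Nat.succ_pos j) hcyc hm
    exact absurd this (Finset.notMem_erase r R)
  intro j
  rw [← agree_iterate_of_ne hagree hq_nr j]
  exact hq_nr j

lemma invFun_valid (hr : r ∈ R) {p : Fin n → Fin n} (hp : Valid R p) {w : Fin n}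
    (hw : ∀ j, p^[j] w ≠ r) : Valid (R.erase r) (Function.update p r w) := by
  set q := Function.update p r w with hqdef
  have hagree : ∀ v, v ≠ r → p v = q v := fun v hv =>
    (Function.update_of_ne hv w p).symm
  have hqw : ∀ i, q^[i] w = p^[i] w := fun i =>
    (agree_iterate_of_ne hagree hw i).symm
  have hwR : ∃ m, q^[m] w ∈ R.erase r := by
    obtain ⟨m, hm⟩ := hp.2 w
    exact ⟨m, by rw [hqw]; exact Finset.mem_erase.mpr ⟨hw m, hm⟩⟩
  have subr : ∀ (v : Fin n) (i : ℕ), q^[i] v = r → ∃ s, q^[s] v ∈ R.erase r := by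
    intro v i hi
    have hstep : q^[i + 1] v = w := by
      rw [Function.iterate_succ_apply', hi, hqdef, Function.update_self]
    obtain ⟨m, hm⟩ := hwR
    refine ⟨m + (i + 1), ?_⟩
    rw [Function.iterate_add_apply, hstep]
    exact hm
  constructor
  · intro r' hr'
    obtain ⟨hne, hmem⟩ := Finset.mem_erase.mp hr'
    rw [← hagree r' hne]
    exact hp.1 r' hmem
  · intro v
    obtain ⟨j, hj⟩ := hp.2 v
    rcases agree_iterate (fun v hv => (hagree v hv).symm) j v with heq | ⟨i, _, hi⟩
    · by_cases hcase : p^[j] v = r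
      · exact subr v j (by rw [heq]; exact hcase)
      · exact ⟨j, by rw [heq]; exact Finset.mem_erase.mpr ⟨hcase, hj⟩⟩
    · exact subr v i hi

noncomputable def keyEquiv (hr : r ∈ R) :
    {q : Fin n → Fin n // Valid (R.erase r) q} ≃
      {pw : (Fin n → Fin n) × Fin n // Valid R pw.1 ∧ ∀ j, pw.1^[j] pw.2 ≠ r} where
  toFun q := ⟨(Function.update q.1 r r, q.1 r), toFun_valid hr q.2, toFun_w hr q.2⟩
  invFun pw := ⟨Function.update pw.1.1 r pw.1.2, invFun_valid hr pw.2.1 pw.2.2⟩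
  left_inv q := by
    apply Subtype.ext
    simp only [Function.update_idem]
    exact Function.update_eq_self r q.1
  right_inv pw := by
    apply Subtype.ext
    apply Prod.ext
    · simp only [Function.update_idem]
      funext v
      rcases eq_or_ne v r with rfl | hv
      · rw [Function.update_self]
        exact (pw.2.1.1 v hr).symm
      · exact Function.update_of_ne hv _ _
    · exact Function.update_self _ _ _

end KeyEquiv

/-! ### Counting -/

section Counting

open scoped Classical

noncomputable def cmp (p : Fin n → Fin n) (r : Fin n) : ℕ :=
  Nat.card {w : Fin n // ∃ j, p^[j] w = r}

lemma cmp_le (p : Fin n → Fin n) (r : Fin n) : cmp p r ≤ n := by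
  rw [cmp, Nat.card_eq_fintype_card]
  simpa using Fintype.card_subtype_le (fun w : Fin n => ∃ j, p^[j] w = r)

lemma card_fiber (p : Fin n → Fin n) (r : Fin n) :
    Nat.card {w : Fin n // ∀ j, p^[j] w ≠ r} = n - cmp p r := by
  rw [cmp, Nat.card_eq_fintype_card, Nat.card_eq_fintype_card]
  have h1 : Fintype.card {w : Fin n // ∀ j, p^[j] w ≠ r}
      = Fintype.card {w : Fin n // ¬ ∃ j, p^[j] w = r} :=
    Fintype.card_congr (Equiv.subtypeEquivRight (fun w => (not_exists).symm))
  rw [h1, Fintype.card_subtype_compl, Fintype.card_fin]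

lemma sum_cmp {R : Finset (Fin n)} {p : Fin n → Fin n} (hp : Valid R p) :
    ∑ r ∈ R, cmp p r = n := by
  have key : ∀ r, cmp p r = (Finset.univ.filter (fun w => ∃ j, p^[j] w = r)).card := fun r => by
    rw [cmp, Nat.card_eq_fintype_card, Fintype.card_subtype]
  have hdisj : ∀ r ∈ R, ∀ r' ∈ R, r ≠ r' →
      Disjoint (Finset.univ.filter (fun w => ∃ j, p^[j] w = r))
        (Finset.univ.filter (fun w => ∃ j, p^[j] w = r')) := by
    intro r hr r' hr' hne
    rw [Finset.disjoint_left]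
    intro w hw hw'
    obtain ⟨i, hi⟩ := (Finset.mem_filter.mp hw).2
    obtain ⟨j, hj⟩ := (Finset.mem_filter.mp hw').2
    have := root_unique (Rt := (· ∈ R)) (fun x hx => hp.1 x hx)
      (v := w) (i := i) (j := j) (by rw [hi]; exact hr) (by rw [hj]; exact hr')
    rw [hi, hj] at this
    exact hne this
  have hcover : R.biUnion (fun r => Finset.univ.filter (fun w => ∃ j, p^[j] w = r))
      = Finset.univ := by
    apply Finset.eq_univ_of_forall
    intro w
    obtain ⟨j, hj⟩ := hp.2 w
    exact Finset.mem_biUnion.mpr ⟨p^[j] w, hj, Finset.mem_filter.mpr ⟨Finset.mem_univ w, j, rfl⟩⟩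
  calc ∑ r ∈ R, cmp p r
      = ∑ r ∈ R, (Finset.univ.filter (fun w => ∃ j, p^[j] w = r)).card :=
        Finset.sum_congr rfl (fun r _ => key r)
    _ = (R.biUnion (fun r => Finset.univ.filter (fun w => ∃ j, p^[j] w = r))).card :=
        (Finset.card_biUnion hdisj).symm
    _ = n := by rw [hcover, Finset.card_univ, Fintype.card_fin]

lemma Ncard_eq_sum (R : Finset (Fin n)) :
    Ncard R = ∑ p : Fin n → Fin n, (if Valid R p then 1 else 0) := by
  rw [Ncard, Nat.card_eq_fintype_card, Fintype.card_subtype, Finset.card_filter]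

lemma Ncard_erase_eq_sum {R : Finset (Fin n)} {r : Fin n} (hr : r ∈ R) :
    Ncard (R.erase r) = ∑ p : Fin n → Fin n, (if Valid R p then n - cmp p r else 0) := by
  rw [Ncard, Nat.card_congr (keyEquiv hr), Nat.card_congr
    (Equiv.subtypeProdEquivSigmaSubtype (fun p (w : Fin n) => Valid R p ∧ ∀ j, p^[j] w ≠ r)),
    Nat.card_eq_fintype_card, Fintype.card_sigma]
  apply Finset.sum_congr rfl
  intro p _
  by_cases hv : Valid R p
  · rw [if_pos hv, ← card_fiber, Nat.card_eq_fintype_card]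
    exact Fintype.card_congr (Equiv.subtypeEquivRight (fun w => and_iff_right hv))
  · rw [if_neg hv]
    haveI : IsEmpty {w : Fin n // Valid R p ∧ ∀ j, p^[j] w ≠ r} := ⟨fun w => hv w.2.1⟩
    exact Fintype.card_eq_zero

lemma recursion {R : Finset (Fin n)} (h1 : R.Nonempty) :
    ∑ r ∈ R, Ncard (R.erase r) = n * (R.card - 1) * Ncard R := by
  calc ∑ r ∈ R, Ncard (R.erase r)
      = ∑ r ∈ R, ∑ p : Fin n → Fin n, (if Valid R p then n - cmp p r else 0) :=
        Finset.sum_congr rfl (fun r hr => Ncard_erase_eq_sum hr)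
    _ = ∑ p : Fin n → Fin n, ∑ r ∈ R, (if Valid R p then n - cmp p r else 0) :=
        Finset.sum_comm
    _ = ∑ p : Fin n → Fin n, (if Valid R p then n * (R.card - 1) else 0) := by
        apply Finset.sum_congr rfl
        intro p _
        by_cases hv : Valid R p
        · simp only [if_pos hv]
          have hle : ∀ r ∈ R, cmp p r ≤ n := fun r _ => cmp_le p r
          have h2 : ∑ r ∈ R, ((n - cmp p r) + cmp p r) = R.card * n := by
            rw [Finset.sum_congr rfl (fun r hr => by rw [Nat.sub_add_cancel (hle r hr)]),
              Finset.sum_const, smul_eq_mul]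
          rw [Finset.sum_add_distrib, sum_cmp hv] at h2
          have hcard : 1 ≤ R.card := h1.card_pos
          have h3 : n * (R.card - 1) = R.card * n - n := by
            rw [Nat.mul_sub, mul_one, mul_comm]
          rw [h3]
          set t := R.card * n with ht
          omega
        · simp only [if_neg hv, Finset.sum_const_zero]
    _ = n * (R.card - 1) * Ncard R := by
        rw [Ncard_eq_sum, Finset.mul_sum]
        apply Finset.sum_congr rfl
        intro p _
        by_cases hv : Valid R p <;> simp [hv]

lemma Ncard_formula (R : Finset (Fin n)) (h1 : R.Nonempty) :
    Ncard R = if R.card = n then 1 else R.card * n ^ (n - R.card - 1) := by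
  suffices H : ∀ d (R : Finset (Fin n)), R.Nonempty → n - R.card = d →
      Ncard R = if R.card = n then 1 else R.card * n ^ (n - R.card - 1) from H _ R h1 rfl
  intro d
  induction d with
  | zero =>
    intro R h1 hd
    have hcard : R.card ≤ n := by simpa using Finset.card_le_univ R
    have hcn : R.card = n := by omega
    have hu : R = Finset.univ := Finset.eq_univ_of_card R (by rw [hcn, Fintype.card_fin])
    rw [hu, Ncard_univ, if_pos (by rw [Finset.card_univ, Fintype.card_fin])]
  | succ d ih =>
    intro R h1 hd
    have hcardle : R.card ≤ n := by simpa using Finset.card_le_univ R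
    have hcard : R.card < n := by omega
    obtain ⟨x, hx⟩ : ∃ x, x ∉ R := by
      by_contra hcon
      push_neg at hcon
      have : R = Finset.univ := Finset.eq_univ_iff_forall.mpr hcon
      rw [this, Finset.card_univ, Fintype.card_fin] at hcard
      omega
    have hcardR' : (insert x R).card = R.card + 1 := Finset.card_insert_of_notMem hx
    have hR'formula := ih (insert x R) ⟨x, Finset.mem_insert_self x R⟩ (by omega)
    have hrec := recursion (R := insert x R) ⟨x, Finset.mem_insert_self x R⟩
    have hterms : ∀ r ∈ insert x R, Ncard ((insert x R).erase r) = Ncard R := by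
      intro r hr
      rw [Ncard_erase_eq hr (Finset.mem_insert_self x R), Finset.erase_insert hx]
    rw [Finset.sum_congr rfl hterms, Finset.sum_const, smul_eq_mul, hcardR'] at hrec
    set k := R.card with hk
    have hkpos : 1 ≤ k := h1.card_pos
    rw [if_neg (by omega)]
    rw [hcardR'] at hR'formula
    have key : (k + 1) * Ncard R = (k + 1) * (k * n ^ (n - k - 1)) := by
      rw [hrec, hR'formula, Nat.add_sub_cancel]
      by_cases hkn : k + 1 = n
      · rw [if_pos hkn]
        have h0 : n - k - 1 = 0 := by omega
        rw [h0, pow_zero, mul_one, mul_one, ← hkn]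
      · rw [if_neg hkn]
        have hexp : n - k - 1 = (n - (k + 1) - 1) + 1 := by omega
        rw [hexp, pow_succ]
        ring
    exact Nat.eq_of_mul_eq_mul_left (by omega) key

end Counting

/-! ### The graph of a parent function -/

section Graph

variable {a b c : Fin n}

/-- The tree associated to a parent function with roots `a`, `b`, `c`. -/
def Gp (a b c : Fin n) (p : Fin n → Fin n) : SimpleGraph (Fin n) :=
  SimpleGraph.fromRel (fun x y =>
    (x ∉ ({a, b, c} : Finset (Fin n)) ∧ y = p x) ∨ (x = a ∧ (y = b ∨ y = c)))

lemma gp_adj {p : Fin n → Fin n} {x y : Fin n} :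
    (Gp a b c p).Adj x y ↔ x ≠ y ∧
      (((x ∉ ({a, b, c} : Finset (Fin n)) ∧ y = p x) ∨ (x = a ∧ (y = b ∨ y = c))) ∨
       ((y ∉ ({a, b, c} : Finset (Fin n)) ∧ x = p y) ∨ (y = a ∧ (x = b ∨ x = c)))) :=
  SimpleGraph.fromRel_adj _ x y

variable {p : Fin n → Fin n}

lemma gp_fix_a (hp : Valid ({a, b, c} : Finset (Fin n)) p) : p a = a := hp.1 a (by simp)
lemma gp_fix_b (hp : Valid ({a, b, c} : Finset (Fin n)) p) : p b = b := hp.1 b (by simp)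
lemma gp_fix_c (hp : Valid ({a, b, c} : Finset (Fin n)) p) : p c = c := hp.1 c (by simp)

lemma gp_no_cycle (hp : Valid ({a, b, c} : Finset (Fin n)) p)
    {v : Fin n} (hv : v ∉ ({a, b, c} : Finset (Fin n))) {i : ℕ}
    (hi : 0 < i) (hcyc : p^[i] v = v) : False := by
  obtain ⟨m, hm⟩ := hp.2 v
  exact hv (no_cycle (Rt := (· ∈ ({a, b, c} : Finset (Fin n)))) (fun x hx => hp.1 x hx)
    hi hcyc hm)

lemma gp_adj_ab (hab : a ≠ b) : (Gp a b c p).Adj a b := by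
  rw [gp_adj]
  exact ⟨hab, Or.inl (Or.inr ⟨rfl, Or.inl rfl⟩)⟩

lemma gp_adj_ac (hac : a ≠ c) : (Gp a b c p).Adj a c := by
  rw [gp_adj]
  exact ⟨hac, Or.inl (Or.inr ⟨rfl, Or.inr rfl⟩)⟩

/-- Reachability respects a closed set of vertices. -/
lemma reachable_mem_iff {V : Type*} {G : SimpleGraph V} {S : Set V}
    (hS : ∀ x y, G.Adj x y → (x ∈ S ↔ y ∈ S)) {x y : V} (h : G.Reachable x y) :
    x ∈ S ↔ y ∈ S := by
  obtain ⟨w⟩ := h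
  induction w with
  | nil => exact Iff.rfl
  | cons hadj _ ih => exact (hS _ _ hadj).trans ih

lemma gp_reach (hab : a ≠ b) (hac : a ≠ c) (hp : Valid ({a, b, c} : Finset (Fin n)) p) (j : ℕ) : ∀ v : Fin n, p^[j] v ∈ ({a, b, c} : Finset (Fin n)) →
    (Gp a b c p).Reachable v a := by
  induction j with
  | zero =>
    intro v hv
    simp only [Function.iterate_zero, id_eq, Finset.mem_insert, Finset.mem_singleton] at hv
    rcases hv with rfl | rfl | rfl
    · exact SimpleGraph.Reachable.refl v
    · exact (gp_adj_ab hab).reachable.symm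
    · exact (gp_adj_ac hac).reachable.symm
  | succ j ih =>
    intro v hv
    by_cases hvR : v ∈ ({a, b, c} : Finset (Fin n))
    · have : p^[0] v ∈ ({a, b, c} : Finset (Fin n)) := by simpa using hvR
      simp only [Function.iterate_zero, id_eq, Finset.mem_insert, Finset.mem_singleton] at this
      rcases this with rfl | rfl | rfl
      · exact SimpleGraph.Reachable.refl v
      · exact (gp_adj_ab hab).reachable.symm
      · exact (gp_adj_ac hac).reachable.symm
    · have hne : v ≠ p v := by
        intro hcon
        apply hvR
        have : p^[j + 1] v = v := Function.iterate_fixed hcon.symm (j + 1)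
        rwa [this] at hv
      have hadj : (Gp a b c p).Adj v (p v) := by
        rw [gp_adj]
        exact ⟨hne, Or.inl (Or.inl ⟨hvR, rfl⟩)⟩
      have hnext : p^[j] (p v) ∈ ({a, b, c} : Finset (Fin n)) := by
        rwa [← Function.iterate_succ_apply]
      exact hadj.reachable.trans (ih (p v) hnext)

lemma gp_connected (hab : a ≠ b) (hac : a ≠ c)
    (hp : Valid ({a, b, c} : Finset (Fin n)) p) : (Gp a b c p).Connected := by
  rw [SimpleGraph.connected_iff]
  refine ⟨fun u v => ?_, ⟨a⟩⟩
  obtain ⟨j, hj⟩ := hp.2 u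
  obtain ⟨i, hi⟩ := hp.2 v
  exact (gp_reach hab hac hp j u hj).trans (gp_reach hab hac hp i v hi).symm

lemma del_adj {G : SimpleGraph (Fin n)} {e : Sym2 (Fin n)} {u w : Fin n} :
    (G \ SimpleGraph.fromEdgeSet {e}).Adj u w ↔ G.Adj u w ∧ s(u, w) ≠ e := by
  constructor
  · intro h
    rcases h with ⟨h1, h2⟩
    refine ⟨h1, fun hcon => h2 ?_⟩
    rw [SimpleGraph.fromEdgeSet_adj]
    exact ⟨by rw [hcon]; exact Set.mem_singleton e, h1.ne⟩
  · rintro ⟨h1, h2⟩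
    refine ⟨h1, fun hcon => ?_⟩
    rw [SimpleGraph.fromEdgeSet_adj] at hcon
    exact h2 hcon.1

lemma gp_not_reachable (hab : a ≠ b) (hac : a ≠ c) (hbc : b ≠ c)
    (hp : Valid ({a, b, c} : Finset (Fin n)) p) {x y : Fin n}
    (hrel : (x ∉ ({a, b, c} : Finset (Fin n)) ∧ y = p x) ∨ (x = a ∧ (y = b ∨ y = c))) :
    ¬ ((Gp a b c p) \ SimpleGraph.fromEdgeSet {s(x, y)}).Reachable x y := by
  intro hreach
  rcases hrel with ⟨hxR, rfl⟩ | ⟨hxa, hy⟩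
  · -- parent edge {x, p x}
    set S : Set (Fin n) := {u | ∃ i, p^[i] u = x} with hS
    have hrootS : ∀ r ∈ ({a, b, c} : Finset (Fin n)), r ∉ S := by
      intro r hr ⟨i, hi⟩
      rw [Function.iterate_fixed (hp.1 r hr) i] at hi
      rw [← hi] at hxR
      exact hxR hr
    have hcl : ∀ u w, ((u ∉ ({a, b, c} : Finset (Fin n)) ∧ w = p u) ∨ (u = a ∧ (w = b ∨ w = c))) →
        s(u, w) ≠ s(x, p x) → (u ∈ S ↔ w ∈ S) := by
      rintro u w (⟨huR, rfl⟩ | ⟨hua, hw⟩) hne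
      · constructor
        · rintro ⟨i, hi⟩
          cases i with
          | zero =>
            simp only [Function.iterate_zero, id_eq] at hi
            subst hi
            exact absurd rfl hne
          | succ i =>
            exact ⟨i, by rw [← Function.iterate_succ_apply]; exact hi⟩
        · rintro ⟨i, hi⟩
          exact ⟨i + 1, by rw [Function.iterate_succ_apply]; exact hi⟩
      · constructor
        · intro h
          rw [hua] at h
          exact absurd h (hrootS a (by simp))
        · intro h
          rcases hw with h' | h' <;>
          · rw [h'] at h
            exact absurd h (hrootS _ (by simp))
    have hclosed : ∀ u w, ((Gp a b c p) \ SimpleGraph.fromEdgeSet {s(x, p x)}).Adj u w →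
        (u ∈ S ↔ w ∈ S) := by
      intro u w hadj
      rw [del_adj] at hadj
      obtain ⟨hadj1, hne⟩ := hadj
      rcases (gp_adj.mp hadj1).2 with hrel | hrel
      · exact hcl u w hrel hne
      · exact (hcl w u hrel (by rw [Sym2.eq_swap] at hne; exact hne)).symm
    have hiff := reachable_mem_iff hclosed hreach
    have hxS : x ∈ S := ⟨0, rfl⟩
    obtain ⟨i, hi⟩ := hiff.mp hxS
    exact gp_no_cycle hp hxR (Nat.succ_pos i)
      (by rw [Function.iterate_succ_apply]; exact hi)
  · -- edge {a, y} with y = b or y = c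
    rw [hxa] at hreach
    have hyR : y ∈ ({a, b, c} : Finset (Fin n)) := by
      rcases hy with rfl | rfl <;> simp
    have hya : y ≠ a := by
      rcases hy with rfl | rfl
      · exact hab.symm
      · exact hac.symm
    set S : Set (Fin n) := {u | ∃ i, p^[i] u = y} with hS
    have hrootS : ∀ r ∈ ({a, b, c} : Finset (Fin n)), r ∈ S → r = y := by
      rintro r hr ⟨i, hi⟩
      rw [Function.iterate_fixed (hp.1 r hr) i] at hi
      exact hi
    have hcl : ∀ u w, ((u ∉ ({a, b, c} : Finset (Fin n)) ∧ w = p u) ∨ (u = a ∧ (w = b ∨ w = c))) →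
        s(u, w) ≠ s(a, y) → (u ∈ S ↔ w ∈ S) := by
      rintro u w (⟨huR, rfl⟩ | ⟨hua, hw⟩) hne
      · constructor
        · rintro ⟨i, hi⟩
          cases i with
          | zero =>
            simp only [Function.iterate_zero, id_eq] at hi
            rw [hi] at huR
            exact absurd hyR huR
          | succ i =>
            exact ⟨i, by rw [← Function.iterate_succ_apply]; exact hi⟩
        · rintro ⟨i, hi⟩
          exact ⟨i + 1, by rw [Function.iterate_succ_apply]; exact hi⟩
      · have hwy : w ≠ y := by
          intro hcon
          rw [hua, hcon] at hne
          exact hne rfl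
        constructor
        · intro h
          rw [hua] at h
          exact ((hya (hrootS a (by simp) h).symm)).elim
        · intro h
          rcases hw with h' | h' <;>
          · rw [h'] at h hwy
            exact absurd (hrootS _ (by simp) h) hwy
    have hclosed : ∀ u w, ((Gp a b c p) \ SimpleGraph.fromEdgeSet {s(a, y)}).Adj u w →
        (u ∈ S ↔ w ∈ S) := by
      intro u w hadj
      rw [del_adj] at hadj
      obtain ⟨hadj1, hne⟩ := hadj
      rcases (gp_adj.mp hadj1).2 with hrel | hrel
      · exact hcl u w hrel hne
      · exact (hcl w u hrel (by rw [Sym2.eq_swap] at hne; exact hne)).symm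
    have hiff := reachable_mem_iff hclosed hreach
    have hyS : y ∈ S := ⟨0, rfl⟩
    exact hya (hrootS a (by simp) (hiff.mpr hyS)).symm

lemma gp_isBridge (hab : a ≠ b) (hac : a ≠ c) (hbc : b ≠ c)
    (hp : Valid ({a, b, c} : Finset (Fin n)) p) :
    ∀ ⦃x y : Fin n⦄, (Gp a b c p).Adj x y → (Gp a b c p).IsBridge s(x, y) := by
  intro x y hadj
  rw [SimpleGraph.isBridge_iff]
  rcases (gp_adj.mp hadj).2 with hrel | hrel
  · exact gp_not_reachable hab hac hbc hp hrel
  · intro hreach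
    have := hreach.symm
    rw [show s(x, y) = s(y, x) from Sym2.eq_swap] at this
    exact gp_not_reachable hab hac hbc hp hrel this

lemma gp_isTree (hab : a ≠ b) (hac : a ≠ c) (hbc : b ≠ c)
    (hp : Valid ({a, b, c} : Finset (Fin n)) p) : (Gp a b c p).IsTree :=
  ⟨gp_connected hab hac hp,
    SimpleGraph.isAcyclic_iff_forall_adj_isBridge.mpr (gp_isBridge hab hac hbc hp)⟩

lemma flow_path (hab : a ≠ b) (hac : a ≠ c) (hbc : b ≠ c)
    (hp : Valid ({a, b, c} : Finset (Fin n)) p) :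
    ∀ m, ∀ v : Fin n, p^[m] v ∈ ({a, b, c} : Finset (Fin n)) →
      (∀ i, i < m → p^[i] v ∉ ({a, b, c} : Finset (Fin n))) →
      ∃ w : (Gp a b c p).Walk v a, w.IsPath ∧
        (v ∉ ({a, b, c} : Finset (Fin n)) → w.getVert 1 = p v) ∧
        ∀ x, x ∈ w.support → (∃ i, p^[i] v = x) ∨ x = a := by
  intro m
  induction m with
  | zero =>
    intro v hv _
    simp only [Function.iterate_zero, id_eq] at hv
    have hvR : v ∈ ({a, b, c} : Finset (Fin n)) := hv
    simp only [Finset.mem_insert, Finset.mem_singleton] at hv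
    rcases hv with rfl | rfl | rfl
    · refine ⟨SimpleGraph.Walk.nil, SimpleGraph.Walk.IsPath.nil,
        fun hcon => absurd hvR hcon, ?_⟩
      intro x hx
      rw [SimpleGraph.Walk.support_nil, List.mem_singleton] at hx
      exact Or.inr hx
    · refine ⟨SimpleGraph.Walk.cons (gp_adj_ab hab).symm SimpleGraph.Walk.nil, ?_,
        fun hcon => absurd hvR hcon, ?_⟩
      · rw [SimpleGraph.Walk.cons_isPath_iff]
        refine ⟨SimpleGraph.Walk.IsPath.nil, ?_⟩
        rw [SimpleGraph.Walk.support_nil, List.mem_singleton]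
        exact Ne.symm hab
      · intro x hx
        rw [SimpleGraph.Walk.support_cons, SimpleGraph.Walk.support_nil] at hx
        rcases List.mem_cons.mp hx with rfl | hx
        · exact Or.inl ⟨0, rfl⟩
        · exact Or.inr (List.mem_singleton.mp hx)
    · refine ⟨SimpleGraph.Walk.cons (gp_adj_ac hac).symm SimpleGraph.Walk.nil, ?_,
        fun hcon => absurd hvR hcon, ?_⟩
      · rw [SimpleGraph.Walk.cons_isPath_iff]
        refine ⟨SimpleGraph.Walk.IsPath.nil, ?_⟩
        rw [SimpleGraph.Walk.support_nil, List.mem_singleton]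
        exact Ne.symm hac
      · intro x hx
        rw [SimpleGraph.Walk.support_cons, SimpleGraph.Walk.support_nil] at hx
        rcases List.mem_cons.mp hx with rfl | hx
        · exact Or.inl ⟨0, rfl⟩
        · exact Or.inr (List.mem_singleton.mp hx)
  | succ m ih =>
    intro v hv hmin
    have hvR' : v ∉ ({a, b, c} : Finset (Fin n)) := by simpa using hmin 0 (Nat.succ_pos m)
    have hnext : p^[m] (p v) ∈ ({a, b, c} : Finset (Fin n)) := by
      rw [← Function.iterate_succ_apply]; exact hv
    have hminnext : ∀ i, i < m → p^[i] (p v) ∉ ({a, b, c} : Finset (Fin n)) := fun i hi => by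
      rw [← Function.iterate_succ_apply]; exact hmin (i + 1) (Nat.succ_lt_succ hi)
    obtain ⟨w', hw'path, -, hw'supp⟩ := ih (p v) hnext hminnext
    have hne : v ≠ p v := by
      intro hcon
      apply hvR'
      have h1 : p^[m + 1] v = v := Function.iterate_fixed hcon.symm (m + 1)
      rwa [h1] at hv
    have hadj : (Gp a b c p).Adj v (p v) := gp_adj.mpr ⟨hne, Or.inl (Or.inl ⟨hvR', rfl⟩)⟩
    refine ⟨SimpleGraph.Walk.cons hadj w', ?_, ?_, ?_⟩
    · rw [SimpleGraph.Walk.cons_isPath_iff]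
      refine ⟨hw'path, fun hvsupp => ?_⟩
      rcases hw'supp v hvsupp with ⟨i, hi⟩ | h
      · exact gp_no_cycle hp hvR' (Nat.succ_pos i)
          (by rw [Function.iterate_succ_apply]; exact hi)
      · exact hvR' (by rw [h]; simp)
    · intro _
      rw [SimpleGraph.Walk.getVert_cons w' hadj one_ne_zero]
      exact SimpleGraph.Walk.getVert_zero w'
    · intro x hx
      rw [SimpleGraph.Walk.support_cons] at hx
      rcases List.mem_cons.mp hx with rfl | hx
      · exact Or.inl ⟨0, rfl⟩
      · rcases hw'supp x hx with ⟨i, hi⟩ | h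
        · exact Or.inl ⟨i + 1, by rw [Function.iterate_succ_apply]; exact hi⟩
        · exact Or.inr h

end Graph

/-! ### From trees to parent functions -/

section TreeToParent

variable {T : SimpleGraph (Fin n)}

noncomputable def canonPath (hT : T.IsTree) (a v : Fin n) : T.Walk v a :=
  (hT.existsUnique_path v a).choose

lemma canonPath_isPath (hT : T.IsTree) (a v : Fin n) : (canonPath hT a v).IsPath :=
  (hT.existsUnique_path v a).choose_spec.1

lemma canonPath_eq (hT : T.IsTree) (a : Fin n) {v : Fin n} {w : T.Walk v a}
    (hw : w.IsPath) : w = canonPath hT a v :=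
  (hT.existsUnique_path v a).choose_spec.2 w hw

lemma canonPath_decomp (hT : T.IsTree) {a v : Fin n} (hva : v ≠ a) :
    T.Adj v ((canonPath hT a v).getVert 1) ∧
      (canonPath hT a ((canonPath hT a v).getVert 1)).length + 1
        = (canonPath hT a v).length := by
  have hpath : (canonPath hT a v).IsPath := canonPath_isPath hT a v
  revert hpath
  generalize hP : canonPath hT a v = P
  intro hpath
  cases P with
  | nil => exact absurd rfl hva
  | @cons _ u _ h P' =>
    have hgv : (SimpleGraph.Walk.cons h P').getVert 1 = u := by
      rw [SimpleGraph.Walk.getVert_cons P' h one_ne_zero]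
      exact SimpleGraph.Walk.getVert_zero P'
    rw [hgv]
    have hP' : P' = canonPath hT a u :=
      canonPath_eq hT a ((SimpleGraph.Walk.cons_isPath_iff h P').mp hpath).1
    rw [← hP', SimpleGraph.Walk.length_cons]
    exact ⟨h, rfl⟩

noncomputable def pT (hT : T.IsTree) (a b c : Fin n) (v : Fin n) : Fin n :=
  if v = a ∨ v = b ∨ v = c then v else (canonPath hT a v).getVert 1

lemma pT_valid (hT : T.IsTree) (a b c : Fin n) :
    Valid ({a, b, c} : Finset (Fin n)) (pT hT a b c) := by
  constructor
  · intro r hr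
    simp only [Finset.mem_insert, Finset.mem_singleton] at hr
    rw [pT, if_pos hr]
  · intro v
    suffices H : ∀ L, ∀ v : Fin n, (canonPath hT a v).length = L →
        ∃ j, (pT hT a b c)^[j] v ∈ ({a, b, c} : Finset (Fin n)) from H _ v rfl
    intro L
    induction L using Nat.strong_induction_on with
    | _ L ih =>
      intro v hL
      by_cases hvR : v = a ∨ v = b ∨ v = c
      · refine ⟨0, ?_⟩
        simp only [Function.iterate_zero, id_eq, Finset.mem_insert, Finset.mem_singleton]
        exact hvR
      · have hva : v ≠ a := fun hcon => hvR (Or.inl hcon)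
        have hdec := canonPath_decomp hT hva
        have hpv : pT hT a b c v = (canonPath hT a v).getVert 1 := by
          rw [pT, if_neg hvR]
        have hlt : (canonPath hT a ((canonPath hT a v).getVert 1)).length < L := by
          have := hdec.2
          omega
        obtain ⟨j, hj⟩ := ih _ hlt _ rfl
        refine ⟨j + 1, ?_⟩
        rw [Function.iterate_succ_apply, hpv]
        exact hj

lemma pT_gp {a b c : Fin n} (hab : a ≠ b) (hac : a ≠ c) (hbc : b ≠ c)
    {p : Fin n → Fin n} (hp : Valid ({a, b, c} : Finset (Fin n)) p) :
    pT (gp_isTree hab hac hbc hp) a b c = p := by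
  funext v
  by_cases hvR : v = a ∨ v = b ∨ v = c
  · rw [pT, if_pos hvR]
    exact (hp.1 v (by simpa using hvR)).symm
  · rw [pT, if_neg hvR]
    have hex := hp.2 v
    have hm := Nat.find_spec hex
    have hmin : ∀ i, i < Nat.find hex → p^[i] v ∉ ({a, b, c} : Finset (Fin n)) :=
      fun i hi => Nat.find_min hex hi
    obtain ⟨w, hwpath, hwget, -⟩ := flow_path hab hac hbc hp (Nat.find hex) v hm hmin
    rw [← canonPath_eq (gp_isTree hab hac hbc hp) a hwpath]
    exact hwget (by simpa using hvR)

lemma gp_pT {a b c : Fin n} (hT : T.IsTree) (hab : a ≠ b) (hac : a ≠ c) (hbc : b ≠ c)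
    (hTab : T.Adj a b) (hTac : T.Adj a c) :
    Gp a b c (pT hT a b c) = T := by
  have hpv := pT_valid hT a b c
  have hsub0 : ∀ u w : Fin n,
      ((u ∉ ({a, b, c} : Finset (Fin n)) ∧ w = pT hT a b c u) ∨ (u = a ∧ (w = b ∨ w = c))) →
      T.Adj u w := by
    rintro u w (⟨huR, rfl⟩ | ⟨h1, h2⟩)
    · have huor : ¬(u = a ∨ u = b ∨ u = c) := by simpa using huR
      have hua : u ≠ a := fun hcon => huor (Or.inl hcon)
      rw [pT, if_neg huor]
      exact (canonPath_decomp hT hua).1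
    · rw [h1]
      rcases h2 with rfl | rfl
      · exact hTab
      · exact hTac
  have hsub : ∀ u w : Fin n, (Gp a b c (pT hT a b c)).Adj u w → T.Adj u w := by
    intro u w hadj
    rw [gp_adj] at hadj
    rcases hadj.2 with hrel | hrel
    · exact hsub0 u w hrel
    · exact (hsub0 w u hrel).symm
  ext x y
  constructor
  · exact fun h => hsub x y h
  · intro hT_adj
    by_contra hnadj
    have hbridge := SimpleGraph.isAcyclic_iff_forall_adj_isBridge.mp
      ((SimpleGraph.isTree_iff T).mp hT).2 hT_adj
    rw [SimpleGraph.isBridge_iff] at hbridge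
    apply hbridge
    have hmono : (Gp a b c (pT hT a b c)) ≤ T \ SimpleGraph.fromEdgeSet {s(x, y)} := by
      intro u w hadj
      rw [del_adj]
      refine ⟨hsub u w hadj, fun hcon => hnadj ?_⟩
      rw [Sym2.eq_iff] at hcon
      rcases hcon with ⟨h1, h2⟩ | ⟨h1, h2⟩
      · rw [← h1, ← h2]; exact hadj
      · rw [← h2, ← h1]; exact hadj.symm
    exact SimpleGraph.Reachable.mono hmono
      (((gp_connected hab hac hpv).preconnected) x y)

/-- The main bijection. -/
noncomputable def mainEquiv {a b c : Fin n} (hab : a ≠ b) (hac : a ≠ c) (hbc : b ≠ c) :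
    {p : Fin n → Fin n // Valid ({a, b, c} : Finset (Fin n)) p} ≃
      {G : SimpleGraph (Fin n) // G.IsTree ∧ G.Adj a b ∧ G.Adj a c} where
  toFun p := ⟨Gp a b c p.1, gp_isTree hab hac hbc p.2, gp_adj_ab hab, gp_adj_ac hac⟩
  invFun G := ⟨pT G.2.1 a b c, pT_valid G.2.1 a b c⟩
  left_inv p := Subtype.ext (pT_gp hab hac hbc p.2)
  right_inv G := Subtype.ext (gp_pT G.2.1 hab hac hbc G.2.2.1 G.2.2.2)

end TreeToParent

end SpanTreesAux
end

/-- For `n ≥ 4`, the number of spanning trees of `K_n` containing two distinct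
edges sharing a common vertex (edges `{a,b}` and `{a,c}`) is `3 * n ^ (n - 4)`. -/
theorem spanning_trees_containing_intersecting_edges (n : ℕ) (hn : 4 ≤ n)
    (a b c : Fin n) (hab : a ≠ b) (hac : a ≠ c) (hbc : b ≠ c) :
    Nat.card {G : SimpleGraph (Fin n) // G.IsTree ∧ G.Adj a b ∧ G.Adj a c}
      = 3 * n ^ (n - 4) := by
  have h1 : Nat.card {G : SimpleGraph (Fin n) // G.IsTree ∧ G.Adj a b ∧ G.Adj a c}
      = SpanTreesAux.Ncard ({a, b, c} : Finset (Fin n)) := by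
    rw [SpanTreesAux.Ncard]
    exact (Nat.card_congr (SpanTreesAux.mainEquiv hab hac hbc)).symm
  have hcard : ({a, b, c} : Finset (Fin n)).card = 3 := by
    rw [Finset.card_insert_of_notMem (by simp [hab, hac]),
      Finset.card_insert_of_notMem (by simp [hbc]), Finset.card_singleton]
  rw [h1, SpanTreesAux.Ncard_formula _ ⟨a, by simp⟩, hcard, if_neg (by omega)]
  congr 2
end

section
/- For n ≥ 4 and two vertex-disjoint edges e, f of K_n, the number of spanning trees of K_n containing both e and f is 4·n^(n-4). -/
namespace STC
set_option linter.unusedSectionVars false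
set_option linter.unnecessarySeqFocus false
open Finset Function

variable {V : Type*} [Fintype V] [DecidableEq V]

/-- `f` is a tree-function rooted at `a`. -/
def Good (f : V → V) (a : V) : Prop := f a = a ∧ ∀ v, ∃ m, f^[m] v = a

/-- The set of vertices whose `σ`-orbit reaches `u`. -/
noncomputable def comp (σ : V → V) (u : V) : Finset V :=
  @Finset.filter _ (fun v => ∃ m, σ^[m] v = u) (Classical.decPred _) Finset.univ

lemma mem_comp {σ : V → V} {u v : V} : v ∈ comp σ u ↔ ∃ m, σ^[m] v = u := by
  simp only [comp, Finset.mem_filter, Finset.mem_univ, true_and]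

/-- Roots (fixed points) of `σ`. -/
noncomputable def roots (σ : V → V) : Finset V :=
  @Finset.filter _ (fun v => σ v = v) (Classical.decPred _) Finset.univ

lemma mem_roots {σ : V → V} {v : V} : v ∈ roots σ ↔ σ v = v := by
  simp only [roots, Finset.mem_filter, Finset.mem_univ, true_and]

/-- Extensions of the "forest" `σ` which are free exactly on `S` and which
are tree-functions rooted at `a`. -/
noncomputable def E (σ : V → V) (a : V) (S : Finset V) : Finset (V → V) :=
  @Finset.filter _ (fun f => (∀ v ∉ S, f v = σ v) ∧ Good f a)
    (Classical.decPred _) Finset.univ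

lemma mem_E {σ f : V → V} {a : V} {S : Finset V} :
    f ∈ E σ a S ↔ (∀ v ∉ S, f v = σ v) ∧ Good f a := by
  simp only [E, Finset.mem_filter, Finset.mem_univ, true_and]

lemma self_mem_comp {σ : V → V} (u : V) : u ∈ comp σ u :=
  mem_comp.2 ⟨0, rfl⟩

lemma comp_disjoint {σ : V → V} {r s : V} (hr : σ r = r) (hs : σ s = s)
    (hrs : r ≠ s) : Disjoint (comp σ r) (comp σ s) := by
  rw [Finset.disjoint_left]
  rintro v hvr hvs
  obtain ⟨m, hm⟩ := mem_comp.1 hvr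
  obtain ⟨m', hm'⟩ := mem_comp.1 hvs
  rcases le_total m m' with h | h
  · apply hrs
    calc r = σ^[m' - m] r := (Function.iterate_fixed hr _).symm
    _ = σ^[m' - m] (σ^[m] v) := by rw [hm]
    _ = σ^[m'] v := by rw [← Function.iterate_add_apply, Nat.sub_add_cancel h]
    _ = s := hm'
  · apply hrs.symm
    calc s = σ^[m - m'] s := (Function.iterate_fixed hs _).symm
    _ = σ^[m - m'] (σ^[m'] v) := by rw [hm']
    _ = σ^[m] v := by rw [← Function.iterate_add_apply, Nat.sub_add_cancel h]
    _ = r := hm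

lemma comp_step {σ : V → V} {u v : V} (hu : σ u = u) (hv : v ∈ comp σ u) :
    σ v ∈ comp σ u := by
  obtain ⟨m, hm⟩ := mem_comp.1 hv
  exact mem_comp.2 ⟨m, by rw [← Function.iterate_succ_apply, Function.iterate_succ_apply', hm, hu]⟩

lemma not_mem_comp_iterate {σ : V → V} {r v : V} (h : v ∉ comp σ r) (m : ℕ) :
    σ^[m] v ≠ r := fun hm => h (mem_comp.2 ⟨m, hm⟩)

/-- iterates of `update σ r w` agree with those of `σ` as long as the orbit avoids `r`. -/
lemma iterate_update_eq {σ : V → V} {r w v : V} :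
    ∀ m, (∀ i < m, σ^[i] v ≠ r) → (Function.update σ r w)^[m] v = σ^[m] v := by
  intro m
  induction m with
  | zero => intro _; rfl
  | succ m ih =>
    intro h
    rw [Function.iterate_succ_apply', Function.iterate_succ_apply',
      ih (fun i hi => h i (Nat.lt_succ_of_lt hi)),
      Function.update_of_ne (h m (Nat.lt_succ_self m))]

lemma iterate_update_eq_of_not_mem {σ : V → V} {r w v : V} (h : v ∉ comp σ r) (m : ℕ) :
    (Function.update σ r w)^[m] v = σ^[m] v :=
  iterate_update_eq m (fun i _ => not_mem_comp_iterate h i)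

lemma comp_update_eq_of_not_mem {σ : V → V} {r w v u : V} (h : v ∉ comp σ r) :
    (v ∈ comp (Function.update σ r w) u ↔ v ∈ comp σ u) := by
  simp only [mem_comp]
  constructor <;> rintro ⟨m, hm⟩ <;> exact ⟨m, by
    rw [iterate_update_eq_of_not_mem h] at * <;> assumption⟩

/-- if `v` reaches `r`, then under the update it reaches `r` too (first hitting). -/
lemma hit_update {σ : V → V} {r w v : V} (h : v ∈ comp σ r) :
    ∃ m, (Function.update σ r w)^[m] v = r := by
  classical
  have hex : ∃ m, σ^[m] v = r := mem_comp.1 h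
  let m₀ := Nat.find hex
  refine ⟨m₀, ?_⟩
  rw [iterate_update_eq m₀ (fun i hi => Nat.find_min hex hi)]
  exact Nat.find_spec hex


lemma eq_of_root_mem_comp {σ : V → V} {u r : V} (hu : σ u = u) (hr : σ r = r)
    (h : u ∈ comp σ r) : u = r := by
  by_contra hne
  exact (Finset.disjoint_left.1 (comp_disjoint hu hr hne)) (self_mem_comp u) h

/-- Every element's orbit ends in a root. -/
def Forest (σ : V → V) : Prop := ∀ v, ∃ u, σ u = u ∧ v ∈ comp σ u

lemma roots_update {σ : V → V} {r w : V} (hw : w ≠ r) :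
    roots (Function.update σ r w) = roots σ \ {r} := by
  ext v
  simp only [mem_roots, Finset.mem_sdiff, Finset.mem_singleton]
  by_cases hv : v = r
  · subst hv; simp [Function.update_self, hw]
  · rw [Function.update_of_ne hv]; tauto

lemma forest_update {σ : V → V} {r w : V} (hσ : Forest σ) (hr : σ r = r)
    (hw : w ∉ comp σ r) : Forest (Function.update σ r w) := by
  intro v
  set σ' := Function.update σ r w with hσ'
  have hwr : w ≠ r := fun h => hw (by rw [h]; exact self_mem_comp r)
  obtain ⟨u, hu, hvu⟩ := hσ v
  by_cases huv : v ∈ comp σ r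
  · -- v is in r's component; it first travels to r, jumps to w, then follows σ from w.
    obtain ⟨m₀, hm₀⟩ := hit_update (w := w) huv
    obtain ⟨u', hu', hwu'⟩ := hσ w
    have hu'r : u' ≠ r := by
      rintro rfl
      exact hw hwu'
    obtain ⟨j, hj⟩ := mem_comp.1 hwu'
    refine ⟨u', by rw [hσ', Function.update_of_ne hu'r]; exact hu', mem_comp.2 ⟨j + (m₀ + 1), ?_⟩⟩
    have h1 : σ'^[m₀ + 1] v = w := by
      rw [Function.iterate_succ_apply', hm₀, hσ', Function.update_self]
    rw [Function.iterate_add_apply, h1,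
      iterate_update_eq_of_not_mem hw, hj]
  · -- v's orbit is unchanged
    have hur : u ≠ r := by
      rintro rfl; exact huv hvu
    obtain ⟨m, hm⟩ := mem_comp.1 hvu
    exact ⟨u, by rw [hσ', Function.update_of_ne hur]; exact hu,
      mem_comp.2 ⟨m, by rwa [iterate_update_eq_of_not_mem huv]⟩⟩

lemma comp_update_of_mem {σ : V → V} {a r w v : V} (ha : σ a = a) (hr : σ r = r)
    (har : a ≠ r) (hw : w ∉ comp σ r) (hv : v ∈ comp σ r) :
    (v ∈ comp (Function.update σ r w) a ↔ w ∈ comp σ a) := by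
  set σ' := Function.update σ r w with hσ'
  have hex : ∃ m, σ^[m] v = r := mem_comp.1 hv
  classical
  set m₀ := Nat.find hex with hm₀def
  have hmin : ∀ i < m₀, σ^[i] v ≠ r := fun i hi => Nat.find_min hex hi
  have hm₀ : σ'^[m₀] v = r := by
    rw [iterate_update_eq m₀ hmin]; exact Nat.find_spec hex
  have h1 : σ'^[m₀ + 1] v = w := by
    rw [Function.iterate_succ_apply', hm₀, hσ', Function.update_self]
  constructor
  · rintro hva
    obtain ⟨m, hm⟩ := mem_comp.1 hva
    rcases le_or_gt m m₀ with hle | hlt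
    · exfalso
      have : σ^[m] v = a := by
        rw [← iterate_update_eq m (fun i hi => hmin i (lt_of_lt_of_le hi hle)), hm]
      have haR : a ∈ comp σ r := by
        refine mem_comp.2 ⟨m₀ - m, ?_⟩
        rw [← this, ← Function.iterate_add_apply, Nat.sub_add_cancel hle]
        exact Nat.find_spec hex
      exact har (eq_of_root_mem_comp ha hr haR)
    · have hm' : m = (m - (m₀ + 1)) + (m₀ + 1) := (Nat.sub_add_cancel hlt).symm
      refine mem_comp.2 ⟨m - (m₀ + 1), ?_⟩
      rw [← iterate_update_eq_of_not_mem hw (m - (m₀+1)), ← h1,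
        ← Function.iterate_add_apply, ← hm', hm]
  · rintro hwa
    obtain ⟨j, hj⟩ := mem_comp.1 hwa
    refine mem_comp.2 ⟨j + (m₀ + 1), ?_⟩
    rw [Function.iterate_add_apply, h1, iterate_update_eq_of_not_mem hw, hj]

lemma card_comp_update {σ : V → V} {a r w : V} (ha : σ a = a) (hr : σ r = r)
    (har : a ≠ r) (hw : w ∉ comp σ r) :
    (comp (Function.update σ r w) a).card
      = (comp σ a).card + (if w ∈ comp σ a then (comp σ r).card else 0) := by
  have hset : comp (Function.update σ r w) a
      = if w ∈ comp σ a then comp σ a ∪ comp σ r else comp σ a := by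
    ext v
    by_cases hv : v ∈ comp σ r
    · rw [comp_update_of_mem ha hr har hw hv]
      by_cases hwa : w ∈ comp σ a
      · simp [hwa, Finset.mem_union, hv]
      · have hva : v ∉ comp σ a :=
          fun h => (Finset.disjoint_left.1 (comp_disjoint ha hr har) h) hv
        simp [hwa, hva]
    · rw [comp_update_eq_of_not_mem hv]
      by_cases hwa : w ∈ comp σ a <;> simp [hwa, Finset.mem_union, hv]
  rw [hset]
  by_cases hwa : w ∈ comp σ a
  · simp only [hwa, if_true]
    exact Finset.card_union_of_disjoint (comp_disjoint ha hr har)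
  · simp [hwa]

lemma invariant_aux {σ f : V → V} {r : V} {T : Finset V} (hr : σ r = r)
    (hfr : f r ∈ comp σ r) (hf : ∀ x, x ∉ T → x ≠ r → f x = σ x)
    (hT : ∀ x ∈ T, σ x = x) (hrT : r ∉ T) :
    ∀ x ∈ comp σ r, f x ∈ comp σ r := by
  intro x hx
  by_cases hxr : x = r
  · subst hxr; exact hfr
  · have hxT : x ∉ T := fun h => hxr (eq_of_root_mem_comp (hT x h) hr hx)
    rw [hf x hxT hxr]
    exact comp_step hr hx

lemma not_good_of_invariant {σ f : V → V} {a r : V} (ha : σ a = a) (hr : σ r = r)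
    (har : a ≠ r) (hf : ∀ x ∈ comp σ r, f x ∈ comp σ r) : ¬ Good f a := by
  rintro ⟨-, hgood⟩
  obtain ⟨m, hm⟩ := hgood r
  have : ∀ m, f^[m] r ∈ comp σ r := by
    intro m
    induction m with
    | zero => exact self_mem_comp r
    | succ m ih => rw [Function.iterate_succ_apply']; exact hf _ ih
  exact har (eq_of_root_mem_comp ha hr (hm ▸ this m))

lemma E_update_empty {σ : V → V} {a r w : V} {T : Finset V} (ha : σ a = a)
    (hr : σ r = r) (har : a ≠ r) (hw : w ∈ comp σ r)
    (hT : ∀ x ∈ T, σ x = x) (hrT : r ∉ T) :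
    E (Function.update σ r w) a T = ∅ := by
  rw [Finset.eq_empty_iff_forall_notMem]
  intro f hf
  obtain ⟨hagree, hgood⟩ := mem_E.1 hf
  have hfr : f r = w := by rw [hagree r hrT, Function.update_self]
  refine not_good_of_invariant ha hr har ?_ hgood
  refine invariant_aux hr (hfr ▸ hw) (fun x hx hxr => ?_) hT hrT
  rw [hagree x hx, Function.update_of_ne hxr]

lemma E_filter_eq {σ : V → V} {a r w : V} {S : Finset V} (hrS : r ∈ S) :
    @Finset.filter _ (fun f => f r = w) (Classical.decPred _) (E σ a S)
      = E (Function.update σ r w) a (S \ {r}) := by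
  ext f
  simp only [Finset.mem_filter, mem_E, Finset.mem_sdiff, Finset.mem_singleton]
  constructor
  · rintro ⟨⟨hagree, hgood⟩, hfr⟩
    refine ⟨fun v hv => ?_, hgood⟩
    by_cases hvr : v = r
    · subst hvr; rw [hfr, Function.update_self]
    · rw [Function.update_of_ne hvr]
      exact hagree v (fun hvS => hv ⟨hvS, hvr⟩)
  · rintro ⟨hagree, hgood⟩
    have hfr : f r = w := by
      rw [hagree r (fun h => h.2 rfl), Function.update_self]
    refine ⟨⟨fun v hv => ?_, hgood⟩, hfr⟩
    have hvr : v ≠ r := fun h => hv (h ▸ hrS)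
    rw [hagree v (fun h => hv h.1), Function.update_of_ne hvr]


lemma good_update {σ : V → V} {a r w : V} (ha : σ a = a) (hr : σ r = r)
    (har : a ≠ r) (hwa : w ∈ comp σ a)
    (hdich : ∀ v : V, v ∈ comp σ a ∨ v ∈ comp σ r) :
    Good (Function.update σ r w) a := by
  have hdisj := comp_disjoint ha hr har
  have hw : w ∉ comp σ r := fun h => (Finset.disjoint_left.1 hdisj hwa) h
  constructor
  · rw [Function.update_of_ne har]; exact ha
  · intro v
    rcases hdich v with hv | hv
    · have hvr : v ∉ comp σ r := fun h => (Finset.disjoint_left.1 hdisj hv) h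
      obtain ⟨m, hm⟩ := mem_comp.1 hv
      exact ⟨m, by rwa [iterate_update_eq_of_not_mem hvr]⟩
    · obtain ⟨m₀, hm₀⟩ := hit_update (w := w) hv
      obtain ⟨j, hj⟩ := mem_comp.1 hwa
      refine ⟨j + (m₀ + 1), ?_⟩
      have h1 : (Function.update σ r w)^[m₀ + 1] v = w := by
        rw [Function.iterate_succ_apply', hm₀, Function.update_self]
      rw [Function.iterate_add_apply, h1, iterate_update_eq_of_not_mem hw, hj]

lemma key_base {σ : V → V} {a r : V} (ha : σ a = a) (hσ : Forest σ) (hr : σ r = r)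
    (har : a ≠ r) (hroots : roots σ = {a, r}) :
    (E σ a {r}).card = (comp σ a).card := by
  have hdich : ∀ v : V, v ∈ comp σ a ∨ v ∈ comp σ r := by
    intro v
    obtain ⟨u, hu, hvu⟩ := hσ v
    have : u ∈ roots σ := mem_roots.2 hu
    rw [hroots] at this
    rcases Finset.mem_insert.1 this with h | h
    · left; exact h ▸ hvu
    · right; exact (Finset.mem_singleton.1 h) ▸ hvu
  symm
  refine Finset.card_bij (fun w _ => Function.update σ r w) ?_ ?_ ?_
  · intro w hw
    rw [mem_E]
    refine ⟨fun v hv => Function.update_of_ne (Finset.notMem_singleton.1 hv) _ _, ?_⟩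
    exact good_update ha hr har hw hdich
  · intro w₁ _ w₂ _ h
    have := congrFun h r
    simpa using this
  · intro f hf
    obtain ⟨hagree, hgood⟩ := mem_E.1 hf
    have hfa : f r ∈ comp σ a := by
      by_contra hfa
      have hfr : f r ∈ comp σ r := (hdich (f r)).resolve_left hfa
      refine not_good_of_invariant ha hr har ?_ hgood
      exact invariant_aux (T := ∅) hr hfr
        (fun x _ hxr => hagree x (Finset.notMem_singleton.2 hxr))
        (by simp) (by simp)
    refine ⟨f r, hfa, ?_⟩
    show Function.update σ r (f r) = f
    funext v
    by_cases hv : v = r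
    · subst hv; rw [Function.update_self]
    · rw [Function.update_of_ne hv, (hagree v (Finset.notMem_singleton.2 hv)).symm]

lemma E_filter_eq' {σ : V → V} {a r w : V} {S : Finset V} (hrS : r ∈ S) :
    (E σ a S).filter (fun f => f r = w) = E (Function.update σ r w) a (S \ {r}) := by
  ext f
  simp only [Finset.mem_filter, mem_E, Finset.mem_sdiff, Finset.mem_singleton]
  constructor
  · rintro ⟨⟨hagree, hgood⟩, hfr⟩
    refine ⟨fun v hv => ?_, hgood⟩
    by_cases hvr : v = r
    · subst hvr; rw [hfr, Function.update_self]
    · rw [Function.update_of_ne hvr]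
      exact hagree v (fun hvS => hv ⟨hvS, hvr⟩)
  · rintro ⟨hagree, hgood⟩
    have hfr : f r = w := by
      rw [hagree r (fun h => h.2 rfl), Function.update_self]
    refine ⟨⟨fun v hv => ?_, hgood⟩, hfr⟩
    have hvr : v ≠ r := fun h => hv (h ▸ hrS)
    rw [hagree v (fun h => hv h.1), Function.update_of_ne hvr]

lemma key {a : V} : ∀ (k : ℕ) (σ : V → V), σ a = a → Forest σ →
    (roots σ).card = k + 2 →
    (E σ a (roots σ \ {a})).card = (comp σ a).card * Fintype.card V ^ k := by
  intro k
  induction k with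
  | zero =>
    intro σ ha hσ hcard
    have haR : a ∈ roots σ := mem_roots.2 ha
    have h1 : (roots σ \ {a}).card = 1 := by
      rw [Finset.card_sdiff_of_subset (Finset.singleton_subset_iff.2 haR), hcard]
      simp
    obtain ⟨r, hrEq⟩ := Finset.card_eq_one.1 h1
    have hrmem : r ∈ roots σ \ {a} := hrEq ▸ Finset.mem_singleton_self r
    have hrRoots : σ r = r := mem_roots.1 (Finset.mem_sdiff.1 hrmem).1
    have har : a ≠ r := by
      intro h
      exact (Finset.mem_sdiff.1 hrmem).2 (Finset.mem_singleton.2 h.symm)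
    have hroots : roots σ = {a, r} := by
      have h2 : roots σ \ {a} = (roots σ).erase a := by
        exact Finset.sdiff_singleton_eq_erase a (roots σ)
      rw [← Finset.insert_erase haR, ← h2, hrEq]
    rw [hrEq, pow_zero, mul_one]
    exact key_base ha hσ hrRoots har hroots
  | succ k ih =>
    intro σ ha hσ hcard
    classical
    set S := roots σ \ {a} with hS
    have haR : a ∈ roots σ := mem_roots.2 ha
    have hScard : S.card = k + 2 := by
      rw [hS, Finset.card_sdiff_of_subset (Finset.singleton_subset_iff.2 haR), hcard]
      simp
    have hSne : S.Nonempty := Finset.card_pos.1 (by omega)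
    obtain ⟨r, hrS⟩ := hSne
    have hrRoots : σ r = r := mem_roots.1 (Finset.mem_sdiff.1 hrS).1
    have har : a ≠ r := by
      intro h
      exact (Finset.mem_sdiff.1 hrS).2 (Finset.mem_singleton.2 h.symm)
    have hdisj := comp_disjoint ha hrRoots har
    rw [Finset.card_eq_sum_card_fiberwise
      (f := fun f => f r) (t := Finset.univ) (fun x _ => Finset.mem_univ _)]
    have hterm : ∀ w : V, ((E σ a S).filter (fun f => f r = w)).card =
        if w ∈ comp σ r then 0
        else ((comp σ a).card + if w ∈ comp σ a then (comp σ r).card else 0)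
          * Fintype.card V ^ k := by
      intro w
      rw [E_filter_eq' hrS]
      by_cases hw : w ∈ comp σ r
      · rw [if_pos hw, E_update_empty ha hrRoots har hw
          (fun x hx => mem_roots.1 (Finset.mem_sdiff.1 (Finset.mem_sdiff.1 hx).1).1)
          (fun h => (Finset.mem_sdiff.1 h).2 (Finset.mem_singleton_self r))]
        simp
      · rw [if_neg hw]
        have hwr : w ≠ r := fun h => hw (by rw [h]; exact self_mem_comp r)
        have hroots' : roots (Function.update σ r w) = roots σ \ {r} :=
          roots_update hwr
        have hrR : r ∈ roots σ := (Finset.mem_sdiff.1 hrS).1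
        have hcard' : (roots (Function.update σ r w)).card = k + 2 := by
          rw [hroots', Finset.card_sdiff_of_subset (Finset.singleton_subset_iff.2 hrR), hcard]
          simp
        have hha : Function.update σ r w a = a := by
          rw [Function.update_of_ne har]; exact ha
        have hres := ih (Function.update σ r w) hha
          (forest_update hσ hrRoots hw) hcard'
        have hSr : roots (Function.update σ r w) \ {a} = S \ {r} := by
          rw [hroots', hS, sdiff_right_comm]
        rw [hSr] at hres
        rw [hres, card_comp_update ha hrRoots har hw]
    rw [Finset.sum_congr rfl (fun w _ => hterm w)]
    -- arithmetic
    set n := Fintype.card V with hn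
    set cA := (comp σ a).card with hcA
    set cR := (comp σ r).card with hcR
    rw [← Finset.sum_add_sum_compl (comp σ r)]
    have hzero : ∑ w ∈ comp σ r, (if w ∈ comp σ r then 0
        else (cA + if w ∈ comp σ a then cR else 0) * n ^ k) = 0 := by
      apply Finset.sum_eq_zero
      intro w hw
      rw [if_pos hw]
    rw [hzero, zero_add]
    have hstep : ∀ w ∈ (comp σ r)ᶜ, (if w ∈ comp σ r then 0
        else (cA + if w ∈ comp σ a then cR else 0) * n ^ k)
        = cA * n ^ k + (if w ∈ comp σ a then cR * n ^ k else 0) := by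
      intro w hw
      rw [if_neg (Finset.mem_compl.1 hw), add_mul]
      congr 1
      split <;> simp
    rw [Finset.sum_congr rfl hstep, Finset.sum_add_distrib, Finset.sum_const,
      Finset.sum_ite_mem, Finset.card_compl, smul_eq_mul]
    have hAsub : (comp σ r)ᶜ ∩ comp σ a = comp σ a := by
      apply Finset.inter_eq_right.2
      intro x hx
      exact Finset.mem_compl.2 (fun h => (Finset.disjoint_left.1 hdisj hx) h)
    rw [hAsub, Finset.sum_const, smul_eq_mul]
    have hcr : cR ≤ n := by rw [hcR, hn, ← Finset.card_univ]; exact Finset.card_le_univ _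
    calc (n - cR) * (cA * n ^ k) + cA * (cR * n ^ k)
        = (n - cR) * (cA * n ^ k) + cR * (cA * n ^ k) := by ring_nf
      _ = ((n - cR) + cR) * (cA * n ^ k) := by rw [add_mul]
      _ = n * (cA * n ^ k) := by rw [Nat.sub_add_cancel hcr]
      _ = cA * n ^ (k + 1) := by ring


open SimpleGraph

/-- The graph of the parent function `f` with root `a`. -/
def tg (f : V → V) (a : V) : SimpleGraph V :=
  SimpleGraph.fromRel (fun x y => x ≠ a ∧ f x = y)

lemma tg_adj {f : V → V} {a x y : V} :
    (tg f a).Adj x y ↔ x ≠ y ∧ ((x ≠ a ∧ f x = y) ∨ (y ≠ a ∧ f y = x)) := by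
  rw [tg, SimpleGraph.fromRel_adj]

lemma good_fix_ne {f : V → V} {a v : V} (hf : Good f a) (hv : v ≠ a) : f v ≠ v := by
  intro h
  obtain ⟨m, hm⟩ := hf.2 v
  rw [Function.iterate_fixed h] at hm
  exact hv hm

lemma good_after {f : V → V} {a v : V} (hf : Good f a) {m t : ℕ} (h : f^[m] v = a)
    (ht : m ≤ t) : f^[t] v = a := by
  have : f^[t] v = f^[t - m] (f^[m] v) := by
    rw [← Function.iterate_add_apply, Nat.sub_add_cancel ht]
  rw [this, h, Function.iterate_fixed hf.1]

lemma good_no_periodic {f : V → V} {a v : V} (hf : Good f a) {j : ℕ} (hj : 0 < j)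
    (h : f^[j] v = v) : v = a := by
  obtain ⟨m, hm⟩ := hf.2 v
  have hper : f^[j * m] v = v := by
    rw [Function.iterate_mul]
    exact Function.iterate_fixed h m
  rcases Nat.eq_zero_or_pos m with rfl | hmpos
  · exact hm
  · have : m ≤ j * m := Nat.le_mul_of_pos_left m hj
    rw [good_after hf hm this] at hper
    exact hper.symm

lemma tg_adj_parent {f : V → V} {a v : V} (hf : Good f a) (hv : v ≠ a) :
    (tg f a).Adj v (f v) :=
  tg_adj.2 ⟨fun h => good_fix_ne hf hv h.symm, Or.inl ⟨hv, rfl⟩⟩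

lemma tg_reachable {f : V → V} {a : V} (hf : Good f a) (v : V) :
    (tg f a).Reachable v a := by
  obtain ⟨m, hm⟩ := hf.2 v
  induction m generalizing v with
  | zero => rw [show v = a from hm]
  | succ m ih =>
    by_cases hv : v = a
    · rw [hv]
    · exact ((tg_adj_parent hf hv).reachable).trans
        (ih (f v) (by rwa [← Function.iterate_succ_apply]))

lemma tg_connected {f : V → V} {a : V} (hf : Good f a) : (tg f a).Connected := by
  haveI : Nonempty V := ⟨a⟩
  exact ⟨fun u v => (tg_reachable hf u).trans (tg_reachable hf v).symm⟩

instance tgDecAdj (f : V → V) (a : V) : DecidableRel (tg f a).Adj :=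
  fun _ _ => decidable_of_iff _ tg_adj.symm

lemma tg_edgeFinset {f : V → V} {a : V} (hf : Good f a) :
    (tg f a).edgeFinset = (Finset.univ.erase a).image (fun v => s(v, f v)) := by
  ext e
  induction e with
  | _ x y =>
    rw [SimpleGraph.mem_edgeFinset, SimpleGraph.mem_edgeSet, tg_adj, Finset.mem_image]
    constructor
    · rintro ⟨hxy, ⟨hxa, hfx⟩ | ⟨hya, hfy⟩⟩
      · exact ⟨x, Finset.mem_erase.2 ⟨hxa, Finset.mem_univ x⟩, by rw [hfx]⟩
      · exact ⟨y, Finset.mem_erase.2 ⟨hya, Finset.mem_univ y⟩, by rw [hfy, Sym2.eq_swap]⟩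
    · rintro ⟨v, hv, hveq⟩
      have hva : v ≠ a := (Finset.mem_erase.1 hv).1
      rcases Sym2.eq_iff.1 hveq with ⟨rfl, rfl⟩ | ⟨rfl, rfl⟩
      · exact ⟨fun h => good_fix_ne hf hva h.symm, Or.inl ⟨hva, rfl⟩⟩
      · exact ⟨good_fix_ne hf hva, Or.inr ⟨hva, rfl⟩⟩

lemma tg_card_edgeFinset {f : V → V} {a : V} (hf : Good f a) :
    (tg f a).edgeFinset.card = Fintype.card V - 1 := by
  rw [tg_edgeFinset hf, Finset.card_image_of_injOn, Finset.card_erase_of_mem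
    (Finset.mem_univ a), Finset.card_univ]
  intro u hu v hv huv
  have hua : u ≠ a := (Finset.mem_erase.1 hu).1
  rcases Sym2.eq_iff.1 huv with ⟨h1, _⟩ | ⟨h1, h2⟩
  · exact h1
  · -- 2-cycle, impossible
    exfalso
    have : f^[2] u = u := by
      rw [show (2:ℕ) = 1 + 1 from rfl, Function.iterate_add_apply]
      simp only [Function.iterate_one]
      rw [h2, h1]
    exact hua (good_no_periodic hf (by norm_num) this)

/-- The "child" of an edge: its endpoint `x` with the edge being `s(x, f x)`. -/
noncomputable def child (f : V → V) (a : V) (e : Sym2 V) : V :=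
  if h : ∃ x, x ≠ a ∧ e = s(x, f x) then h.choose else a

lemma child_spec {f : V → V} {a : V} {e : Sym2 V}
    (h : ∃ x, x ≠ a ∧ e = s(x, f x)) :
    child f a e ≠ a ∧ e = s(child f a e, f (child f a e)) := by
  rw [child, dif_pos h]
  exact h.choose_spec

lemma exists_child {f : V → V} {a : V} {e : Sym2 V} (he : e ∈ (tg f a).edgeSet) :
    ∃ x, x ≠ a ∧ e = s(x, f x) := by
  induction e with
  | _ x y =>
    rw [SimpleGraph.mem_edgeSet, tg_adj] at he
    rcases he with ⟨hxy, ⟨hxa, hfx⟩ | ⟨hya, hfy⟩⟩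
    · exact ⟨x, hxa, by rw [hfx]⟩
    · exact ⟨y, hya, by rw [hfy, Sym2.eq_swap]⟩

lemma tg_acyclic {f : V → V} {a : V} (hf : Good f a) : (tg f a).IsAcyclic := by
  intro v c hc
  classical
  have hTS : c.support.toFinset = c.support.tail.toFinset := by
    cases c with
    | nil => exact absurd rfl hc.ne_nil
    | cons h q =>
      rw [SimpleGraph.Walk.support_cons]
      simp only [List.toFinset_cons, List.tail_cons]
      exact Finset.insert_eq_self.2 (List.mem_toFinset.2 q.end_mem_support)
  have htail_card : c.support.tail.toFinset.card = c.length := by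
    rw [List.toFinset_card_of_nodup ((SimpleGraph.Walk.isCycle_def _).1 hc).2.2]
    rw [List.length_tail, SimpleGraph.Walk.length_support]
    omega
  have hedge_card : c.edges.toFinset.card = c.length := by
    rw [List.toFinset_card_of_nodup hc.isCircuit.isTrail.edges_nodup,
      SimpleGraph.Walk.length_edges]
  have hchild : ∀ e ∈ c.edges.toFinset, ∃ x, x ≠ a ∧ e = s(x, f x) := by
    intro e he
    exact exists_child (SimpleGraph.Walk.edges_subset_edgeSet c (List.mem_toFinset.1 he))
  have himg : c.edges.toFinset.image (child f a) = c.support.tail.toFinset := by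
    apply Finset.eq_of_subset_of_card_le
    · intro x hx
      obtain ⟨e, he, rfl⟩ := Finset.mem_image.1 hx
      obtain ⟨hne, hespec⟩ := child_spec (hchild e he)
      rw [← hTS, List.mem_toFinset]
      exact SimpleGraph.Walk.fst_mem_support_of_mem_edges c
        (hespec ▸ List.mem_toFinset.1 he)
    · rw [htail_card, Finset.card_image_of_injOn, hedge_card]
      intro e1 h1 e2 h2 heq
      obtain ⟨_, hs1⟩ := child_spec (hchild e1 h1)
      obtain ⟨_, hs2⟩ := child_spec (hchild e2 h2)
      rw [hs1, hs2, heq]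
  have hmem : ∀ x ∈ c.support, x ≠ a ∧ f x ∈ c.support := by
    intro x hx
    have hxT : x ∈ c.support.tail.toFinset := by rw [← hTS]; exact List.mem_toFinset.2 hx
    rw [← himg] at hxT
    obtain ⟨e, he, hce⟩ := Finset.mem_image.1 hxT
    obtain ⟨hne, hespec⟩ := child_spec (hchild e he)
    subst hce
    refine ⟨hne, ?_⟩
    exact SimpleGraph.Walk.snd_mem_support_of_mem_edges c (hespec ▸ List.mem_toFinset.1 he)
  have hstay : ∀ m, f^[m] v ∈ c.support := by
    intro m
    induction m with
    | zero => exact c.start_mem_support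
    | succ m ih =>
      rw [Function.iterate_succ_apply']
      exact (hmem _ ih).2
  obtain ⟨m, hm⟩ := hf.2 v
  exact (hmem _ (hstay m)).1 hm

lemma tg_isTree {f : V → V} {a : V} (hf : Good f a) : (tg f a).IsTree :=
  ⟨tg_connected hf, tg_acyclic hf⟩


/-- The unique path between two vertices of a tree. -/
noncomputable def thePath {G : SimpleGraph V} (hG : G.IsTree) (v w : V) : G.Walk v w :=
  (hG.existsUnique_path v w).choose

lemma thePath_isPath {G : SimpleGraph V} (hG : G.IsTree) (v w : V) :
    (thePath hG v w).IsPath := (hG.existsUnique_path v w).choose_spec.1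

lemma thePath_unique {G : SimpleGraph V} (hG : G.IsTree) {v w : V} (p : G.Walk v w)
    (hp : p.IsPath) : p = thePath hG v w :=
  (hG.existsUnique_path v w).choose_spec.2 p hp

/-- The parent function of a tree, rooted at `a`. -/
noncomputable def par (G : SimpleGraph V) (hG : G.IsTree) (a : V) (v : V) : V :=
  if v = a then a else (thePath hG v a).getVert 1

lemma par_root {G : SimpleGraph V} (hG : G.IsTree) (a : V) : par G hG a a = a :=
  if_pos rfl

lemma par_eq {G : SimpleGraph V} (hG : G.IsTree) {a v : V} (hv : v ≠ a) :
    par G hG a v = (thePath hG v a).getVert 1 := if_neg hv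

lemma par_adj {G : SimpleGraph V} (hG : G.IsTree) {a v : V} (hv : v ≠ a) :
    G.Adj v (par G hG a v) := by
  rw [par_eq hG hv]
  exact SimpleGraph.Walk.adj_snd (SimpleGraph.Walk.not_nil_of_ne hv)

lemma par_path_len {G : SimpleGraph V} (hG : G.IsTree) {a v : V} (hv : v ≠ a) :
    (thePath hG (par G hG a v) a).length < (thePath hG v a).length := by
  have hnil : ¬ (thePath hG v a).Nil := SimpleGraph.Walk.not_nil_of_ne hv
  have htail : (thePath hG v a).tail.IsPath := (thePath_isPath hG v a).tail
  have : (thePath hG v a).tail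
      = (thePath hG ((thePath hG v a).getVert 1) a) := thePath_unique hG _ htail
  rw [par_eq hG hv, ← this]
  have := SimpleGraph.Walk.length_tail_add_one hnil
  omega

lemma par_good {G : SimpleGraph V} (hG : G.IsTree) (a : V) : Good (par G hG a) a := by
  refine ⟨par_root hG a, ?_⟩
  intro v
  generalize hlen : (thePath hG v a).length = L
  induction L using Nat.strong_induction_on generalizing v with
  | _ L ih =>
    by_cases hv : v = a
    · exact ⟨0, hv⟩
    · obtain ⟨m, hm⟩ := ih (thePath hG (par G hG a v) a).length
        (hlen ▸ par_path_len hG hv) (par G hG a v) rfl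
      exact ⟨m + 1, by rw [Function.iterate_succ_apply]; exact hm⟩

lemma tg_par_eq {G : SimpleGraph V} (hG : G.IsTree) (a : V) :
    tg (par G hG a) a = G := by
  classical
  have hgood := par_good hG a
  have hle : tg (par G hG a) a ≤ G := by
    intro x y hxy
    rcases tg_adj.1 hxy with ⟨hne, ⟨hxa, hfx⟩ | ⟨hya, hfy⟩⟩
    · exact hfx ▸ par_adj hG hxa
    · exact (hfy ▸ par_adj hG hya).symm
  have h1 : (tg (par G hG a) a).edgeFinset.card = Fintype.card V - 1 :=
    tg_card_edgeFinset hgood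
  have h2 : G.edgeFinset.card + 1 = Fintype.card V := hG.card_edgeFinset
  rw [← SimpleGraph.edgeFinset_inj]
  apply Finset.eq_of_subset_of_card_le (SimpleGraph.edgeFinset_mono hle)
  omega

/-- The orbit walk from `v` to the root `a`. -/
noncomputable def owalk (f : V → V) (a : V) (hf : Good f a) :
    (m : ℕ) → (v : V) → f^[m] v = a → (tg f a).Walk v a
  | 0, v, h => (SimpleGraph.Walk.nil' v).copy rfl h
  | m + 1, v, h =>
    if hv : v = a then (SimpleGraph.Walk.nil' v).copy rfl hv
    else SimpleGraph.Walk.cons (tg_adj_parent hf hv)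
      (owalk f a hf m (f v) (by rwa [← Function.iterate_succ_apply]))

lemma owalk_support {f : V → V} {a : V} (hf : Good f a) :
    ∀ (m : ℕ) (v : V) (h : f^[m] v = a) (x : V),
      x ∈ (owalk f a hf m v h).support → ∃ j, f^[j] v = x := by
  intro m
  induction m with
  | zero =>
    intro v h x hx
    rw [owalk] at hx
    erw [SimpleGraph.Walk.support_copy] at hx
    simp only [SimpleGraph.Walk.support_copy, SimpleGraph.Walk.support_nil,
      List.mem_singleton] at hx
    exact ⟨0, hx.symm⟩
  | succ m ih =>
    intro v h x hx
    rw [owalk] at hx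
    by_cases hv : v = a
    · rw [dif_pos hv] at hx
      simp only [SimpleGraph.Walk.support_copy, SimpleGraph.Walk.support_nil,
        List.mem_singleton] at hx
      exact ⟨0, hx.symm⟩
    · rw [dif_neg hv] at hx
      rw [SimpleGraph.Walk.support_cons, List.mem_cons] at hx
      rcases hx with rfl | hx
      · exact ⟨0, rfl⟩
      · obtain ⟨j, hj⟩ := ih (f v) _ x hx
        exact ⟨j + 1, by rwa [Function.iterate_succ_apply]⟩

lemma owalk_isPath {f : V → V} {a : V} (hf : Good f a) :
    ∀ (m : ℕ) (v : V) (h : f^[m] v = a), (owalk f a hf m v h).IsPath := by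
  intro m
  induction m with
  | zero =>
    intro v h
    rw [owalk]
    erw [SimpleGraph.Walk.isPath_copy]; exact SimpleGraph.Walk.IsPath.nil
  | succ m ih =>
    intro v h
    rw [owalk]
    by_cases hv : v = a
    · rw [dif_pos hv]
      rw [SimpleGraph.Walk.isPath_copy]; exact SimpleGraph.Walk.IsPath.nil
    · rw [dif_neg hv]
      rw [SimpleGraph.Walk.cons_isPath_iff]
      refine ⟨ih _ _, fun hmem => ?_⟩
      obtain ⟨j, hj⟩ := owalk_support hf m (f v) _ v hmem
      rw [← Function.iterate_succ_apply] at hj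
      exact hv (good_no_periodic hf (Nat.succ_pos j) hj)

lemma owalk_getVert_one {f : V → V} {a : V} (hf : Good f a) (m : ℕ) (v : V)
    (h : f^[m] v = a) (hv : v ≠ a) : (owalk f a hf m v h).getVert 1 = f v := by
  cases m with
  | zero => exact absurd h hv
  | succ m =>
    rw [owalk, dif_neg hv]
    exact SimpleGraph.Walk.snd_cons _ _

lemma par_tg_eq {f : V → V} {a : V} (hf : Good f a) (hT : (tg f a).IsTree) :
    par (tg f a) hT a = f := by
  funext v
  by_cases hv : v = a
  · rw [hv, par_root, hf.1]
  · rw [par_eq hT hv]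
    obtain ⟨m, hm⟩ := hf.2 v
    rw [← thePath_unique hT (owalk f a hf m v hm) (owalk_isPath hf m v hm)]
    exact owalk_getVert_one hf m v hm hv


lemma tg_adj_root {f : V → V} {a b : V} (hf : Good f a) (hb : b ≠ a) :
    ((tg f a).Adj a b ↔ f b = a) := by
  rw [tg_adj]
  constructor
  · rintro ⟨hne, ⟨h, _⟩ | ⟨_, h⟩⟩
    · exact absurd rfl h
    · exact h
  · intro h
    exact ⟨fun hh => hb hh.symm, Or.inr ⟨hb, h⟩⟩

lemma tg_adj_other {f : V → V} {a c d : V} (hf : Good f a) (hc : c ≠ a) (hd : d ≠ a)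
    (hcd : c ≠ d) : ((tg f a).Adj c d ↔ (f c = d ∨ f d = c)) := by
  rw [tg_adj]
  constructor
  · rintro ⟨_, ⟨_, h⟩ | ⟨_, h⟩⟩
    exacts [Or.inl h, Or.inr h]
  · rintro (h | h)
    exacts [⟨hcd, Or.inl ⟨hc, h⟩⟩, ⟨hcd, Or.inr ⟨hd, h⟩⟩]

noncomputable def treeFunEquiv (a b c d : V) (hb : b ≠ a) (hc : c ≠ a) (hd : d ≠ a)
    (hcd : c ≠ d) :
    {G : SimpleGraph V // G.IsTree ∧ G.Adj a b ∧ G.Adj c d} ≃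
    {f : V → V // Good f a ∧ f b = a ∧ (f c = d ∨ f d = c)} where
  toFun := fun G => ⟨par G.1 G.2.1 a, by
    obtain ⟨G, hT, h1, h2⟩ := G
    have hg := par_good hT a
    rw [← tg_par_eq hT a] at h1 h2
    exact ⟨hg, (tg_adj_root hg hb).1 h1, (tg_adj_other hg hc hd hcd).1 h2⟩⟩
  invFun := fun f => ⟨tg f.1 a, by
    obtain ⟨f, hg, h1, h2⟩ := f
    exact ⟨tg_isTree hg, (tg_adj_root hg hb).2 h1, (tg_adj_other hg hc hd hcd).2 h2⟩⟩
  left_inv := fun G => Subtype.ext (by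
    obtain ⟨G, hT, h1, h2⟩ := G
    exact tg_par_eq hT a)
  right_inv := fun f => Subtype.ext (by
    obtain ⟨f, hg, h1, h2⟩ := f
    exact par_tg_eq hg _)

lemma count_one {a b c d : V} (hab : a ≠ b) (hcd : c ≠ d) (hac : a ≠ c) (had : a ≠ d)
    (hbc : b ≠ c) (hbd : b ≠ d) (hn : 4 ≤ Fintype.card V) :
    Nat.card {f : V → V // Good f a ∧ f b = a ∧ f c = d}
      = 2 * Fintype.card V ^ (Fintype.card V - 4) := by
  classical
  set n := Fintype.card V with hn
  set σ : V → V := fun v => if v = b then a else if v = c then d else v with hσ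
  have hσa : σ a = a := by simp only [hσ]; rw [if_neg hab, if_neg hac]
  have hσb : σ b = a := by simp only [hσ]; simp
  have hσc : σ c = d := by simp only [hσ]; rw [if_neg hbc.symm]; simp
  have hσd : σ d = d := by simp only [hσ]; rw [if_neg hbd.symm, if_neg hcd.symm]
  have hσv : ∀ v, v ≠ b → v ≠ c → σ v = v := by
    intro v h1 h2
    simp only [hσ, if_neg h1, if_neg h2]
  have hroots : roots σ = Finset.univ \ {b, c} := by
    ext v
    rw [mem_roots, Finset.mem_sdiff, Finset.mem_insert, Finset.mem_singleton]
    constructor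
    · intro h
      refine ⟨Finset.mem_univ v, ?_⟩
      rintro (h1 | h1)
      · rw [h1, hσb] at h; exact hab h
      · rw [h1, hσc] at h; exact hcd h.symm
    · rintro ⟨-, h⟩
      push_neg at h
      exact hσv v h.1 h.2
  have hforest : Forest σ := by
    intro v
    by_cases h1 : v = b
    · exact ⟨a, hσa, mem_comp.2 ⟨1, by simp [h1, hσb]⟩⟩
    · by_cases h2 : v = c
      · exact ⟨d, hσd, mem_comp.2 ⟨1, by simp [h2, hσc]⟩⟩
      · exact ⟨v, hσv v h1 h2, mem_comp.2 ⟨0, rfl⟩⟩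
  have hcomp : comp σ a = {a, b} := by
    ext v
    rw [mem_comp, Finset.mem_insert, Finset.mem_singleton]
    constructor
    · rintro ⟨m, hm⟩
      by_contra hcon
      push_neg at hcon
      obtain ⟨hva, hvb⟩ := hcon
      by_cases h2 : v = c
      · rw [h2] at hm
        have hCD : ∀ m, σ^[m] c = c ∨ σ^[m] c = d := by
          intro m
          induction m with
          | zero => exact Or.inl rfl
          | succ m ih =>
            rw [Function.iterate_succ_apply']
            rcases ih with h | h <;> rw [h]
            · exact Or.inr hσc
            · exact Or.inr hσd
        rcases hCD m with h | h <;> rw [hm] at h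
        · exact hac h
        · exact had h
      · rw [Function.iterate_fixed (hσv v hvb h2)] at hm
        exact hva hm
    · rintro (rfl | rfl)
      · exact ⟨0, rfl⟩
      · exact ⟨1, by simpa using hσb⟩
  have hrootscard : (roots σ).card = (n - 4) + 2 := by
    rw [hroots, Finset.card_sdiff_of_subset (Finset.subset_univ _), Finset.card_pair hbc,
      Finset.card_univ, ← hn]
    omega
  have hkey := key (a := a) (n - 4) σ hσa hforest hrootscard
  rw [hcomp, Finset.card_pair hab, ← hn] at hkey
  have hE : E σ a (roots σ \ {a}) = Finset.univ.filter
      (fun f : V → V => Good f a ∧ f b = a ∧ f c = d) := by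
    ext f
    rw [mem_E, Finset.mem_filter]
    have hmem : ∀ v : V, v ∉ roots σ \ {a} ↔ (v = a ∨ v = b ∨ v = c) := by
      intro v
      rw [hroots, Finset.mem_sdiff, Finset.mem_sdiff, Finset.mem_insert,
        Finset.mem_singleton, Finset.mem_singleton]
      constructor
      · intro h
        by_cases hva : v = a
        · exact Or.inl hva
        · right
          by_contra hcon
          push_neg at hcon
          exact h ⟨⟨Finset.mem_univ v, fun hh => hh.elim hcon.1 hcon.2⟩, hva⟩
      · rintro (rfl | rfl | rfl) h
        · exact h.2 rfl
        · exact h.1.2 (Or.inl rfl)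
        · exact h.1.2 (Or.inr rfl)
    constructor
    · rintro ⟨hagree, hgood⟩
      refine ⟨Finset.mem_univ f, hgood, ?_, ?_⟩
      · rw [hagree b ((hmem b).2 (Or.inr (Or.inl rfl))), hσb]
      · rw [hagree c ((hmem c).2 (Or.inr (Or.inr rfl))), hσc]
    · rintro ⟨-, hgood, h1, h2⟩
      refine ⟨fun v hv => ?_, hgood⟩
      rcases (hmem v).1 hv with rfl | rfl | rfl
      · rw [hgood.1, hσa]
      · rw [h1, hσb]
      · rw [h2, hσc]
  rw [Nat.card_eq_fintype_card, Fintype.card_subtype, ← hE, hkey]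

end STC

/-- For `n ≥ 4`, the number of spanning trees of `K_n` containing two
vertex-disjoint edges `{a,b}` and `{c,d}` is `4 * n ^ (n - 4)`. -/
theorem spanning_trees_containing_disjoint_edges (n : ℕ) (hn : 4 ≤ n)
    (a b c d : Fin n) (hab : a ≠ b) (hcd : c ≠ d)
    (hac : a ≠ c) (had : a ≠ d) (hbc : b ≠ c) (hbd : b ≠ d) :
    Nat.card {G : SimpleGraph (Fin n) // G.IsTree ∧ G.Adj a b ∧ G.Adj c d}
      = 4 * n ^ (n - 4) := by
  classical
  have hcardV : Fintype.card (Fin n) = n := Fintype.card_fin n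
  rw [Nat.card_congr (STC.treeFunEquiv a b c d hab.symm hac.symm had.symm hcd)]
  have hdisj : Disjoint (fun f : Fin n → Fin n => STC.Good f a ∧ f b = a ∧ f c = d)
      (fun f : Fin n → Fin n => STC.Good f a ∧ f b = a ∧ f d = c) := by
    rw [disjoint_iff_inf_le]
    rintro f ⟨⟨hg, -, h1⟩, ⟨-, -, h2⟩⟩
    have horb : ∀ m, f^[m] c = c ∨ f^[m] c = d := by
      intro m
      induction m with
      | zero => exact Or.inl rfl
      | succ m ih =>
        rw [Function.iterate_succ_apply']
        rcases ih with h | h <;> rw [h]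
        · exact Or.inr h1
        · exact Or.inl h2
    obtain ⟨m, hm⟩ := hg.2 c
    rcases horb m with h | h <;> rw [hm] at h
    · exact hac h
    · exact had h
  have he2 : {f : Fin n → Fin n // STC.Good f a ∧ f b = a ∧ (f c = d ∨ f d = c)}
      ≃ {f : Fin n → Fin n // (STC.Good f a ∧ f b = a ∧ f c = d)
          ∨ (STC.Good f a ∧ f b = a ∧ f d = c)} :=
    Equiv.subtypeEquivRight (by intro f; tauto)
  rw [Nat.card_congr he2, Nat.card_congr (subtypeOrEquiv _ _ hdisj), Nat.card_sum]
  have h1 := STC.count_one hab hcd hac had hbc hbd (by rw [hcardV]; exact hn)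
  have h2 := STC.count_one hab hcd.symm had hac hbd hbc (by rw [hcardV]; exact hn)
  rw [hcardV] at h1 h2
  rw [h1, h2]
  ring
end

section
/- Let q_1, …, q_m be positive reals with q_1 + ⋯ + q_m = n. Let L be the m×m matrix with diagonal entries L_{ii} = n·q_i − q_i² and off-diagonal entries L_{ij} = −q_i·q_j. Then the determinant of the (m−1)×(m−1) matrix obtained by deleting the first row and column of L equals q_1·q_2·⋯·q_m·n^(m−2). -/
open Matrix Finset

/-- The cofactor computation in the proof of Moon's theorem: for positive reals
`q 0, …, q m` (that is, `m + 1 ≥ 2` of them) summing to `n`, the determinant of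
the matrix obtained by deleting the first row and column of the matrix `L` with
`L i i = n * q i - q i ^ 2` and `L i j = -(q i * q j)` for `i ≠ j` equals
`q 0 * ⋯ * q m * n ^ ((m + 1) - 2)`. -/
theorem laplacian_cofactor_det (m : ℕ) (hm : 1 ≤ m) (q : Fin (m + 1) → ℝ)
    (hq : ∀ i, 0 < q i) (n : ℝ) (hsum : ∑ i, q i = n) :
    ((Matrix.of fun i j : Fin (m + 1) =>
        if i = j then n * q i - q i ^ 2 else -(q i * q j)).submatrix
        Fin.succ Fin.succ).det
      = (∏ i, q i) * n ^ (m - 1) := by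
  have hn : 0 < n := by
    rw [← hsum]; exact Finset.sum_pos (fun i _ => hq i) ⟨0, Finset.mem_univ 0⟩
  set v : Fin m → ℝ := fun i => q i.succ with hv
  have key : (Matrix.of fun i j : Fin (m + 1) =>
        if i = j then n * q i - q i ^ 2 else -(q i * q j)).submatrix Fin.succ Fin.succ
      = Matrix.diagonal v * (n • (1 + replicateCol Unit (fun _ => (1:ℝ)) * replicateRow Unit (fun j => -v j / n))) := by
    ext i j
    simp only [Matrix.submatrix_apply, Matrix.of_apply, Matrix.mul_apply, Matrix.diagonal,
      Matrix.smul_apply, Matrix.add_apply, Matrix.one_apply, Matrix.mul_apply,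
      Matrix.replicateCol_apply, Matrix.replicateRow_apply, Matrix.of_apply]
    rw [Finset.sum_eq_single i (by intro b _ hb; simp [Matrix.of_apply, hb.symm]) (by simp)]
    simp only [Matrix.of_apply, if_pos rfl]
    by_cases h : i = j
    · subst h
      have : Fin.succ i = Fin.succ i := rfl
      simp [Fin.succ_inj, smul_eq_mul, Finset.sum_const]
      field_simp
      ring
    · have : ¬ (Fin.succ i = Fin.succ j) := by simp [Fin.succ_inj, h]
      simp [h, this, smul_eq_mul]
      field_simp
      simp only [hv]
  rw [key, det_mul, det_smul, det_one_add_replicateCol_mul_replicateRow, Matrix.det_diagonal]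
  have hsum2 : ∑ j, v j = n - q 0 := by
    rw [Fin.sum_univ_succ] at hsum; simp only [hv]; linarith [hsum]
  have : (fun j => -v j / n) ⬝ᵥ (fun _ => (1:ℝ)) = -(n - q 0)/n := by
    simp only [dotProduct, mul_one, ← neg_div, ← Finset.sum_div, Finset.sum_neg_distrib, hsum2]
  rw [this]
  have hprod : ∏ i, q i = q 0 * ∏ i : Fin m, v i := by
    rw [Fin.prod_univ_succ]
  rw [hprod]
  have hm' : m - 1 + 1 = m := Nat.succ_pred_eq_of_pos hm
  rw [Fintype.card_fin]
  rw [show n ^ m = n ^ (m-1) * n from by rw [← pow_succ, hm']]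
  field_simp
  ring
end

section
/- Let L be the Laplacian matrix of the complete multipartite-type multigraph M on m vertices where vertices i and j are joined by q_i·q_j parallel edges (q_i positive integers summing to n). Then all cofactors of L are equal, and the (1,1)-cofactor equals q_1·⋯·q_m·n^(m−2). -/
open Matrix Finset in
lemma aux_det_rank_one (k : ℕ) (a : ℚ) (ha : a ≠ 0) (v : Fin (k + 1) → ℚ) :
    ((a • (1 : Matrix (Fin (k + 1)) (Fin (k + 1)) ℚ)) -
      Matrix.replicateCol (Fin 1) (fun _ => (1 : ℚ)) * Matrix.replicateRow (Fin 1) v).det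
      = a ^ k * (a - ∑ j, v j) := by
  have h1 : (a • (1 : Matrix (Fin (k + 1)) (Fin (k + 1)) ℚ)) -
      Matrix.replicateCol (Fin 1) (fun _ => (1 : ℚ)) * Matrix.replicateRow (Fin 1) v
      = a • ((1 : Matrix (Fin (k + 1)) (Fin (k + 1)) ℚ) +
          Matrix.replicateCol (Fin 1) (fun _ => -a⁻¹) * Matrix.replicateRow (Fin 1) v) := by
    ext i j
    simp only [Matrix.sub_apply, Matrix.smul_apply, Matrix.one_apply,
      Matrix.mul_apply, Matrix.replicateCol_apply, Matrix.replicateRow_apply, Fin.sum_univ_one,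
      Matrix.add_apply, smul_eq_mul]
    field_simp
    ring
  rw [h1, Matrix.det_smul]
  erw [Matrix.det_one_add_replicateCol_mul_replicateRow (ι := Fin 1)]
  have : v ⬝ᵥ (fun _ => -a⁻¹) = (∑ j, v j) * (-a⁻¹) := by
    simp [dotProduct, Finset.sum_mul]
  rw [this]
  simp only [Fintype.card_fin]
  field_simp
  ring

open Matrix

/-- Let `L` be the Laplacian of the multigraph `M` on `m + 1 ≥ 2` vertices in
which vertices `i` and `j` are joined by `q i * q j` parallel edges, where the
`q i` are positive integers summing to `n`.  Then all cofactors of `L` are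
equal, and the `(1,1)`-cofactor equals `q 0 * ⋯ * q m * n ^ ((m + 1) - 2)`. -/
theorem multigraph_laplacian_cofactors (m n : ℕ) (hm : 1 ≤ m)
    (q : Fin (m + 1) → ℕ) (hq : ∀ i, 0 < q i) (hsum : ∑ i, q i = n)
    (L : Matrix (Fin (m + 1)) (Fin (m + 1)) ℤ)
    (hL : ∀ i j, L i j =
      if i = j then (q i : ℤ) * ((n : ℤ) - q i) else -((q i : ℤ) * q j)) :
    (∀ i j k l : Fin (m + 1),
      (-1 : ℤ) ^ ((i : ℕ) + (j : ℕ)) * (L.submatrix i.succAbove j.succAbove).det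
        = (-1 : ℤ) ^ ((k : ℕ) + (l : ℕ)) *
            (L.submatrix k.succAbove l.succAbove).det) ∧
    (L.submatrix (Fin.succAbove 0) (Fin.succAbove 0)).det
      = (∏ i, (q i : ℤ)) * (n : ℤ) ^ (m - 1) := by
  obtain ⟨m', rfl⟩ : ∃ m'', m = m'' + 1 := ⟨m - 1, by omega⟩
  set c : ℤ := (∏ i, (q i : ℤ)) * (n : ℤ) ^ m' with hc
  have hn : 0 < n := by
    rw [← hsum]
    exact Finset.sum_pos (fun i _ => hq i) ⟨0, Finset.mem_univ 0⟩
  have hsumZ : (∑ j, (q j : ℤ)) = (n : ℤ) := by exact_mod_cast hsum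
  have hsucc0 : (Fin.succAbove (0 : Fin (m' + 1 + 1))) = Fin.succ :=
    Fin.succAbove_zero
  -- the key minor determinant
  have hdet : (L.submatrix Fin.succ Fin.succ).det = c := by
    have hcast : ((L.submatrix Fin.succ Fin.succ).map
        ((Int.castRingHom ℚ) : ℤ → ℚ)) =
        Matrix.diagonal (fun i : Fin (m' + 1) => (q i.succ : ℚ)) *
          (((n : ℚ) • (1 : Matrix (Fin (m' + 1)) (Fin (m' + 1)) ℚ)) -
            Matrix.replicateCol (Fin 1) (fun _ => (1 : ℚ)) *
              Matrix.replicateRow (Fin 1) (fun j : Fin (m' + 1) => (q j.succ : ℚ))) := by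
      ext i j
      rw [Matrix.map_apply, Matrix.submatrix_apply, Matrix.diagonal_mul]
      simp only [Matrix.sub_apply, Matrix.smul_apply, Matrix.one_apply,
        Matrix.mul_apply, Matrix.replicateCol_apply, Matrix.replicateRow_apply, Fin.sum_univ_one,
        smul_eq_mul, Int.coe_castRingHom]
      rw [hL]
      by_cases h : i = j
      · subst h
        rw [if_pos rfl, if_pos rfl]
        push_cast
        ring
      · rw [if_neg (fun hh => h (Fin.succ_inj.mp hh)), if_neg h]
        push_cast
        ring
    have h2 : ((Int.castRingHom ℚ)) (L.submatrix Fin.succ Fin.succ).det = (c : ℚ) := by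
      rw [RingHom.map_det,
        show ((Int.castRingHom ℚ).mapMatrix (L.submatrix Fin.succ Fin.succ))
          = (L.submatrix Fin.succ Fin.succ).map (Int.castRingHom ℚ) from rfl]
      rw [hcast, Matrix.det_mul, Matrix.det_diagonal,
        aux_det_rank_one m' (n : ℚ) (by exact_mod_cast hn.ne') _]
      have hsplit : ((n : ℚ)) - ∑ j : Fin (m' + 1), (q j.succ : ℚ) = (q 0 : ℚ) := by
        have h3 : (∑ j, (q j : ℚ)) = (n : ℚ) := by exact_mod_cast hsum
        rw [Fin.sum_univ_succ] at h3
        linarith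
      rw [hsplit, hc]
      push_cast
      rw [Fin.prod_univ_succ (f := fun i : Fin (m' + 1 + 1) => (q i : ℚ))]
      ring
    simp only [Int.coe_castRingHom] at h2
    exact_mod_cast h2
  have hcpos : 0 < c := by
    rw [hc]
    apply mul_pos
    · exact Finset.prod_pos (fun i _ => by exact_mod_cast hq i)
    · positivity
  -- L is symmetric
  have hLsym : ∀ i j, L i j = L j i := by
    intro i j
    rw [hL, hL]
    by_cases h : i = j
    · subst h; rfl
    · rw [if_neg h, if_neg (Ne.symm h)]; ring
  -- row sums vanish
  have hrow : ∀ i, ∑ j, L i j = 0 := by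
    intro i
    have h1 : ∀ j, L i j = (-(q i : ℤ)) * q j +
        (if i = j then (q i : ℤ) * n else 0) := by
      intro j
      rw [hL]
      by_cases h : i = j
      · subst h; rw [if_pos rfl, if_pos rfl]; ring
      · rw [if_neg h, if_neg h]; ring
    simp_rw [h1]
    rw [Finset.sum_add_distrib, Finset.sum_ite_eq, if_pos (Finset.mem_univ i),
      ← Finset.mul_sum, hsumZ]
    ring
  -- L kills the all-ones vector
  have hones : L *ᵥ (fun _ => (1 : ℤ)) = 0 := by
    funext i
    simpa [Matrix.mulVec, dotProduct] using hrow i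
  -- det L = 0
  have hdetL : L.det = 0 := by
    have h1 : (L.det • (1 : Matrix (Fin (m' + 1 + 1)) (Fin (m' + 1 + 1)) ℤ)) *ᵥ (fun _ => (1 : ℤ)) = 0 := by
      rw [← Matrix.adjugate_mul, ← Matrix.mulVec_mulVec, hones,
        Matrix.mulVec_zero]
    have h2 := congrFun h1 0
    simpa using h2
  -- any vector killed by L is constant
  have hker : ∀ x : Fin (m' + 1 + 1) → ℤ, L *ᵥ x = 0 → ∀ j, x j = x 0 := by
    intro x hx j
    set y : Fin (m' + 1 + 1) → ℤ := fun k => x k - x 0 with hy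
    have hy0 : L *ᵥ y = 0 := by
      have hyx : y = x - (x 0) • (fun _ => (1 : ℤ)) := by
        funext k; simp [hy]
      rw [hyx, Matrix.mulVec_sub, hx, Matrix.mulVec_smul, hones, smul_zero,
        sub_zero]
    have hminor : (L.submatrix Fin.succ Fin.succ) *ᵥ (fun i => y i.succ) = 0 := by
      funext i
      have h0 : ∑ j : Fin (m' + 1 + 1), L i.succ j * y j = (0 : Fin (m' + 1 + 1) → ℤ) i.succ := congrFun hy0 i.succ
      rw [Pi.zero_apply] at h0
      rw [Fin.sum_univ_succ] at h0
      have hy00 : y 0 = 0 := sub_self _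
      rw [hy00, mul_zero, zero_add] at h0
      show ∑ j : Fin (m' + 1), L i.succ j.succ * y j.succ = (0 : Fin (m' + 1) → ℤ) i
      rw [Pi.zero_apply]
      exact h0
    have hz := Matrix.eq_zero_of_mulVec_eq_zero (by rw [hdet]; exact hcpos.ne') hminor
    cases j using Fin.cases with
    | zero => rfl
    | succ i =>
      have := congrFun hz i
      simp only [Pi.zero_apply, hy] at this
      linarith
  -- all entries of the adjugate equal c
  have hadj : ∀ i j, L.adjugate i j = c := by
    have hcol : ∀ i j, L.adjugate i j = L.adjugate 0 j := by
      intro i j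
      have h1 : L *ᵥ (fun k => L.adjugate k j) = 0 := by
        funext r
        have h2 : (L * L.adjugate) r j = (L.det • (1 : Matrix _ _ ℤ)) r j := by
          rw [Matrix.mul_adjugate]
        simp only [Matrix.smul_apply, hdetL, zero_smul, Matrix.mul_apply] at h2
        simpa [Matrix.mulVec, dotProduct] using h2
      exact hker _ h1 i
    have hrow' : ∀ i j, L.adjugate i j = L.adjugate i 0 := by
      intro i j
      have h1 : L *ᵥ (fun k => L.adjugate i k) = 0 := by
        funext r
        have h2 : (L.adjugate * L) i r = (L.det • (1 : Matrix _ _ ℤ)) i r := by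
          rw [Matrix.adjugate_mul]
        simp only [Matrix.smul_apply, hdetL, zero_smul, Matrix.mul_apply] at h2
        have h3 : ∑ k, L r k * L.adjugate i k = 0 := by
          rw [← h2]
          exact Finset.sum_congr rfl fun k _ => by rw [hLsym r k]; ring
        simpa [Matrix.mulVec, dotProduct] using h3
      exact hker _ h1 j
    intro i j
    rw [hcol i j, hrow' 0 j]
    have h4 := Matrix.adjugate_fin_succ_eq_det_submatrix L 0 0
    rw [h4]
    simp only [Fin.val_zero, Nat.add_zero, pow_zero, one_mul, hsucc0]
    exact hdet
  have hkey : ∀ (i j : Fin (m' + 1 + 1)),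
      (-1 : ℤ) ^ ((i : ℕ) + (j : ℕ)) *
        (L.submatrix i.succAbove j.succAbove).det = c := by
    intro i j
    have h1 := Matrix.adjugate_fin_succ_eq_det_submatrix L j i
    rw [hadj j i] at h1
    exact h1.symm
  constructor
  · intro i j k l
    rw [hkey i j, hkey k l]
  · rw [hsucc0]
    simpa [hc] using hdet
end

section
/- Let F be a spanning forest of K_n with components C_1, …, C_m. Contracting each component of F to a single vertex gives a bijection between spanning trees of K_n containing F and spanning trees of the multigraph M on m vertices with |C_i|·|C_j| parallel edges between vertices i and j. -/
open SimpleGraph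

variable {V : Type*}

private lemma pi_ne_of_mem {F : SimpleGraph V} {S : Set (Sym2 V)}
    (hS1 : ∀ e ∈ S, ∃ u v : V, e = s(u, v) ∧ u ≠ v ∧
        F.connectedComponentMk u ≠ F.connectedComponentMk v)
    {x y : V} (hxy : s(x, y) ∈ S) :
    F.connectedComponentMk x ≠ F.connectedComponentMk y := by
  obtain ⟨a, b, hab, -, hne⟩ := hS1 _ hxy
  rw [Sym2.eq_iff] at hab
  rcases hab with ⟨ha, hb⟩ | ⟨ha, hb⟩ <;> subst ha <;> subst hb
  · exact hne
  · exact hne.symm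

private lemma proj_reachable {F T : SimpleGraph V} {S : Set (Sym2 V)}
    {B : Set (Sym2 F.ConnectedComponent)}
    (hT : ∀ a b : V, T.Adj a b → F.Adj a b ∨ s(a, b) ∈ S)
    (hS1 : ∀ e ∈ S, ∃ u v : V, e = s(u, v) ∧ u ≠ v ∧
        F.connectedComponentMk u ≠ F.connectedComponentMk v)
    {u v : V} (w : T.Walk u v)
    (hw : ∀ e ∈ w.edges, e ∈ S → Sym2.map F.connectedComponentMk e ∉ B) :
    ((SimpleGraph.fromEdgeSet (Sym2.map F.connectedComponentMk '' S)).deleteEdges B).Reachable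
      (F.connectedComponentMk u) (F.connectedComponentMk v) := by
  induction w with
  | nil => exact Reachable.refl _
  | @cons a b c h p ih =>
    have hw' : ∀ e ∈ p.edges, e ∈ S → Sym2.map F.connectedComponentMk e ∉ B :=
      fun e he => hw e (by simp [he])
    rcases hT _ _ h with hf | hs
    · rw [ConnectedComponent.sound hf.reachable]; exact ih hw'
    · refine (Adj.reachable ?_).trans (ih hw')
      rw [deleteEdges_adj, fromEdgeSet_adj]
      refine ⟨⟨⟨s(a, b), hs, Sym2.map_pair_eq _ _ _⟩, pi_ne_of_mem hS1 hs⟩, ?_⟩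
      have := hw s(a, b) (by simp) hs
      rwa [Sym2.map_pair_eq] at this

private lemma lift_reachable {F T' : SimpleGraph V} {S : Set (Sym2 V)}
    {B : Set (Sym2 F.ConnectedComponent)}
    (hFT : F ≤ T')
    (hS : ∀ x y : V, s(x, y) ∈ S → x ≠ y →
      Sym2.map F.connectedComponentMk s(x, y) ∉ B → T'.Adj x y)
    {c d : F.ConnectedComponent}
    (w : ((SimpleGraph.fromEdgeSet (Sym2.map F.connectedComponentMk '' S)).deleteEdges B).Walk c d) :
    ∀ u v : V, F.connectedComponentMk u = c → F.connectedComponentMk v = d →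
      T'.Reachable u v := by
  induction w with
  | nil => exact fun u v hu hv => (ConnectedComponent.exact (hu.trans hv.symm)).mono hFT
  | @cons c c₁ d h p ih =>
    intro u v hu hv
    rw [deleteEdges_adj, fromEdgeSet_adj] at h
    obtain ⟨⟨⟨e, heS, heq⟩, hne⟩, hnB⟩ := h
    induction e using Sym2.ind with
    | _ x y =>
    rw [Sym2.map_pair_eq, Sym2.eq_iff] at heq
    rcases heq with ⟨hx, hy⟩ | ⟨hx, hy⟩
    · have h1 : T'.Reachable u x := (ConnectedComponent.exact (hu.trans hx.symm)).mono hFT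
      have hxy : x ≠ y := fun hh => hne (by rw [← hx, ← hy, hh])
      have h2 : T'.Adj x y := hS x y heS hxy (by rw [Sym2.map_pair_eq, hx, hy]; exact hnB)
      exact h1.trans (h2.reachable.trans (ih y v hy hv))
    · have h1 : T'.Reachable u y := (ConnectedComponent.exact (hu.trans hy.symm)).mono hFT
      have hxy : x ≠ y := fun hh => hne (by rw [← hx, ← hy, hh])
      have h2 : T'.Adj y x := (hS x y heS hxy (by
        rw [Sym2.map_pair_eq, hx, hy, Sym2.eq_swap]; exact hnB)).symm
      exact h1.trans (h2.reachable.trans (ih x v hx hv))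

/-- Contraction bijection: for a spanning forest `F` of `K_n`, the map sending a
spanning tree `T ⊇ F` to its set of non-forest edges is a bijection onto the set
of "spanning trees of the contracted multigraph `M`", i.e. sets `S` of edges of
`K_n` joining distinct components of `F`, with at most one edge of `S` between
any given pair of components, whose image under the contraction map (identifying
each component of `F` to a single vertex) is a spanning tree of the quotient. -/
theorem contraction_bijection (n : ℕ) (F : SimpleGraph (Fin n)) (hF : F.IsAcyclic) :
    Set.BijOn (fun T : SimpleGraph (Fin n) => T.edgeSet \ F.edgeSet)
      {T | T.IsTree ∧ F ≤ T}
      {S | (∀ e ∈ S, ∃ u v : Fin n, e = s(u, v) ∧ u ≠ v ∧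
              F.connectedComponentMk u ≠ F.connectedComponentMk v) ∧
           (∀ u v u' v' : Fin n, s(u, v) ∈ S → s(u', v') ∈ S →
              F.connectedComponentMk u = F.connectedComponentMk u' →
              F.connectedComponentMk v = F.connectedComponentMk v' →
              s(u, v) = s(u', v')) ∧
           (SimpleGraph.fromEdgeSet
              (Sym2.map F.connectedComponentMk '' S)).IsTree} := by
  classical
  refine ⟨?_, ?_, ?_⟩
  · -- MapsTo
    rintro T ⟨hT, hFT⟩
    simp only [Set.mem_setOf_eq]
    set S : Set (Sym2 (Fin n)) := T.edgeSet \ F.edgeSet with hSdef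
    -- a helper: F ≤ T minus any edge not in F
    have hle : ∀ e ∈ S, F ≤ T \ SimpleGraph.fromEdgeSet {e} := by
      intro e he a b hab
      rw [sdiff_adj]
      refine ⟨hFT hab, ?_⟩
      rw [fromEdgeSet_adj]
      rintro ⟨hmem, -⟩
      rw [Set.mem_singleton_iff] at hmem
      exact he.2 (hmem ▸ (F.mem_edgeSet.mpr hab))
    have hS1 : ∀ e ∈ S, ∃ u v : Fin n, e = s(u, v) ∧ u ≠ v ∧
        F.connectedComponentMk u ≠ F.connectedComponentMk v := by
      intro e he
      induction e using Sym2.ind with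
      | _ x y =>
      have hadj : T.Adj x y := T.mem_edgeSet.mp he.1
      refine ⟨x, y, rfl, hadj.ne, ?_⟩
      intro hcc
      obtain ⟨p⟩ := ConnectedComponent.exact hcc
      have hreach : (T \ SimpleGraph.fromEdgeSet {s(x, y)}).Reachable x y :=
        (Reachable.mono (hle _ he)) ⟨p⟩
      obtain ⟨u, c, hc, -⟩ :=
        (adj_and_reachable_delete_edges_iff_exists_cycle).mp ⟨hadj, hreach⟩
      exact hT.2 c hc
    have hS2 : ∀ u v u' v' : Fin n, s(u, v) ∈ S → s(u', v') ∈ S →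
        F.connectedComponentMk u = F.connectedComponentMk u' →
        F.connectedComponentMk v = F.connectedComponentMk v' →
        s(u, v) = s(u', v') := by
      intro u v u' v' h1 h2 hcu hcv
      by_contra hne
      have hle' := hle _ h1
      have r1 : (T \ SimpleGraph.fromEdgeSet {s(u, v)}).Reachable u u' :=
        (ConnectedComponent.exact hcu).mono hle'
      have r2 : (T \ SimpleGraph.fromEdgeSet {s(u, v)}).Reachable v' v :=
        ((ConnectedComponent.exact hcv).mono hle').symm
      have adj : (T \ SimpleGraph.fromEdgeSet {s(u, v)}).Adj u' v' := by
        rw [sdiff_adj, fromEdgeSet_adj]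
        refine ⟨T.mem_edgeSet.mp h2.1, ?_⟩
        rintro ⟨hmem, -⟩
        rw [Set.mem_singleton_iff] at hmem
        exact hne hmem.symm
      have hreach : (T \ SimpleGraph.fromEdgeSet {s(u, v)}).Reachable u v :=
        r1.trans (adj.reachable.trans r2)
      obtain ⟨w, c, hc, -⟩ :=
        (adj_and_reachable_delete_edges_iff_exists_cycle).mp ⟨T.mem_edgeSet.mp h1.1, hreach⟩
      exact hT.2 c hc
    have hTadj : ∀ a b : Fin n, T.Adj a b → F.Adj a b ∨ s(a, b) ∈ S := by
      intro a b hab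
      by_cases h : F.Adj a b
      · exact Or.inl h
      · exact Or.inr ⟨T.mem_edgeSet.mpr hab, fun hf => h (F.mem_edgeSet.mp hf)⟩
    refine ⟨hS1, hS2, ?_, ?_⟩
    · -- connectedness of the contracted graph
      have hne : Nonempty (Fin n) := hT.1.nonempty
      haveI : Nonempty F.ConnectedComponent := ⟨F.connectedComponentMk hne.some⟩
      refine ⟨?_⟩
      intro c d
      obtain ⟨x, rfl⟩ := c.exists_rep
      obtain ⟨y, rfl⟩ := d.exists_rep
      obtain ⟨p⟩ := hT.1.preconnected x y
      have := proj_reachable hTadj hS1 p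
        (fun e he hs => Set.notMem_empty (Sym2.map F.connectedComponentMk e))
      rwa [deleteEdges_empty] at this
    · -- acyclicity of the contracted graph
      intro c₀ c hc
      have hne : c.edges ≠ [] := by
        intro h
        have := hc.three_le_length
        rw [← Walk.length_edges, h] at this
        simp at this
      obtain ⟨ε, hε⟩ := List.exists_mem_of_ne_nil _ hne
      have hεE := c.edges_subset_edgeSet hε
      rw [edgeSet_fromEdgeSet] at hεE
      obtain ⟨e, heS, heq⟩ := hεE.1
      obtain ⟨x, y, rfl, hxy, hcc⟩ := hS1 e heS
      rw [Sym2.map_pair_eq] at heq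
      subst heq
      have key := (adj_and_reachable_delete_edges_iff_exists_cycle).mpr ⟨c₀, c, hc, hε⟩
      obtain ⟨w⟩ := key.2
      have w' : ((SimpleGraph.fromEdgeSet (Sym2.map F.connectedComponentMk '' S)).deleteEdges
          {s(F.connectedComponentMk x, F.connectedComponentMk y)}).Walk
          (F.connectedComponentMk x) (F.connectedComponentMk y) := w
      have hSadj : ∀ a b : Fin n, s(a, b) ∈ S → a ≠ b →
          Sym2.map F.connectedComponentMk s(a, b) ∉
            ({s(F.connectedComponentMk x, F.connectedComponentMk y)} :
              Set (Sym2 F.ConnectedComponent)) →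
          (T \ SimpleGraph.fromEdgeSet {s(x, y)}).Adj a b := by
        intro a b hab hne' hnB
        rw [sdiff_adj, fromEdgeSet_adj]
        refine ⟨T.mem_edgeSet.mp hab.1, ?_⟩
        rintro ⟨hmem, -⟩
        rw [Set.mem_singleton_iff] at hmem
        exact hnB (by rw [hmem, Sym2.map_pair_eq]; exact Set.mem_singleton _)
      have hreach : (T \ SimpleGraph.fromEdgeSet {s(x, y)}).Reachable x y :=
        lift_reachable (hle _ heS) hSadj w' x y rfl rfl
      obtain ⟨u, c', hc', -⟩ :=
        (adj_and_reachable_delete_edges_iff_exists_cycle).mp ⟨T.mem_edgeSet.mp heS.1, hreach⟩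
      exact hT.2 c' hc'
  · -- InjOn
    rintro T₁ ⟨h₁, hF₁⟩ T₂ ⟨h₂, hF₂⟩ hset
    simp only at hset
    apply SimpleGraph.edgeSet_inj.mp
    rw [← Set.union_diff_cancel (SimpleGraph.edgeSet_mono hF₁), hset,
      Set.union_diff_cancel (SimpleGraph.edgeSet_mono hF₂)]
  · -- SurjOn
    rintro S ⟨hS1, hS2, hS3⟩
    set T : SimpleGraph (Fin n) := SimpleGraph.fromEdgeSet (F.edgeSet ∪ S) with hTdef
    have hFT : F ≤ T := by
      intro a b hab
      rw [hTdef, fromEdgeSet_adj]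
      exact ⟨Or.inl (F.mem_edgeSet.mpr hab), hab.ne⟩
    have hSF : ∀ e ∈ S, e ∉ F.edgeSet := by
      intro e heS hef
      obtain ⟨x, y, rfl, hxy, hcc⟩ := hS1 e heS
      exact hcc (ConnectedComponent.sound (F.mem_edgeSet.mp hef).reachable)
    have hTE : T.edgeSet = F.edgeSet ∪ S := by
      rw [hTdef, edgeSet_fromEdgeSet, sdiff_eq_self_iff_disjoint, Set.disjoint_left]
      rintro e hdiag hmem
      rcases hmem with hf | hs
      · exact absurd hdiag (F.not_isDiag_of_mem_edgeSet hf)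
      · obtain ⟨x, y, rfl, hxy, -⟩ := hS1 e hs
        exact hxy (Sym2.mk_isDiag_iff.mp hdiag)
    have himg : T.edgeSet \ F.edgeSet = S := by
      rw [hTE, Set.union_diff_left, sdiff_eq_self_iff_disjoint, Set.disjoint_left]
      intro e hf hs
      exact hSF e hs hf
    have hTconn : T.Connected := by
      have hneC : Nonempty F.ConnectedComponent := hS3.1.nonempty
      obtain ⟨c⟩ := hneC
      obtain ⟨v₀, -⟩ := c.exists_rep
      have hneV : Nonempty (Fin n) := ⟨v₀⟩
      refine ⟨?_⟩
      intro u v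
      obtain ⟨w⟩ := hS3.1.preconnected (F.connectedComponentMk u) (F.connectedComponentMk v)
      have w' : ((SimpleGraph.fromEdgeSet (Sym2.map F.connectedComponentMk '' S)).deleteEdges
          (∅ : Set (Sym2 F.ConnectedComponent))).Walk
          (F.connectedComponentMk u) (F.connectedComponentMk v) := by
        rw [deleteEdges_empty]; exact w
      refine lift_reachable hFT ?_ w' u v rfl rfl
      intro x y hxy hne _
      rw [hTdef, fromEdgeSet_adj]
      exact ⟨Or.inr hxy, hne⟩
    have hTacyclic : T.IsAcyclic := by
      intro v₀ c hc
      by_cases hS' : ∃ e ∈ c.edges, e ∈ S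
      · obtain ⟨e, hec, heS⟩ := hS'
        obtain ⟨x, y, rfl, hxy, hcc⟩ := hS1 e heS
        have key := (adj_and_reachable_delete_edges_iff_exists_cycle).mpr ⟨v₀, c, hc, hec⟩
        obtain ⟨w⟩ := key.2
        have hT' : ∀ a b : Fin n, (T \ SimpleGraph.fromEdgeSet {s(x, y)}).Adj a b →
            F.Adj a b ∨ s(a, b) ∈ S := by
          intro a b hab
          rw [sdiff_adj] at hab
          have := hab.1
          rw [hTdef, fromEdgeSet_adj] at this
          rcases this.1 with h | h
          · exact Or.inl (F.mem_edgeSet.mp h)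
          · exact Or.inr h
        have hw : ∀ e' ∈ w.edges, e' ∈ S → Sym2.map F.connectedComponentMk e' ∉
            ({s(F.connectedComponentMk x, F.connectedComponentMk y)} :
              Set (Sym2 F.ConnectedComponent)) := by
          intro e' he' he'S hmem
          have hne : e' ≠ s(x, y) := by
            intro h
            have hE := w.edges_subset_edgeSet he'
            rw [deleteEdges, edgeSet_sdiff] at hE
            apply hE.2
            rw [h]
            exact (SimpleGraph.mem_edgeSet _).mpr ((fromEdgeSet_adj _).mpr ⟨Set.mem_singleton _, hxy⟩)
          obtain ⟨x', y', rfl, hxy', hcc'⟩ := hS1 e' he'S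
          rw [Sym2.map_pair_eq, Set.mem_singleton_iff, Sym2.eq_iff] at hmem
          rcases hmem with ⟨h1, h2⟩ | ⟨h1, h2⟩
          · exact hne (hS2 x' y' x y he'S heS h1 h2)
          · refine hne ((hS2 x' y' y x he'S (Sym2.eq_swap ▸ heS) h1 h2).trans ?_)
            exact Sym2.eq_swap
        have proj := proj_reachable hT' hS1 w hw
        have proj' : ((SimpleGraph.fromEdgeSet (Sym2.map F.connectedComponentMk '' S)) \
            SimpleGraph.fromEdgeSet
              {s(F.connectedComponentMk x, F.connectedComponentMk y)}).Reachable
            (F.connectedComponentMk x) (F.connectedComponentMk y) := proj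
        have Madj : (SimpleGraph.fromEdgeSet (Sym2.map F.connectedComponentMk '' S)).Adj
            (F.connectedComponentMk x) (F.connectedComponentMk y) := by
          rw [fromEdgeSet_adj]
          exact ⟨⟨s(x, y), heS, Sym2.map_pair_eq _ _ _⟩, hcc⟩
        obtain ⟨u, c', hc', -⟩ :=
          (adj_and_reachable_delete_edges_iff_exists_cycle).mp ⟨Madj, proj'⟩
        exact hS3.2 c' hc'
      · push_neg at hS'
        have hall : ∀ e ∈ c.edges, e ∈ F.edgeSet := by
          intro e he
          have hE := c.edges_subset_edgeSet he
          rw [hTE] at hE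
          rcases hE with h | h
          · exact h
          · exact absurd h (hS' e he)
        exact hF _ ((hc.transfer hall))
    refine ⟨T, ⟨⟨hTconn, hTacyclic⟩, hFT⟩, himg⟩
end

section
/- Any matrix L of size m×m (m ≥ 2) over a commutative ring whose row sums and column sums are all zero has all cofactors equal: for any i, j, k, l, (−1)^(i+j)·det(L with row i and column j deleted) = (−1)^(k+l)·det(L with row k and column l deleted). -/
open Matrix Finset

/-- A square matrix whose row sums all vanish has zero determinant. -/
lemma det_eq_zero_of_row_sums_zero {R : Type*} [CommRing R] {n : Type*}
    [DecidableEq n] [Fintype n] [Nonempty n] (N : Matrix n n R)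
    (h : ∀ p, ∑ q, N p q = 0) : N.det = 0 := by
  obtain ⟨c0⟩ := ‹Nonempty n›
  have h0 := Matrix.det_updateCol_sum N c0 (fun _ => (1 : R))
  simp only [one_smul, h] at h0
  rw [← h0]
  exact Matrix.det_eq_zero_of_column_eq_zero c0 (fun p => by simp)

/-- If all row sums of `L` vanish, the adjugate of `L` is constant along its
first index. -/
lemma adjugate_row_const {R : Type*} [CommRing R] {n : Type*}
    [DecidableEq n] [Fintype n] [Nonempty n] (L : Matrix n n R)
    (hrow : ∀ p, ∑ q, L p q = 0) (i j l : n) :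
    L.adjugate j i = L.adjugate l i := by
  rw [Matrix.adjugate_apply, Matrix.adjugate_apply]
  have key : (L.updateRow i (Pi.single j 1 - Pi.single l 1)).det = 0 := by
    apply det_eq_zero_of_row_sums_zero
    intro p
    by_cases hp : p = i
    · subst hp
      simp [Matrix.updateRow_self, Finset.sum_sub_distrib]
    · simp [Matrix.updateRow_ne hp, hrow]
  have expand := Matrix.det_updateRow_add L i (Pi.single j 1 - Pi.single l 1)
    (Pi.single l 1)
  rw [sub_add_cancel, key, zero_add] at expand
  exact expand

/-- A square matrix of size `m + 2 ≥ 2` over a commutative ring whose row sums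
and column sums all vanish has all cofactors equal. -/
theorem cofactors_equal_of_zero_sums {R : Type*} [CommRing R] (m : ℕ)
    (L : Matrix (Fin (m + 2)) (Fin (m + 2)) R)
    (hrow : ∀ i, ∑ j, L i j = 0) (hcol : ∀ j, ∑ i, L i j = 0)
    (i j k l : Fin (m + 2)) :
    (-1 : R) ^ ((i : ℕ) + (j : ℕ)) * (L.submatrix i.succAbove j.succAbove).det
      = (-1 : R) ^ ((k : ℕ) + (l : ℕ)) *
          (L.submatrix k.succAbove l.succAbove).det := by
  have cof : ∀ a b : Fin (m + 2),
      L.adjugate b a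
        = (-1 : R) ^ ((a : ℕ) + (b : ℕ)) * (L.submatrix a.succAbove b.succAbove).det := by
    intro a b
    rw [Matrix.adjugate_fin_succ_eq_det_submatrix, add_comm (a : ℕ)]
  rw [← cof i j, ← cof k l]
  have h1 : L.adjugate j i = L.adjugate l i := adjugate_row_const L hrow i j l
  have h2 : L.adjugate l i = L.adjugate l k := by
    have ht : Lᵀ.adjugate i l = Lᵀ.adjugate k l :=
      adjugate_row_const Lᵀ (fun p => by simpa using hcol p) l i k
    have := Matrix.adjugate_transpose L
    calc L.adjugate l i = Lᵀ.adjugate i l := by rw [← this]; rfl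
      _ = Lᵀ.adjugate k l := ht
      _ = L.adjugate l k := by rw [← this]; rfl
  rw [h1, h2]
end

section
/- Let T be a fixed tree on a k-subset S of the vertices of K_n (1 ≤ k ≤ n). The number of spanning trees of K_n containing all edges of T equals k·n^(n−k−1) when k < n, and equals 1 when k = n. -/
/-- value of the count: `vval n i` = number of acyclic functions with `i` non-root vertices. -/
def vval (n i : ℕ) : ℕ := if i = 0 then 1 else (n - i) * n ^ (i - 1)

lemma D_succ_mul (m i : ℕ) (hi : i < m) :
    (i + 1) * (m.choose (m - (i + 1)) * (m - (i + 1)).factorial)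
      = m.choose (m - i) * (m - i).factorial := by
  have h1 : m.choose (m - (i+1)) * (m - (i+1)).factorial * (i+1).factorial = m.factorial := by
    have := Nat.choose_mul_factorial_mul_factorial (n := m) (k := m - (i+1)) (by omega)
    rwa [show m - (m - (i+1)) = i+1 by omega] at this
  have h2 : m.choose (m - i) * (m - i).factorial * i.factorial = m.factorial := by
    have := Nat.choose_mul_factorial_mul_factorial (n := m) (k := m - i) (by omega)
    rwa [show m - (m - i) = i by omega] at this
  have hfac : (i+1).factorial = (i+1) * i.factorial := Nat.factorial_succ i
  have hpos : 0 < i.factorial := Nat.factorial_pos i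
  apply Nat.eq_of_mul_eq_mul_right hpos
  calc (i + 1) * (m.choose (m - (i + 1)) * (m - (i + 1)).factorial) * i.factorial
      = m.choose (m - (i+1)) * (m - (i+1)).factorial * ((i+1) * i.factorial) := by ring
    _ = m.factorial := by rw [← hfac, h1]
    _ = m.choose (m - i) * (m - i).factorial * i.factorial := h2.symm

lemma NL (n m : ℕ) (hm : 1 ≤ m) (hmn : m ≤ n) :
    ∑ j ∈ Finset.range (m+1), (m.choose j) * j.factorial * (vval n (m - j)) = n ^ m := by
  -- reflect
  have hre : ∑ j ∈ Finset.range (m+1), (m.choose j) * j.factorial * (vval n (m - j))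
      = ∑ i ∈ Finset.range (m+1), (m.choose (m - i)) * (m - i).factorial * (vval n i) := by
    rw [← Finset.sum_range_reflect (fun i => (m.choose (m - i)) * (m - i).factorial * (vval n i)) (m+1)]
    apply Finset.sum_congr rfl
    intro j hj
    rw [Finset.mem_range] at hj
    have h1 : m + 1 - 1 - j = m - j := by omega
    rw [h1, show m - (m - j) = j by omega]
  rw [hre]
  -- cast to ℤ
  have key : (↑(∑ i ∈ Finset.range (m+1), (m.choose (m - i)) * (m - i).factorial * (vval n i)) : ℤ)
      = (n : ℤ) ^ m := by
    push_cast
    rw [Finset.sum_range_succ' (fun i => ((m.choose (m - i) : ℤ)) * ((m - i).factorial : ℤ) * (vval n i : ℤ)) m]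
    have h0 : ((m.choose (m - 0) : ℤ)) * ((m - 0).factorial : ℤ) * (vval n 0 : ℤ)
        = (m.factorial : ℤ) := by
      simp [vval, Nat.choose_self]
    rw [h0]
    set c : ℕ → ℤ := fun i => ((m.choose (m - i)) * (m - i).factorial : ℕ) * (n : ℤ) ^ i with hc
    have hterm : ∀ i ∈ Finset.range m,
        ((m.choose (m - (i+1)) : ℤ)) * ((m - (i+1)).factorial : ℤ) * (vval n (i+1) : ℤ)
        = c (i+1) - c i := by
      intro i hi
      rw [Finset.mem_range] at hi
      have hD := D_succ_mul m i hi
      have hval : (vval n (i+1) : ℤ) = ((n : ℤ) - (i+1)) * (n:ℤ) ^ i := by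
        simp only [vval, if_neg (Nat.succ_ne_zero i)]
        push_cast [Nat.cast_sub (by omega : i + 1 ≤ n)]
        ring_nf
      rw [hval, hc]
      have hDz : ((m.choose (m - i) * (m - i).factorial : ℕ) : ℤ)
          = ((i : ℤ) + 1) * ((m.choose (m - (i+1)) * (m - (i+1)).factorial : ℕ) : ℤ) := by
        rw [← hD]; push_cast; ring
      simp only [hDz]
      push_cast
      ring
    rw [Finset.sum_congr rfl hterm, Finset.sum_range_sub c m]
    have hcm : c m = (n : ℤ) ^ m := by
      simp [hc]
    have hc0 : c 0 = (m.factorial : ℤ) := by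
      simp [hc]
    rw [hcm, hc0]; ring
  exact_mod_cast key

open Finset Function

attribute [local instance] Classical.propDecidable

variable {n : ℕ}

/-- acyclic functions: fixed on `R`, every orbit reaches `R`. -/
def AcyT (n : ℕ) (R : Finset (Fin n)) : Type :=
  {f : Fin n → Fin n // (∀ v ∈ R, f v = v) ∧ ∀ v, ∃ i, f^[i] v ∈ R}

def FixT (n : ℕ) (R : Finset (Fin n)) : Type :=
  {f : Fin n → Fin n // ∀ v ∈ R, f v = v}

noncomputable instance (R : Finset (Fin n)) : Fintype (AcyT n R) := by
  unfold AcyT; infer_instance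

noncomputable instance (R : Finset (Fin n)) : Fintype (FixT n R) := by
  unfold FixT; infer_instance

lemma iter_per {α : Type*} {f : α → α} {v : α} {i : ℕ} (h : f^[i] v = v) :
    ∀ s : ℕ, f^[i * s] v = v := by
  intro s
  induction s with
  | zero => simp
  | succ s ih =>
      have : i * (s + 1) = i * s + i := by ring
      rw [this, Function.iterate_add_apply, h, ih]

lemma iter_pred {α : Type*} (f : α → α) (L : ℕ) (hL : 0 < L) (x : α) :
    f^[L] x = f^[L - 1] (f x) := by
  cases L with
  | zero => omega
  | succ L => rw [Function.iterate_succ_apply]; simp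

/-- periodic points of `f` outside `R`. -/
noncomputable def Per (R : Finset (Fin n)) (f : Fin n → Fin n) : Finset (Fin n) :=
  univ.filter (fun v => v ∉ R ∧ ∃ i, 0 < i ∧ f^[i] v = v)

lemma mem_Per {R : Finset (Fin n)} {f : Fin n → Fin n} {v : Fin n} :
    v ∈ Per R f ↔ v ∉ R ∧ ∃ i, 0 < i ∧ f^[i] v = v := by
  simp [Per]

def DecT (n : ℕ) (R : Finset (Fin n)) : Type :=
  Σ C : {C : Finset (Fin n) // Disjoint C R},
    Equiv.Perm {x // x ∈ C.1} × AcyT n (R ∪ C.1)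

noncomputable instance (R : Finset (Fin n)) : Fintype (DecT n R) := by
  unfold DecT; infer_instance

/-- the reassembly map. -/
noncomputable def theta (R : Finset (Fin n)) (d : DecT n R) : FixT n R :=
  ⟨fun v => if h : v ∈ d.1.1 then (d.2.1 ⟨v, h⟩ : Fin n) else d.2.2.1 v, by
    intro v hv
    have hvC : v ∉ d.1.1 := fun h => (Finset.disjoint_left.1 d.1.2) h hv
    simp only [dif_neg hvC]
    exact d.2.2.2.1 v (by simp [hv])⟩

lemma theta_apply_mem (R : Finset (Fin n)) (d : DecT n R) {v : Fin n} (h : v ∈ d.1.1) :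
    (theta R d).1 v = (d.2.1 ⟨v, h⟩ : Fin n) := by
  show (if h : v ∈ d.1.1 then _ else _) = _
  rw [dif_pos h]

lemma theta_apply_not_mem (R : Finset (Fin n)) (d : DecT n R) {v : Fin n} (h : v ∉ d.1.1) :
    (theta R d).1 v = d.2.2.1 v := by
  show (if h : v ∈ d.1.1 then _ else _) = _
  rw [dif_neg h]

lemma theta_iter_C (R : Finset (Fin n)) (d : DecT n R) :
    ∀ (j : ℕ) (v : Fin n) (h : v ∈ d.1.1),
      ((theta R d).1)^[j] v = ((d.2.1 ^ j) ⟨v, h⟩ : Fin n) := by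
  intro j
  induction j with
  | zero => intro v h; simp
  | succ j ih =>
      intro v h
      rw [Function.iterate_succ_apply', ih v h]
      have hm : ((d.2.1 ^ j) ⟨v, h⟩ : Fin n) ∈ d.1.1 := ((d.2.1 ^ j) ⟨v, h⟩).2
      rw [theta_apply_mem R d hm]
      rw [Subtype.coe_eta, pow_succ', Equiv.Perm.mul_apply]

lemma theta_invariant (R : Finset (Fin n)) (d : DecT n R) {w : Fin n}
    (hw : w ∈ R ∪ d.1.1) : (theta R d).1 w ∈ R ∪ d.1.1 := by
  rcases Finset.mem_union.1 hw with h | h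
  · rw [(theta R d).2 w h]; exact Finset.mem_union_left _ h
  · rw [theta_apply_mem R d h]
    exact Finset.mem_union_right _ (d.2.1 ⟨w, h⟩).2

lemma theta_iter_invariant (R : Finset (Fin n)) (d : DecT n R) {w : Fin n}
    (hw : w ∈ R ∪ d.1.1) (j : ℕ) : ((theta R d).1)^[j] w ∈ R ∪ d.1.1 := by
  induction j with
  | zero => simpa using hw
  | succ j ih => rw [Function.iterate_succ_apply']; exact theta_invariant R d ih

lemma Per_theta (R : Finset (Fin n)) (d : DecT n R) :
    Per R (theta R d).1 = d.1.1 := by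
  ext v
  rw [mem_Per]
  constructor
  · rintro ⟨hvR, i, hi, hper⟩
    by_contra hvC
    have hA : ∀ j, ((theta R d).1)^[j] v ∉ R ∪ d.1.1 := by
      intro j hj
      have hall : ∀ t, ((theta R d).1)^[j + t] v ∈ R ∪ d.1.1 := by
        intro t
        rw [Nat.add_comm, Function.iterate_add_apply]
        exact theta_iter_invariant R d hj t
      have hbig : ((theta R d).1)^[i * (j + 1)] v = v := iter_per hper (j + 1)
      have hge : j ≤ i * (j + 1) := by nlinarith
      have := hall (i * (j + 1) - j)
      rw [show j + (i * (j+1) - j) = i * (j+1) by omega, hbig] at this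
      rcases Finset.mem_union.1 this with h | h
      · exact hvR h
      · exact hvC h
    have hB : ∀ j, (d.2.2.1)^[j] v = ((theta R d).1)^[j] v := by
      intro j
      induction j with
      | zero => rfl
      | succ j ih =>
          rw [Function.iterate_succ_apply', Function.iterate_succ_apply', ih]
          have hnc : ((theta R d).1)^[j] v ∉ d.1.1 := fun h =>
            hA j (Finset.mem_union_right _ h)
          rw [theta_apply_not_mem R d hnc]
    obtain ⟨j, hj⟩ := d.2.2.2.2 v
    rw [hB j] at hj
    exact hA j hj
  · intro hv
    refine ⟨fun hR => (Finset.disjoint_left.1 d.1.2) hv hR, orderOf (d.2.1), ?_, ?_⟩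
    · exact orderOf_pos d.2.1
    · rw [theta_iter_C R d _ v hv, pow_orderOf_eq_one]
      rfl

lemma theta_injective (R : Finset (Fin n)) : Function.Injective (theta R) := by
  rintro ⟨⟨C₁, hC₁⟩, σ₁, g₁⟩ ⟨⟨C₂, hC₂⟩, σ₂, g₂⟩ h
  have hf : (theta R ⟨⟨C₁, hC₁⟩, σ₁, g₁⟩).1 = (theta R ⟨⟨C₂, hC₂⟩, σ₂, g₂⟩).1 := by rw [h]
  have hC : C₁ = C₂ := by
    have p1 := Per_theta R ⟨⟨C₁, hC₁⟩, σ₁, g₁⟩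
    have p2 := Per_theta R ⟨⟨C₂, hC₂⟩, σ₂, g₂⟩
    simp only at p1 p2
    rw [← p1, ← p2, hf]
  subst hC
  have hσ : σ₁ = σ₂ := by
    apply Equiv.ext
    intro x
    apply Subtype.ext
    have h1 : (theta R ⟨⟨C₁, hC₁⟩, σ₁, g₁⟩).1 x = (σ₁ x : Fin n) :=
      theta_apply_mem R ⟨⟨C₁, hC₁⟩, σ₁, g₁⟩ x.2
    have h2 : (theta R ⟨⟨C₁, hC₂⟩, σ₂, g₂⟩).1 x = (σ₂ x : Fin n) :=
      theta_apply_mem R ⟨⟨C₁, hC₂⟩, σ₂, g₂⟩ x.2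
    rw [← h1, hf, h2]
  have hg : g₁ = g₂ := by
    apply Subtype.ext
    funext v
    by_cases hv : v ∈ C₁
    · rw [g₁.2.1 v (Finset.mem_union_right _ hv), g₂.2.1 v (Finset.mem_union_right _ hv)]
    · have h1 : (theta R ⟨⟨C₁, hC₁⟩, σ₁, g₁⟩).1 v = g₁.1 v :=
        theta_apply_not_mem R ⟨⟨C₁, hC₁⟩, σ₁, g₁⟩ hv
      have h2 : (theta R ⟨⟨C₁, hC₂⟩, σ₂, g₂⟩).1 v = g₂.1 v :=
        theta_apply_not_mem R ⟨⟨C₁, hC₂⟩, σ₂, g₂⟩ hv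
      rw [← h1, hf, h2]
  subst hσ; subst hg
  rfl

lemma exists_iter_mem (R : Finset (Fin n)) (f : FixT n R) (v : Fin n) :
    ∃ j, f.1^[j] v ∈ R ∪ Per R f.1 := by
  obtain ⟨a, b, hne, hab⟩ := Finite.exists_ne_map_eq_of_infinite (fun i : ℕ => f.1^[i] v)
  rcases Nat.lt_or_ge a b with hlt | hge
  · refine ⟨a, ?_⟩
    by_cases hR : f.1^[a] v ∈ R
    · exact Finset.mem_union_left _ hR
    · refine Finset.mem_union_right _ (mem_Per.2 ⟨hR, b - a, by omega, ?_⟩)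
      rw [← Function.iterate_add_apply, show b - a + a = b by omega, ← hab]
  · have hlt : b < a := by omega
    refine ⟨b, ?_⟩
    by_cases hR : f.1^[b] v ∈ R
    · exact Finset.mem_union_left _ hR
    · refine Finset.mem_union_right _ (mem_Per.2 ⟨hR, a - b, by omega, ?_⟩)
      rw [← Function.iterate_add_apply, show a - b + b = a by omega, hab]

lemma theta_surjective (R : Finset (Fin n)) : Function.Surjective (theta R) := by
  intro f
  set C : Finset (Fin n) := Per R f.1 with hCdef
  have hdisj : Disjoint C R := by
    rw [Finset.disjoint_left]
    intro a ha haR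
    exact (mem_Per.1 ha).1 haR
  have hmaps : ∀ v ∈ C, f.1 v ∈ C := by
    intro v hv
    obtain ⟨hvR, i, hi, hper⟩ := mem_Per.1 hv
    refine mem_Per.2 ⟨?_, i, hi, ?_⟩
    · intro hR
      have hfix : ∀ j, f.1^[j] (f.1 v) = f.1 v := by
        intro j
        induction j with
        | zero => rfl
        | succ j ih => rw [Function.iterate_succ_apply', ih, f.2 _ hR]
      have hveq : v = f.1 v := by
        conv_lhs => rw [← hper]
        rw [iter_pred f.1 i hi v, hfix (i - 1)]
      exact hvR (hveq ▸ hR)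
    · rw [← Function.iterate_succ_apply, Function.iterate_succ_apply', hper]
  have hinj : ∀ a ∈ C, ∀ b ∈ C, f.1 a = f.1 b → a = b := by
    intro a ha b hb hab
    obtain ⟨_, i, hi, hpa⟩ := mem_Per.1 ha
    obtain ⟨_, j, hj, hpb⟩ := mem_Per.1 hb
    have hpa' : f.1^[i * j] a = a := iter_per hpa j
    have hpb' : f.1^[i * j] b = b := by
      rw [show i * j = j * i by ring]; exact iter_per hpb i
    have hij : 0 < i * j := by positivity
    calc a = f.1^[i * j] a := hpa'.symm
      _ = f.1^[i * j - 1] (f.1 a) := iter_pred f.1 _ hij a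
      _ = f.1^[i * j - 1] (f.1 b) := by rw [hab]
      _ = f.1^[i * j] b := (iter_pred f.1 _ hij b).symm
      _ = b := hpb'
  let resf : {x // x ∈ C} → {x // x ∈ C} := fun x => ⟨f.1 x, hmaps x x.2⟩
  have hresinj : Function.Injective resf := by
    intro a b hab
    exact Subtype.ext (hinj a a.2 b b.2 (congrArg Subtype.val hab))
  let σ : Equiv.Perm {x // x ∈ C} :=
    Equiv.ofBijective resf ((Finite.injective_iff_bijective).1 hresinj)
  let gfun : Fin n → Fin n := fun v => if v ∈ C then v else f.1 v
  have hgfix : ∀ v ∈ R ∪ C, gfun v = v := by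
    intro v hv
    rcases Finset.mem_union.1 hv with h | h
    · show (if v ∈ C then v else f.1 v) = v
      split
      · rfl
      · exact f.2 v h
    · show (if v ∈ C then v else f.1 v) = v
      rw [if_pos h]
  have hacy : ∀ v, ∃ j, gfun^[j] v ∈ R ∪ C := by
    intro v
    have hex := exists_iter_mem R f v
    have hj : f.1^[Nat.find hex] v ∈ R ∪ C := Nat.find_spec hex
    have hmin : ∀ t, t < Nat.find hex → f.1^[t] v ∉ R ∪ C :=
      fun t ht => Nat.find_min hex ht
    refine ⟨Nat.find hex, ?_⟩
    have htrack : ∀ t, t ≤ Nat.find hex → gfun^[t] v = f.1^[t] v := by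
      intro t ht
      induction t with
      | zero => rfl
      | succ t ih =>
          rw [Function.iterate_succ_apply', Function.iterate_succ_apply',
            ih (by omega)]
          have hnc : f.1^[t] v ∉ C := by
            intro hc
            exact hmin t (by omega) (Finset.mem_union_right _ hc)
          show (if f.1^[t] v ∈ C then _ else f.1 _) = _
          rw [if_neg hnc]
    rw [htrack _ le_rfl]
    exact hj
  refine ⟨⟨⟨C, hdisj⟩, σ, ⟨gfun, hgfix, hacy⟩⟩, ?_⟩
  apply Subtype.ext
  funext v
  show (if h : v ∈ C then (σ ⟨v, h⟩ : Fin n) else gfun v) = f.1 v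
  by_cases hv : v ∈ C
  · rw [dif_pos hv]
    rfl
  · rw [dif_neg hv]
    show (if v ∈ C then v else f.1 v) = f.1 v
    rw [if_neg hv]

lemma card_FixT (R : Finset (Fin n)) : Nat.card (FixT n R) = n ^ (Rᶜ.card) := by
  have e : FixT n R ≃ ({x // x ∈ Rᶜ} → Fin n) :=
    { toFun := fun f x => f.1 x.1
      invFun := fun g => ⟨fun v => if h : v ∈ Rᶜ then g ⟨v, h⟩ else v, by
        intro v hv
        have hv' : v ∉ Rᶜ := by simp [hv]
        exact dif_neg hv'⟩
      left_inv := by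
        intro f
        apply Subtype.ext
        funext v
        show (if h : v ∈ Rᶜ then f.1 v else v) = f.1 v
        by_cases hv : v ∈ Rᶜ
        · exact dif_pos hv
        · rw [dif_neg hv]
          exact (f.2 v (by simpa using hv)).symm
      right_inv := by
        intro g
        funext x
        exact dif_pos x.2 }
  rw [Nat.card_congr e, Nat.card_eq_fintype_card, Fintype.card_fun, Fintype.card_coe,
    Fintype.card_fin]

lemma card_theta (R : Finset (Fin n)) : Nat.card (DecT n R) = Nat.card (FixT n R) :=
  Nat.card_congr (Equiv.ofBijective (theta R) ⟨theta_injective R, theta_surjective R⟩)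

lemma card_DecT (R : Finset (Fin n)) :
    Nat.card (DecT n R)
      = ∑ C ∈ Rᶜ.powerset, (C.card).factorial * Nat.card (AcyT n (R ∪ C)) := by
  rw [Nat.card_eq_fintype_card]
  unfold DecT
  rw [Fintype.card_sigma]
  have hmem : ∀ C : Finset (Fin n), C ∈ Rᶜ.powerset ↔ Disjoint C R := by
    intro C
    rw [Finset.mem_powerset]
    constructor
    · intro h
      rw [Finset.disjoint_left]
      intro a ha haR
      simpa [haR] using h ha
    · intro h
      intro a ha
      simp only [Finset.mem_compl]
      exact fun haR => (Finset.disjoint_left.1 h) ha haR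
  have hc : ∀ i : {C : Finset (Fin n) // Disjoint C R},
      Fintype.card (Equiv.Perm {x // x ∈ i.1} × AcyT n (R ∪ i.1))
        = (i.1.card).factorial * Nat.card (AcyT n (R ∪ i.1)) := by
    intro i
    rw [Fintype.card_prod, Fintype.card_perm, Fintype.card_coe, Nat.card_eq_fintype_card]
  rw [Finset.sum_congr rfl (fun i _ => hc i)]
  exact (Finset.sum_subtype Rᶜ.powerset hmem
    (fun C => (C.card).factorial * Nat.card (AcyT n (R ∪ C)))).symm

theorem acy_card (n : ℕ) : ∀ m : ℕ, ∀ R : Finset (Fin n), Rᶜ.card = m →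
    Nat.card (AcyT n R) = vval n m := by
  intro m
  induction m using Nat.strong_induction_on with
  | _ m IH =>
    intro R hR
    rcases Nat.eq_zero_or_pos m with hm0 | hmpos
    · subst hm0
      have h2 : Rᶜ = ∅ := Finset.card_eq_zero.1 hR
      have hRuniv : R = Finset.univ := by
        rw [← compl_compl R, h2, Finset.compl_empty]
      subst hRuniv
      rw [vval, if_pos rfl]
      rw [Nat.card_eq_one_iff_unique]
      constructor
      · constructor
        intro f g
        apply Subtype.ext
        funext v
        rw [f.2.1 v (Finset.mem_univ v), g.2.1 v (Finset.mem_univ v)]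
      · exact ⟨⟨id, fun v _ => rfl, fun v => ⟨0, Finset.mem_univ v⟩⟩⟩
    · -- main step
      have hmn : m ≤ n := by
        rw [← hR]
        have := Finset.card_le_univ (Rᶜ)
        simpa using this
      -- the master identity from the bijection
      have master : (n : ℕ) ^ m
          = ∑ C ∈ Rᶜ.powerset, (C.card).factorial * Nat.card (AcyT n (R ∪ C)) := by
        rw [← card_DecT, card_theta, card_FixT, hR]
      -- rewrite each non-empty term with IH
      have hterm : ∀ C ∈ Rᶜ.powerset, C ≠ ∅ →
          (C.card).factorial * Nat.card (AcyT n (R ∪ C))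
            = (C.card).factorial * vval n (m - C.card) := by
        intro C hC hCne
        have hsub : C ⊆ Rᶜ := Finset.mem_powerset.1 hC
        have hdisj : Disjoint R C := by
          rw [Finset.disjoint_right]
          intro a ha
          have := hsub ha
          simpa using this
        have hcard : ((R ∪ C)ᶜ).card = m - C.card := by
          rw [Finset.card_compl, Finset.card_union_of_disjoint hdisj]
          rw [Finset.card_compl] at hR
          have hcle : C.card ≤ Rᶜ.card := Finset.card_le_card hsub
          omega
        have hpos : 0 < C.card := Finset.card_pos.2 (Finset.nonempty_iff_ne_empty.2 hCne)
        rw [IH (m - C.card) (by omega) (R ∪ C) hcard]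
      -- numeric identity
      have hnum : (n : ℕ) ^ m
          = ∑ C ∈ Rᶜ.powerset, (C.card).factorial * vval n (m - C.card) := by
        rw [← NL n m hmpos hmn]
        rw [Finset.sum_powerset Rᶜ (fun C => (C.card).factorial * vval n (m - C.card))]
        rw [hR]
        apply Finset.sum_congr rfl
        intro j hj
        rw [Finset.mem_range] at hj
        have : ∀ C ∈ Finset.powersetCard j Rᶜ,
            (C.card).factorial * vval n (m - C.card) = j.factorial * vval n (m - j) := by
          intro C hC
          rw [(Finset.mem_powersetCard.1 hC).2]
        rw [Finset.sum_congr rfl this, Finset.sum_const, Finset.card_powersetCard, hR,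
          smul_eq_mul, mul_comm (m.choose j), mul_assoc]
        ring
      -- split off the empty set
      have hempty_mem : (∅ : Finset (Fin n)) ∈ Rᶜ.powerset := by simp
      have split1 : ∑ C ∈ Rᶜ.powerset, (C.card).factorial * Nat.card (AcyT n (R ∪ C))
          = Nat.card (AcyT n R)
            + ∑ C ∈ Rᶜ.powerset.erase ∅, (C.card).factorial * Nat.card (AcyT n (R ∪ C)) := by
        rw [← Finset.add_sum_erase _ _ hempty_mem]
        simp
      have split2 : ∑ C ∈ Rᶜ.powerset, (C.card).factorial * vval n (m - C.card)
          = vval n m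
            + ∑ C ∈ Rᶜ.powerset.erase ∅, (C.card).factorial * vval n (m - C.card) := by
        rw [← Finset.add_sum_erase _ _ hempty_mem]
        simp
      have htails : ∑ C ∈ Rᶜ.powerset.erase ∅, (C.card).factorial * Nat.card (AcyT n (R ∪ C))
          = ∑ C ∈ Rᶜ.powerset.erase ∅, (C.card).factorial * vval n (m - C.card) := by
        apply Finset.sum_congr rfl
        intro C hC
        exact hterm C (Finset.mem_of_mem_erase hC) (Finset.ne_of_mem_erase hC)
      have := master
      rw [split1, htails] at this
      rw [hnum, split2] at this
      omega

section GraphSide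

open SimpleGraph

variable {n : ℕ} {S : Finset (Fin n)} {F : SimpleGraph (Fin n)}

/-- lift a walk of `F` (whose edges lie in `S`) to the induced graph on `S`. -/
lemma liftWalk (hFS : ∀ u v, F.Adj u v → u ∈ S ∧ v ∈ S) :
    ∀ {a b : Fin n} (p : F.Walk a b) (ha : a ∈ S) (hb : b ∈ S),
      ∃ q : (SimpleGraph.induce (↑S : Set (Fin n)) F).Walk ⟨a, ha⟩ ⟨b, hb⟩,
        q.map (SimpleGraph.Embedding.induce (↑S : Set (Fin n))).toHom = p := by
  intro a b p
  induction p with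
  | nil => intro ha _; exact ⟨SimpleGraph.Walk.nil, rfl⟩
  | @cons a c b hadj p ih =>
      intro ha hb
      have hc : c ∈ S := (hFS a c hadj).2
      obtain ⟨q, hq⟩ := ih hc hb
      refine ⟨SimpleGraph.Walk.cons (by exact hadj) q, ?_⟩
      subst hq; rfl

lemma F_acyclic (hFS : ∀ u v, F.Adj u v → u ∈ S ∧ v ∈ S)
    (hFtree : (SimpleGraph.induce (↑S : Set (Fin n)) F).IsTree) : F.IsAcyclic := by
  intro v c hc
  have hv : v ∈ S := by
    cases c with
    | nil => exact absurd hc (SimpleGraph.Walk.IsCycle.not_of_nil)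
    | cons hadj p => exact (hFS _ _ hadj).1
  obtain ⟨q, hq⟩ := liftWalk hFS c hv hv
  have hqc : q.IsCycle := by
    rw [← SimpleGraph.Walk.map_isCycle_iff_of_injective
      (p := q) (f := (SimpleGraph.Embedding.induce (↑S : Set (Fin n))).toHom)
      Subtype.val_injective, hq]
    exact hc
  exact hFtree.IsAcyclic q hqc

/-- between two vertices of `S` there is a path staying inside `S`, in any graph `G ≥ F`. -/
lemma S_path (hFS : ∀ u v, F.Adj u v → u ∈ S ∧ v ∈ S)
    (hFtree : (SimpleGraph.induce (↑S : Set (Fin n)) F).IsTree)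
    {G : SimpleGraph (Fin n)} (hFG : F ≤ G) {s t : Fin n} (hs : s ∈ S) (ht : t ∈ S) :
    ∃ p : G.Walk s t, p.IsPath ∧ (∀ x ∈ p.support, x ∈ S) ∧ (∀ e ∈ p.edges, e ∈ F.edgeSet) := by
  obtain ⟨q⟩ := hFtree.isConnected ⟨s, hs⟩ ⟨t, ht⟩
  -- map to F
  let qF := q.map (SimpleGraph.Embedding.induce (↑S : Set (Fin n))).toHom
  have hsupF : ∀ x ∈ qF.support, x ∈ S := by
    intro x hx
    rw [SimpleGraph.Walk.support_map] at hx
    obtain ⟨y, _, rfl⟩ := List.mem_map.1 hx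
    exact y.2
  -- map to G
  let qG := qF.mapLe hFG
  have hsupG : ∀ x ∈ qG.support, x ∈ S := by
    intro x hx
    apply hsupF
    rw [← SimpleGraph.Walk.support_mapLe_eq_support hFG qF]; exact hx
  have hedgeG : ∀ e ∈ qG.edges, e ∈ F.edgeSet := by
    intro e he
    have : e ∈ qF.edges := by
      rw [← SimpleGraph.Walk.edges_mapLe_eq_edges hFG qF]; exact he
    exact qF.edges_subset_edgeSet this
  refine ⟨qG.bypass, SimpleGraph.Walk.bypass_isPath qG, ?_, ?_⟩
  · intro x hx
    exact hsupG x (SimpleGraph.Walk.support_bypass_subset qG hx)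
  · intro e he
    exact hedgeG e (SimpleGraph.Walk.edges_bypass_subset qG he)

end GraphSide

section PhiSide

open SimpleGraph

variable {n : ℕ} {S : Finset (Fin n)} {F : SimpleGraph (Fin n)}

/-- height of a vertex: number of steps to reach `S`. -/
noncomputable def ht (S : Finset (Fin n)) (f : AcyT n S) (v : Fin n) : ℕ :=
  Nat.find (f.2.2 v)

lemma ht_eq_zero_iff {f : AcyT n S} {v : Fin n} : ht S f v = 0 ↔ v ∈ S := by
  unfold ht
  rw [Nat.find_eq_zero]
  simp

lemma ht_pos {f : AcyT n S} {v : Fin n} (hv : v ∉ S) : 0 < ht S f v := by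
  rcases Nat.eq_zero_or_pos (ht S f v) with h | h
  · exact absurd (ht_eq_zero_iff.1 h) hv
  · exact h

lemma no_fix {f : AcyT n S} {v : Fin n} (hv : v ∉ S) : f.1 v ≠ v := by
  intro hfix
  obtain ⟨i, hi⟩ := f.2.2 v
  have hall : ∀ j, f.1^[j] v = v := by
    intro j
    induction j with
    | zero => rfl
    | succ j ih => rw [Function.iterate_succ_apply', ih, hfix]
  rw [hall i] at hi
  exact hv hi

lemma ht_f {f : AcyT n S} {v : Fin n} (hv : v ∉ S) :
    ht S f (f.1 v) + 1 = ht S f v := by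
  have h0 : 0 < ht S f v := ht_pos hv
  have hs : f.1^[ht S f v] v ∈ S := Nat.find_spec (f.2.2 v)
  obtain ⟨j, hj⟩ : ∃ j, ht S f v = j + 1 := ⟨ht S f v - 1, by omega⟩
  rw [hj, Function.iterate_succ_apply] at hs
  have h1 : ht S f (f.1 v) ≤ j := Nat.find_le hs
  have h2 : ht S f v ≤ ht S f (f.1 v) + 1 := by
    apply Nat.find_le
    rw [Function.iterate_succ_apply]
    exact Nat.find_spec (f.2.2 (f.1 v))
  omega

/-- the spanning graph built from `F` and an acyclic parent function. -/
def Phi (S : Finset (Fin n)) (F : SimpleGraph (Fin n)) (f : AcyT n S) :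
    SimpleGraph (Fin n) where
  Adj u w := (F.Adj u w ∨ (u ∉ S ∧ f.1 u = w) ∨ (w ∉ S ∧ f.1 w = u)) ∧ u ≠ w
  symm := by
    constructor
    intro u w ⟨h, hne⟩
    refine ⟨?_, hne.symm⟩
    rcases h with h | h | h
    · exact Or.inl h.symm
    · exact Or.inr (Or.inr h)
    · exact Or.inr (Or.inl h)
  loopless := by constructor; intro u ⟨_, hne⟩; exact hne rfl

lemma F_le_Phi {f : AcyT n S} : F ≤ Phi S F f := by
  intro u w h
  exact ⟨Or.inl h, h.ne⟩

lemma Phi_parent_adj {f : AcyT n S} {v : Fin n} (hv : v ∉ S) :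
    (Phi S F f).Adj v (f.1 v) :=
  ⟨Or.inr (Or.inl ⟨hv, rfl⟩), fun h => no_fix hv h.symm⟩

lemma Phi_adj_cases {f : AcyT n S} {u w : Fin n} (h : (Phi S F f).Adj u w) :
    F.Adj u w ∨ (u ∉ S ∧ f.1 u = w) ∨ (w ∉ S ∧ f.1 w = u) := h.1

/-- child has bigger height -/
lemma ht_child {f : AcyT n S} {v w : Fin n} (hw : w ∉ S) (hfw : f.1 w = v) :
    ht S f v + 1 = ht S f w := by
  rw [← hfw]
  exact (ht_f hw)

end PhiSide

section PhiTree

open SimpleGraph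

variable {n : ℕ} {S : Finset (Fin n)} {F : SimpleGraph (Fin n)}

lemma cycle_two_nbrs {V : Type*} {G : SimpleGraph V} {v : V} (c : G.Walk v v)
    (hc : c.IsCycle) :
    ∃ a b, a ≠ b ∧ G.Adj v a ∧ G.Adj v b ∧ a ∈ c.support ∧ b ∈ c.support := by
  cases c with
  | nil => exact absurd hc SimpleGraph.Walk.IsCycle.not_of_nil
  | @cons _ a _ hadj p =>
      obtain ⟨hp, he⟩ := (SimpleGraph.Walk.cons_isCycle_iff p hadj).1 hc
      obtain ⟨x, q, h', heq⟩ := SimpleGraph.Walk.exists_cons_eq_concat hadj p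
      have hedges : s(v,a) :: p.edges = q.edges ++ [s(x,v)] := by
        have h2 := congrArg SimpleGraph.Walk.edges heq
        rw [SimpleGraph.Walk.edges_cons, SimpleGraph.Walk.edges_concat,
          List.concat_eq_append] at h2
        exact h2
      have hlen3 := hc.three_le_length
      have hlenc : p.length + 1 ≥ 3 := by
        simpa using hlen3
      cases hqe : q.edges with
      | nil =>
          rw [hqe] at hedges
          simp at hedges
          have : p.edges.length = 0 := by rw [SimpleGraph.Walk.length_edges]; exact hedges.2.length_eq_zero
          rw [SimpleGraph.Walk.length_edges] at this
          omega
      | cons e t =>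
          rw [hqe] at hedges
          simp only [List.cons_append, List.cons.injEq] at hedges
          have hxvp : s(x,v) ∈ p.edges := by
            rw [hedges.2]
            simp
          have hax : a ≠ x := by
            intro hax
            apply he
            have : s(v,a) = s(x,v) := by
              rw [← hax]
              exact Sym2.eq_swap
            rwa [this]
          refine ⟨a, x, hax, hadj, h'.symm, ?_, ?_⟩
          · rw [SimpleGraph.Walk.support_cons]
            exact List.mem_cons_of_mem _ p.start_mem_support
          · rw [SimpleGraph.Walk.support_cons]
            exact List.mem_cons_of_mem _
              (SimpleGraph.Walk.fst_mem_support_of_mem_edges p hxvp)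

lemma Phi_acyclic (hFS : ∀ u v, F.Adj u v → u ∈ S ∧ v ∈ S)
    (hFtree : (SimpleGraph.induce (↑S : Set (Fin n)) F).IsTree)
    (f : AcyT n S) : (Phi S F f).IsAcyclic := by
  intro u0 c hc
  have hne : c.support.toFinset.Nonempty :=
    ⟨u0, by simp [SimpleGraph.Walk.start_mem_support]⟩
  obtain ⟨v, hvmem, hvmax⟩ := Finset.exists_max_image c.support.toFinset (ht S f) hne
  have hv : v ∈ c.support := by simpa using hvmem
  have hmax : ∀ x ∈ c.support, ht S f x ≤ ht S f v := by
    intro x hx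
    exact hvmax x (by simpa using hx)
  have hc' : (c.rotate v hv).IsCycle := hc.rotate hv
  have hsup : ∀ x ∈ (c.rotate v hv).support, x ∈ c.support := by
    intro x hx
    rw [SimpleGraph.Walk.mem_support_iff] at hx
    rcases hx with rfl | hx
    · exact hv
    · have hrot := SimpleGraph.Walk.support_rotate c v hv
      have : x ∈ c.support.tail := (hrot.mem_iff).1 hx
      exact List.mem_of_mem_tail this
  obtain ⟨a, b, hab, hva, hvb, has, hbs⟩ := cycle_two_nbrs (c.rotate v hv) hc'
  by_cases hvS : v ∈ S
  · -- maximum height is 0 : all vertices in S, all edges F-edges, contradiction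
    have hzero : ht S f v = 0 := ht_eq_zero_iff.2 hvS
    have hallS : ∀ x ∈ c.support, x ∈ S := by
      intro x hx
      have hx2 := hmax x hx
      rw [hzero] at hx2
      have hx3 : ht S f x = 0 := by omega
      exact ht_eq_zero_iff.1 hx3
    have hedge : ∀ e ∈ c.edges, e ∈ F.edgeSet := by
      intro e he
      induction e with
      | h y z =>
        have hadj : (Phi S F f).Adj y z :=
          (SimpleGraph.Walk.edges_subset_edgeSet c he)
        have hyS : y ∈ S := hallS y (SimpleGraph.Walk.fst_mem_support_of_mem_edges c he)
        have hzS : z ∈ S := hallS z (SimpleGraph.Walk.snd_mem_support_of_mem_edges c he)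
        rcases Phi_adj_cases hadj with h | h | h
        · exact h
        · exact absurd hyS h.1
        · exact absurd hzS h.1
    have hcF : (c.transfer F hedge).IsCycle := hc.transfer hedge
    exact F_acyclic hFS hFtree _ hcF
  · -- v has positive height; both cycle-neighbors must be its parent: contradiction
    have hparent : ∀ x, (Phi S F f).Adj v x → x ∈ c.support → f.1 v = x := by
      intro x hadj hxs
      rcases Phi_adj_cases hadj with h | h | h
      · exact absurd (hFS _ _ h).1 hvS
      · exact h.2
      · -- f x = v with x ∉ S : height of x exceeds maximum
        exfalso
        have := ht_child h.1 h.2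
        have := hmax x hxs
        omega
    have h1 : f.1 v = a := hparent a hva (hsup a has)
    have h2 : f.1 v = b := hparent b hvb (hsup b hbs)
    exact hab (h1 ▸ h2)

lemma GP (hFS : ∀ u v, F.Adj u v → u ∈ S ∧ v ∈ S)
    (hFtree : (SimpleGraph.induce (↑S : Set (Fin n)) F).IsTree)
    (f : AcyT n S) {s0 : Fin n} (hs0 : s0 ∈ S) :
    ∀ (N : ℕ) (v : Fin n), ht S f v ≤ N →
      ∃ p : (Phi S F f).Walk v s0, p.IsPath ∧
        (∀ w ∈ p.support, w ∈ S ∨ ht S f w < ht S f v ∨ w = v) ∧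
        (v ∉ S → 0 < p.length ∧ p.getVert 1 = f.1 v) := by
  have base : ∀ v ∈ S, ∃ p : (Phi S F f).Walk v s0, p.IsPath ∧
      (∀ w ∈ p.support, w ∈ S ∨ ht S f w < ht S f v ∨ w = v) ∧
      (v ∉ S → 0 < p.length ∧ p.getVert 1 = f.1 v) := by
    intro v hvS
    obtain ⟨p, hp, hsup, _⟩ := S_path hFS hFtree (F_le_Phi (f := f)) hvS hs0
    exact ⟨p, hp, fun w hw => Or.inl (hsup w hw), fun h => absurd hvS h⟩
  intro N
  induction N with
  | zero =>
      intro v hv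
      have hv0 : ht S f v = 0 := by omega
      exact base v (ht_eq_zero_iff.1 hv0)
  | succ N ih =>
      intro v hv
      by_cases hvS : v ∈ S
      · exact base v hvS
      · have hfv : ht S f (f.1 v) + 1 = ht S f v := ht_f hvS
        obtain ⟨q, hq, hqsup, _⟩ := ih (f.1 v) (by omega)
        have hvq : v ∉ q.support := by
          intro hvq
          rcases hqsup v hvq with h | h | h
          · exact hvS h
          · omega
          · exact no_fix hvS h.symm
        refine ⟨SimpleGraph.Walk.cons (Phi_parent_adj hvS) q, ?_, ?_, ?_⟩
        · rw [SimpleGraph.Walk.cons_isPath_iff]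
          exact ⟨hq, hvq⟩
        · intro w hw
          rw [SimpleGraph.Walk.support_cons] at hw
          rcases List.mem_cons.1 hw with rfl | hw
          · exact Or.inr (Or.inr rfl)
          · rcases hqsup w hw with h | h | h
            · exact Or.inl h
            · exact Or.inr (Or.inl (by omega))
            · subst h
              exact Or.inr (Or.inl (by omega))
        · intro _
          constructor
          · simp [SimpleGraph.Walk.length_cons]
          · rw [SimpleGraph.Walk.getVert_cons_succ, SimpleGraph.Walk.getVert_zero]

lemma Phi_tree (hFS : ∀ u v, F.Adj u v → u ∈ S ∧ v ∈ S)
    (hFtree : (SimpleGraph.induce (↑S : Set (Fin n)) F).IsTree)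
    (f : AcyT n S) {s0 : Fin n} (hs0 : s0 ∈ S) : (Phi S F f).IsTree := by
  constructor
  · rw [SimpleGraph.connected_iff]
    constructor
    · intro u w
      obtain ⟨pu, _, _, _⟩ := GP hFS hFtree f hs0 (ht S f u) u le_rfl
      obtain ⟨pw, _, _, _⟩ := GP hFS hFtree f hs0 (ht S f w) w le_rfl
      exact (SimpleGraph.Walk.reachable pu).trans (SimpleGraph.Walk.reachable pw).symm
    · exact ⟨s0⟩
  · exact Phi_acyclic hFS hFtree f

lemma parent_char (hFS : ∀ u v, F.Adj u v → u ∈ S ∧ v ∈ S)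
    (hFtree : (SimpleGraph.induce (↑S : Set (Fin n)) F).IsTree)
    (f : AcyT n S) {s0 : Fin n} (hs0 : s0 ∈ S)
    (G : SimpleGraph (Fin n)) (hG : G = Phi S F f) {v : Fin n} (hv : v ∉ S)
    (p : G.Walk v s0) (hp : p.IsPath) : p.getVert 1 = f.1 v := by
  subst hG
  obtain ⟨p0, hp0, _, hlast⟩ := GP hFS hFtree f hs0 (ht S f v) v le_rfl
  have huniq := ((Phi_tree hFS hFtree f hs0).existsUnique_path v s0).unique hp hp0
  rw [huniq]
  exact (hlast hv).2

end PhiTree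

section Main

open SimpleGraph

variable {n : ℕ} {S : Finset (Fin n)} {F : SimpleGraph (Fin n)}

lemma Phi_injective (hFS : ∀ u v, F.Adj u v → u ∈ S ∧ v ∈ S)
    (hFtree : (SimpleGraph.induce (↑S : Set (Fin n)) F).IsTree)
    {s0 : Fin n} (hs0 : s0 ∈ S) :
    Function.Injective (fun f : AcyT n S => Phi S F f) := by
  intro f f' hG
  simp only at hG
  apply Subtype.ext
  funext v
  by_cases hvS : v ∈ S
  · rw [f.2.1 v hvS, f'.2.1 v hvS]
  · obtain ⟨p0, hp0, _, _⟩ := GP hFS hFtree f hs0 (ht S f v) v le_rfl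
    have h1 := parent_char hFS hFtree f hs0 (Phi S F f) rfl hvS p0 hp0
    have h2 := parent_char hFS hFtree f' hs0 (Phi S F f) hG hvS p0 hp0
    rw [← h1, h2]

lemma Phi_surjective (hFS : ∀ u v, F.Adj u v → u ∈ S ∧ v ∈ S)
    (hFtree : (SimpleGraph.induce (↑S : Set (Fin n)) F).IsTree)
    {s0 : Fin n} (hs0 : s0 ∈ S)
    {G : SimpleGraph (Fin n)} (hT : G.IsTree) (hFG : F ≤ G) :
    ∃ f : AcyT n S, Phi S F f = G := by
  classical
  have hEP : ∀ v : Fin n, ∃ p : G.Walk v s0, p.IsPath :=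
    fun v => (hT.existsUnique_path v s0).exists
  let P : (v : Fin n) → G.Walk v s0 := fun v => (hEP v).choose
  have hP : ∀ v, (P v).IsPath := fun v => (hEP v).choose_spec
  have hPuniq : ∀ (v) (q : G.Walk v s0), q.IsPath → q = P v :=
    fun v q hq => (hT.existsUnique_path v s0).unique hq (hP v)
  let fG : Fin n → Fin n := fun v => if v ∈ S then v else (P v).getVert 1
  have hfS : ∀ v ∈ S, fG v = v := fun v hv => if_pos hv
  have hfv : ∀ v, v ∉ S → fG v = (P v).getVert 1 := fun v hv => if_neg hv
  have hnotnil : ∀ v, v ∉ S → ¬(P v).Nil := by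
    intro v hv
    apply SimpleGraph.Walk.not_nil_of_ne
    intro h; exact hv (h ▸ hs0)
  have hadjf : ∀ v, v ∉ S → G.Adj v (fG v) := by
    intro v hv
    rw [hfv v hv]
    have hlt : 0 < (P v).length := SimpleGraph.Walk.not_nil_iff_lt_length.1 (hnotnil v hv)
    simpa using (P v).adj_getVert_succ (i := 0) hlt
  have hlen : ∀ v, v ∉ S → (P (fG v)).length < (P v).length := by
    intro v hv
    have hnn := hnotnil v hv
    have hcopy : (((P v).tail).copy (hfv v hv).symm rfl).IsPath := by
      rw [SimpleGraph.Walk.isPath_copy]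
      exact (hP v).tail
    have hequ := hPuniq (fG v) _ hcopy
    have hl1 : (((P v).tail).copy (hfv v hv).symm rfl).length = (P v).tail.length :=
      SimpleGraph.Walk.length_copy _ _ _
    have hl2 : (P v).tail.length + 1 = (P v).length :=
      SimpleGraph.Walk.length_tail_add_one hnn
    rw [← hequ, hl1]
    omega
  have hacy : ∀ N v, (P v).length ≤ N → ∃ i, fG^[i] v ∈ S := by
    intro N
    induction N with
    | zero =>
        intro v hvl
        by_cases hv : v ∈ S
        · exact ⟨0, hv⟩
        · exfalso; have := hlen v hv; omega
    | succ N ih =>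
        intro v hvl
        by_cases hv : v ∈ S
        · exact ⟨0, hv⟩
        · obtain ⟨i, hi⟩ := ih (fG v) (by have := hlen v hv; omega)
          exact ⟨i + 1, by rw [Function.iterate_succ_apply]; exact hi⟩
  refine ⟨⟨fG, hfS, fun v => hacy (P v).length v le_rfl⟩, ?_⟩
  have hclaim : ∀ u w, G.Adj u w → u ∉ S → fG u = w ∨ (w ∉ S ∧ fG w = u) := by
    intro u w hadj huS
    by_cases hw_in : w ∈ (P u).support
    · left
      have htk : ((P u).takeUntil w hw_in).IsPath := (hP u).takeUntil hw_in
      have hsingle : (SimpleGraph.Walk.cons hadj SimpleGraph.Walk.nil).IsPath := by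
        simp [SimpleGraph.Walk.cons_isPath_iff, hadj.ne]
      have hequ : SimpleGraph.Walk.cons hadj SimpleGraph.Walk.nil
          = (P u).takeUntil w hw_in :=
        (hT.existsUnique_path u w).unique hsingle htk
      have hspec := (P u).take_spec hw_in
      rw [hfv u huS, ← hspec, ← hequ, SimpleGraph.Walk.cons_append,
        SimpleGraph.Walk.nil_append, SimpleGraph.Walk.getVert_cons_succ,
        SimpleGraph.Walk.getVert_zero]
    · have hq : (SimpleGraph.Walk.cons hadj.symm (P u)).IsPath := by
        rw [SimpleGraph.Walk.cons_isPath_iff]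
        exact ⟨hP u, hw_in⟩
      have hPw : SimpleGraph.Walk.cons hadj.symm (P u) = P w := hPuniq w _ hq
      by_cases hwS : w ∈ S
      · exfalso
        obtain ⟨p2, hp2, hsup2, _⟩ := S_path hFS hFtree hFG hwS hs0
        have hp2P : p2 = P w := hPuniq w p2 hp2
        have hu_in : u ∈ (P w).support := by
          rw [← hPw, SimpleGraph.Walk.support_cons]
          exact List.mem_cons_of_mem _ (P u).start_mem_support
        rw [← hp2P] at hu_in
        exact huS (hsup2 u hu_in)
      · right
        refine ⟨hwS, ?_⟩
        rw [hfv w hwS, ← hPw, SimpleGraph.Walk.getVert_cons_succ,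
          SimpleGraph.Walk.getVert_zero]
  apply le_antisymm
  · intro u w h
    rcases Phi_adj_cases h with h1 | h1 | h1
    · exact hFG h1
    · have h2 : fG u = w := h1.2
      rw [← h2]; exact hadjf u h1.1
    · have h2 : fG w = u := h1.2
      rw [← h2]; exact (hadjf w h1.1).symm
  · intro u w hadj
    by_cases huS : u ∈ S
    · by_cases hwS : w ∈ S
      · refine ⟨Or.inl ?_, hadj.ne⟩
        by_contra hF
        obtain ⟨p2, hp2, _, hedge2⟩ := S_path hFS hFtree hFG hwS huS
        have hne : s(u,w) ∉ p2.edges := by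
          intro hmem
          exact hF ((SimpleGraph.mem_edgeSet (G := F)).1 (hedge2 _ hmem))
        have hcyc : (SimpleGraph.Walk.cons hadj (p2 : G.Walk w u)).IsCycle :=
          SimpleGraph.Path.cons_isCycle ⟨p2, hp2⟩ hadj hne
        exact hT.IsAcyclic _ hcyc
      · rcases hclaim w u hadj.symm hwS with h | h
        · exact ⟨Or.inr (Or.inr ⟨hwS, h⟩), hadj.ne⟩
        · exact absurd huS h.1
    · rcases hclaim u w hadj huS with h | h
      · exact ⟨Or.inr (Or.inl ⟨huS, h⟩), hadj.ne⟩
      · exact ⟨Or.inr (Or.inr h), hadj.ne⟩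

/-- Let `F` be a fixed tree on a `k`-subset `S` of the vertices of `K_n`
(`1 ≤ k ≤ n`), viewed as a graph on all `n` vertices whose edges lie inside `S`
and which induces a tree on `S`.  The number of spanning trees of `K_n`
containing all edges of `F` equals `k * n ^ (n - k - 1)` when `k < n`, and
equals `1` when `k = n`. -/
theorem spanning_trees_containing_tree_on_subset (n k : ℕ) (hk1 : 1 ≤ k)
    (hkn : k ≤ n) (S : Finset (Fin n)) (hS : S.card = k)
    (F : SimpleGraph (Fin n)) (hFS : ∀ u v, F.Adj u v → u ∈ S ∧ v ∈ S)
    (hFtree : (SimpleGraph.induce (S : Set (Fin n)) F).IsTree) :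
    (k < n →
      Nat.card {G : SimpleGraph (Fin n) // G.IsTree ∧ F ≤ G}
        = k * n ^ (n - k - 1)) ∧
    (k = n →
      Nat.card {G : SimpleGraph (Fin n) // G.IsTree ∧ F ≤ G} = 1) := by
  obtain ⟨s0, hs0⟩ := Finset.card_pos.1 (by omega : 0 < S.card)
  have key : Nat.card {G : SimpleGraph (Fin n) // G.IsTree ∧ F ≤ G}
      = Nat.card (AcyT n S) := by
    symm
    apply Nat.card_congr
    refine Equiv.ofBijective
      (fun f => ⟨Phi S F f, Phi_tree hFS hFtree f hs0, F_le_Phi⟩) ⟨?_, ?_⟩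
    · intro f f' h
      exact Phi_injective hFS hFtree hs0 (congrArg Subtype.val h)
    · rintro ⟨G, hT, hFG⟩
      obtain ⟨f, hf⟩ := Phi_surjective hFS hFtree hs0 hT hFG
      exact ⟨f, Subtype.ext hf⟩
  have hSc : Sᶜ.card = n - k := by
    rw [Finset.card_compl, hS, Fintype.card_fin]
  have hval := acy_card n (n - k) S hSc
  constructor
  · intro hkn'
    rw [key, hval, vval, if_neg (by omega : ¬ n - k = 0)]
    congr 1
    omega
  · intro hkeq
    rw [key, hval, vval, if_pos (by omega : n - k = 0)]

end Main
end
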